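/- arXiv:1810.04845 — 12 statements merged into one kernel-verified Lean document; each statement's English description precedes it below -/
import Mathlib

section
/- Let x, y be elements of a real normed linear space X. If there exists a semi-inner-product [·,·] on X compatible with the norm such that [y,x] ≥ 0, then ‖x + λy‖ ≥ ‖x‖ for all λ ≥ 0 (i.e., y ∈ x⁺). -/
/-- A semi-inner-product on a real normed space, compatible with the norm. -/
def IsSIP {Y : Type*} [NormedAddCommGroup Y] [NormedSpace ℝ Y] (s : Y → Y → ℝ) : Prop :=
  (∀ (a b : ℝ) (u v w : Y), s (a • u + b • v) w = a * s u w + b * s v w) ∧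
  (∀ u : Y, u ≠ 0 → 0 < s u u) ∧
  (∀ u v : Y, (s u v) ^ 2 ≤ s u u * s v v) ∧
  (∀ (a : ℝ) (u v : Y), s u (a • v) = a * s u v) ∧
  (∀ u : Y, s u u = ‖u‖ ^ 2)

theorem mem_plus_of_sip_nonneg
    {X : Type*} [NormedAddCommGroup X] [NormedSpace ℝ X] (x y : X)
    (h : ∃ s : X → X → ℝ, IsSIP s ∧ 0 ≤ s y x) :
    ∀ l : ℝ, 0 ≤ l → ‖x + l • y‖ ≥ ‖x‖ := by
  obtain ⟨s, ⟨lin, pos, cs, hom, hnorm⟩, hy⟩ := h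
  intro l hl
  have key : s (x + l • y) x = s x x + l * s y x := by
    have := lin 1 l x y x
    simpa using this
  have h1 : ‖x‖ ^ 2 ≤ s (x + l • y) x := by
    rw [key, hnorm]
    nlinarith
  have h2 : (s (x + l • y) x) ^ 2 ≤ ‖x + l • y‖ ^ 2 * ‖x‖ ^ 2 := by
    have := cs (x + l • y) x
    rwa [hnorm, hnorm] at this
  have hx : (0:ℝ) ≤ ‖x‖ := norm_nonneg x
  have hz : (0:ℝ) ≤ ‖x + l • y‖ := norm_nonneg _
  have h3 : ‖x‖ ^ 2 * ‖x‖ ^ 2 ≤ s (x + l • y) x ^ 2 := by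
    have := mul_self_le_mul_self (by positivity) h1
    nlinarith
  rcases eq_or_lt_of_le hx with h0 | h0
  · simp [← h0]
  · have h4 : ‖x‖ ^ 2 ≤ ‖x + l • y‖ ^ 2 := by
      have := le_trans h3 h2
      nlinarith
    nlinarith
end

section
/- Let x, y be elements of a real normed linear space X with y ∈ x⁺, i.e., ‖x + λy‖ ≥ ‖x‖ for all λ ≥ 0. Then there exists a semi-inner-product [·,·] on X compatible with the norm such that [y,x] ≥ 0. -/
section Aux

variable {X : Type*} [NormedAddCommGroup X] [NormedSpace ℝ X]

/-- Key Hahn–Banach lemma: if `‖x‖ ≤ ‖x + l • y‖` for all `l ≥ 0`, there is a norming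
functional for `x` that is nonnegative at `y`. -/
lemma sip_keyL (x y : X) (hx : x ≠ 0)
    (h : ∀ l : ℝ, 0 ≤ l → ‖x‖ ≤ ‖x + l • y‖) :
    ∃ f : X →L[ℝ] ℝ, (∀ z, f z ≤ ‖z‖) ∧ f x = ‖x‖ ∧ 0 ≤ f y := by
  classical
  set q : X → ℝ := fun z => sInf ((fun t : ℝ => ‖z + t • y‖) '' Set.Ici 0) with hqdef
  have hmem : ∀ (z : X) (t : ℝ), 0 ≤ t →
      ‖z + t • y‖ ∈ ((fun t : ℝ => ‖z + t • y‖) '' Set.Ici 0) :=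
    fun z t ht => ⟨t, ht, rfl⟩
  have hlb : ∀ z : X, ∀ a ∈ ((fun t : ℝ => ‖z + t • y‖) '' Set.Ici 0),
      ‖x‖ - ‖x - z‖ ≤ a := by
    rintro z a ⟨t, ht, rfl⟩
    have h1 := h t ht
    have h2 : ‖x + t • y‖ ≤ ‖x - z‖ + ‖z + t • y‖ := by
      have : x + t • y = (x - z) + (z + t • y) := by abel
      rw [this]; exact norm_add_le _ _
    linarith
  have hbdd : ∀ z : X, BddBelow ((fun t : ℝ => ‖z + t • y‖) '' Set.Ici 0) :=
    fun z => ⟨‖x‖ - ‖x - z‖, hlb z⟩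
  have hne : ∀ z : X, ((fun t : ℝ => ‖z + t • y‖) '' Set.Ici 0).Nonempty :=
    fun z => ⟨‖z + (0 : ℝ) • y‖, hmem z 0 le_rfl⟩
  have hqle : ∀ (z : X) (t : ℝ), 0 ≤ t → q z ≤ ‖z + t • y‖ :=
    fun z t ht => csInf_le (hbdd z) (hmem z t ht)
  have hqnorm : ∀ z : X, q z ≤ ‖z‖ := fun z => by simpa using hqle z 0 le_rfl
  have hlbq : ∀ z : X, ‖x‖ - ‖x - z‖ ≤ q z := fun z => le_csInf (hne z) (hlb z)
  have N_hom : ∀ c : ℝ, 0 < c → ∀ z : X, q (c • z) = c * q z := by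
    intro c hc z
    apply le_antisymm
    · rw [← div_le_iff₀' hc] at *
      refine le_csInf (hne z) ?_
      rintro a ⟨t, ht, rfl⟩
      rw [div_le_iff₀' hc]
      have : c • z + (c * t) • y = c • (z + t • y) := by
        rw [smul_add, mul_smul]
      calc q (c • z) ≤ ‖c • z + (c * t) • y‖ :=
            hqle _ _ (mul_nonneg hc.le ht)
        _ = c * ‖z + t • y‖ := by
            rw [this, norm_smul, Real.norm_eq_abs, abs_of_pos hc]
    · refine le_csInf (hne (c • z)) ?_
      rintro a ⟨t, ht, rfl⟩
      have key : c • z + t • y = c • (z + (t / c) • y) := by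
        rw [smul_add, smul_smul, mul_div_cancel₀ _ hc.ne']
      have : q z ≤ ‖z + (t / c) • y‖ := hqle z _ (div_nonneg ht hc.le)
      calc c * q z ≤ c * ‖z + (t / c) • y‖ := by
            exact mul_le_mul_of_nonneg_left this hc.le
        _ = ‖c • z + t • y‖ := by
            rw [key, norm_smul, Real.norm_eq_abs, abs_of_pos hc]
  have N_add : ∀ z₁ z₂ : X, q (z₁ + z₂) ≤ q z₁ + q z₂ := by
    intro z₁ z₂
    have step : ∀ a ∈ ((fun t : ℝ => ‖z₁ + t • y‖) '' Set.Ici 0),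
        q (z₁ + z₂) - q z₂ ≤ a := by
      rintro a ⟨t₁, ht₁, rfl⟩
      have step2 : ∀ b ∈ ((fun t : ℝ => ‖z₂ + t • y‖) '' Set.Ici 0),
          q (z₁ + z₂) - ‖z₁ + t₁ • y‖ ≤ b := by
        rintro b ⟨t₂, ht₂, rfl⟩
        have hsum : z₁ + z₂ + (t₁ + t₂) • y = (z₁ + t₁ • y) + (z₂ + t₂ • y) := by
          rw [add_smul]; abel
        have h1 : q (z₁ + z₂) ≤ ‖z₁ + z₂ + (t₁ + t₂) • y‖ :=
          hqle _ _ (add_nonneg ht₁ ht₂)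
        have h2 : ‖(z₁ + t₁ • y) + (z₂ + t₂ • y)‖ ≤ ‖z₁ + t₁ • y‖ + ‖z₂ + t₂ • y‖ :=
          norm_add_le _ _
        rw [hsum] at h1
        linarith
      have := le_csInf (hne z₂) step2
      linarith
    have := le_csInf (hne z₁) step
    linarith
  set fp : X →ₗ.[ℝ] ℝ := LinearPMap.mkSpanSingleton x ‖x‖ hx with hfp
  have hf : ∀ z : fp.domain, fp z ≤ q z := by
    rintro ⟨z, hz⟩
    obtain ⟨c, hc⟩ := Submodule.mem_span_singleton.mp hz
    have hz' : (⟨z, hz⟩ : fp.domain) = ⟨c • x, hc ▸ hz⟩ := Subtype.ext hc.symm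
    rw [hz']
    have happ : fp ⟨c • x, hc ▸ hz⟩ = c • ‖x‖ :=
      LinearPMap.mkSpanSingleton'_apply x ‖x‖ _ c _
    rw [happ, smul_eq_mul]
    show c * ‖x‖ ≤ q (c • x)
    rcases le_or_gt c 1 with hc1 | hc1
    · have h1 := hlbq (c • x)
      have h2 : ‖x - c • x‖ = (1 - c) * ‖x‖ := by
        have : x - c • x = (1 - c) • x := by rw [sub_smul, one_smul]
        rw [this, norm_smul, Real.norm_eq_abs, abs_of_nonneg (by linarith)]
      rw [h2] at h1
      have : z = c • x := hc.symm ▸ rfl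
      nlinarith [norm_nonneg x]
    · have hcpos : (0 : ℝ) < c := by linarith
      rw [N_hom c hcpos x]
      have h1 := hlbq x
      simp only [sub_self, norm_zero] at h1
      nlinarith
  obtain ⟨g, hg1, hg2⟩ := exists_extension_of_le_sublinear fp q N_hom N_add hf
  have hgnorm : ∀ z, g z ≤ ‖z‖ := fun z => (hg2 z).trans (hqnorm z)
  have habs : ∀ z, |g z| ≤ ‖z‖ := by
    intro z
    rw [abs_le]
    constructor
    · have := hgnorm (-z)
      rw [map_neg, norm_neg] at this
      linarith
    · exact hgnorm z
  refine ⟨g.mkContinuous 1 (fun z => by rw [one_mul, Real.norm_eq_abs]; exact habs z),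
    ?_, ?_, ?_⟩
  · intro z
    exact hgnorm z
  · show g x = ‖x‖
    have h1 := hg1 ⟨x, Submodule.mem_span_singleton_self x⟩
    have h2 : fp ⟨x, Submodule.mem_span_singleton_self x⟩ = ‖x‖ :=
      LinearPMap.mkSpanSingleton_apply ℝ ℝ hx ‖x‖
    rw [h1, h2]
  · show (0 : ℝ) ≤ g y
    have h1 : g (-y) ≤ q (-y) := hg2 (-y)
    have h2 : q (-y) ≤ ‖-y + (1 : ℝ) • y‖ := hqle (-y) 1 zero_le_one
    simp only [one_smul, neg_add_cancel, norm_zero] at h2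
    rw [map_neg] at h1
    linarith

/-- Existence of suitable norming functionals for every unit vector. -/
lemma sip_E (x y : X) (h : ∀ l : ℝ, 0 ≤ l → ‖x‖ ≤ ‖x + l • y‖) (w : X) (hw : ‖w‖ = 1) :
    ∃ f : X →L[ℝ] ℝ, (∀ z, f z ≤ ‖z‖) ∧ f w = 1 ∧
      (w = ‖x‖⁻¹ • x → 0 ≤ f y) ∧ (w = -(‖x‖⁻¹ • x) → f y ≤ 0) := by
  have hwne : w ≠ 0 := by
    intro h0; rw [h0, norm_zero] at hw; exact zero_ne_one hw
  have hxne_of : ∀ u : ℝ, w = u • x → x ≠ 0 := by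
    rintro u hu rfl
    rw [smul_zero] at hu
    exact hwne hu
  by_cases h0 : w = ‖x‖⁻¹ • x
  · have hxne : x ≠ 0 := hxne_of ‖x‖⁻¹ h0
    have hxpos : (0 : ℝ) < ‖x‖ := norm_pos_iff.mpr hxne
    have hw' : ∀ l : ℝ, 0 ≤ l → ‖w‖ ≤ ‖w + l • y‖ := by
      intro l hl
      rw [h0]
      have key : ‖x‖⁻¹ • x + l • y = ‖x‖⁻¹ • (x + (l * ‖x‖) • y) := by
        rw [smul_add, smul_smul]
        congr 2
        field_simp
      rw [key, norm_smul, norm_smul, Real.norm_eq_abs,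
        abs_of_pos (inv_pos.mpr hxpos)]
      have := h (l * ‖x‖) (mul_nonneg hl hxpos.le)
      exact mul_le_mul_of_nonneg_left this (inv_pos.mpr hxpos).le
    obtain ⟨f, hf1, hf2, hf3⟩ := sip_keyL w y hwne hw'
    refine ⟨f, hf1, by rw [hf2, hw], fun _ => hf3, ?_⟩
    intro heq
    exfalso
    have : w = -w := by rw [h0] at heq ⊢; exact heq
    have h2 : (2 : ℝ) • w = 0 := by
      rw [two_smul]
      nth_rewrite 1 [this]
      abel
    rcases smul_eq_zero.mp h2 with h | h
    · norm_num at h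
    · exact hwne h
  · by_cases h1 : w = -(‖x‖⁻¹ • x)
    · have hxne : x ≠ 0 := by
        apply hxne_of (-‖x‖⁻¹)
        rw [h1, neg_smul]
      have hxpos : (0 : ℝ) < ‖x‖ := norm_pos_iff.mpr hxne
      set w0 : X := ‖x‖⁻¹ • x with hw0def
      have hw0norm : ‖w0‖ = 1 := by
        have : ‖w‖ = ‖w0‖ := by rw [h1, norm_neg]
        rw [← this, hw]
      have hw0ne : w0 ≠ 0 := by
        intro h0'; rw [h0', norm_zero] at hw0norm; exact zero_ne_one hw0norm
      have hw0' : ∀ l : ℝ, 0 ≤ l → ‖w0‖ ≤ ‖w0 + l • y‖ := by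
        intro l hl
        rw [hw0def]
        have key : ‖x‖⁻¹ • x + l • y = ‖x‖⁻¹ • (x + (l * ‖x‖) • y) := by
          rw [smul_add, smul_smul]
          congr 2
          field_simp
        rw [key, norm_smul, norm_smul, Real.norm_eq_abs,
          abs_of_pos (inv_pos.mpr hxpos)]
        have := h (l * ‖x‖) (mul_nonneg hl hxpos.le)
        exact mul_le_mul_of_nonneg_left this (inv_pos.mpr hxpos).le
      obtain ⟨f, hf1, hf2, hf3⟩ := sip_keyL w0 y hw0ne hw0'
      refine ⟨-f, ?_, ?_, fun heq => absurd heq h0, fun _ => ?_⟩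
      · intro z
        have := hf1 (-z)
        rw [map_neg, norm_neg] at this
        simpa using this
      · rw [ContinuousLinearMap.neg_apply, h1, map_neg, hf2, hw0norm]
        ring
      · rw [ContinuousLinearMap.neg_apply]
        linarith
    · have htriv : ∀ l : ℝ, 0 ≤ l → ‖w‖ ≤ ‖w + l • (0 : X)‖ := by
        intro l hl; simp
      obtain ⟨f, hf1, hf2, _⟩ := sip_keyL w 0 hwne htriv
      exact ⟨f, hf1, by rw [hf2, hw], fun heq => absurd heq h0, fun heq => absurd heq h1⟩

end Aux

theorem sip_nonneg_of_mem_plus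
    {X : Type*} [NormedAddCommGroup X] [NormedSpace ℝ X] (x y : X)
    (h : ∀ l : ℝ, 0 ≤ l → ‖x + l • y‖ ≥ ‖x‖) :
    ∃ s : X → X → ℝ, IsSIP s ∧ 0 ≤ s y x := by
  classical
  have h' : ∀ l : ℝ, 0 ≤ l → ‖x‖ ≤ ‖x + l • y‖ := fun l hl => h l hl
  choose F hF1 hF2 hF3 hF4 using sip_E x y h'
  set G : X → (X →L[ℝ] ℝ) := fun w => if hw : ‖w‖ = 1 then F w hw else 0 with hGdef
  have hG1 : ∀ w : X, ‖w‖ = 1 → ∀ z, G w z ≤ ‖z‖ := by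
    intro w hw z; rw [hGdef]; simp only [dif_pos hw]; exact hF1 w hw z
  have hG2 : ∀ w : X, (hw : ‖w‖ = 1) → G w w = 1 := by
    intro w hw; rw [hGdef]; simp only [dif_pos hw]; exact hF2 w hw
  have hG3 : ∀ w : X, (hw : ‖w‖ = 1) → w = ‖x‖⁻¹ • x → 0 ≤ G w y := by
    intro w hw hwx; rw [hGdef]; simp only [dif_pos hw]; exact hF3 w hw hwx
  have hG4 : ∀ w : X, (hw : ‖w‖ = 1) → w = -(‖x‖⁻¹ • x) → G w y ≤ 0 := by
    intro w hw hwx; rw [hGdef]; simp only [dif_pos hw]; exact hF4 w hw hwx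
  -- the sign function from a well-ordering, to make the choice odd-symmetric
  set σ : X → ℝ := fun w => if WellOrderingRel w (-w) then 1 else -1 with hσdef
  have hσcases : ∀ w : X, σ w = 1 ∨ σ w = -1 := by
    intro w; rw [hσdef]
    by_cases hr : WellOrderingRel w (-w)
    · left; simp [hr]
    · right; simp [hr]
  have hσunit : ∀ w : X, σ w * σ w = 1 := by
    intro w; rcases hσcases w with h | h <;> rw [h] <;> norm_num
  have hσabs : ∀ w : X, |σ w| = 1 := by
    intro w; rcases hσcases w with h | h <;> rw [h] <;> norm_num
  have hσneg : ∀ w : X, w ≠ 0 → σ (-w) = -σ w := by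
    intro w hw
    have hne : w ≠ -w := by
      intro he
      apply hw
      have h2 : (2 : ℝ) • w = 0 := by
        rw [two_smul]; nth_rewrite 1 [he]; abel
      rcases smul_eq_zero.mp h2 with h | h
      · norm_num at h
      · exact h
    by_cases hr : WellOrderingRel w (-w)
    · have hr' : ¬ WellOrderingRel (-w) (-(-w)) := by
        rw [neg_neg]
        intro hcon
        exact absurd hr (asymm hcon)
      show (if WellOrderingRel (-w) (-(-w)) then (1:ℝ) else -1) =
        -(if WellOrderingRel w (-w) then (1:ℝ) else -1)
      rw [if_pos hr, if_neg hr']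
    · have hr' : WellOrderingRel (-w) (-(-w)) := by
        rw [neg_neg]
        rcases trichotomous_of WellOrderingRel (-w) w with hh | hh | hh
        · exact hh
        · exact absurd hh.symm hne
        · exact absurd hh hr
      show (if WellOrderingRel (-w) (-(-w)) then (1:ℝ) else -1) =
        -(if WellOrderingRel w (-w) then (1:ℝ) else -1)
      rw [if_neg hr, if_pos hr']
      norm_num
  set g : X → (X →L[ℝ] ℝ) := fun w => σ w • G (σ w • w) with hgdef
  have hunit : ∀ w : X, ‖w‖ = 1 → ‖σ w • w‖ = 1 := by
    intro w hw
    rw [norm_smul, Real.norm_eq_abs, hσabs, hw, one_mul]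
  have hg_self : ∀ w : X, ‖w‖ = 1 → g w w = 1 := by
    intro w hw
    have h1 := hG2 (σ w • w) (hunit w hw)
    rw [map_smul, smul_eq_mul] at h1
    simp only [hgdef, ContinuousLinearMap.smul_apply, smul_eq_mul]
    exact h1
  have hg_abs : ∀ w : X, ‖w‖ = 1 → ∀ z, |g w z| ≤ ‖z‖ := by
    intro w hw z
    have h1 := hG1 (σ w • w) (hunit w hw) z
    have h2 := hG1 (σ w • w) (hunit w hw) (-z)
    rw [map_neg, norm_neg] at h2
    have habsG : |(G (σ w • w)) z| ≤ ‖z‖ := abs_le.mpr ⟨by linarith, h1⟩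
    simp only [hgdef, ContinuousLinearMap.smul_apply, smul_eq_mul, abs_mul, hσabs, one_mul]
    exact habsG
  have hg_neg : ∀ w : X, w ≠ 0 → g (-w) = -g w := by
    intro w hw
    simp only [hgdef]
    rw [hσneg w hw]
    rw [show (-σ w) • (-w) = σ w • w by rw [neg_smul, smul_neg, neg_neg]]
    exact neg_smul (σ w) (G (σ w • w))
  -- the semi-inner-product
  set s : X → X → ℝ := fun u v => ‖v‖ * (g (‖v‖⁻¹ • v)) u with hsdef
  have hs_zero_right : ∀ u : X, s u 0 = 0 := by
    intro u; simp only [hsdef, norm_zero, zero_mul]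
  have hs_self : ∀ u : X, s u u = ‖u‖ ^ 2 := by
    intro u
    by_cases hu : u = 0
    · rw [hu, hs_zero_right]; simp
    · have hupos : (0 : ℝ) < ‖u‖ := norm_pos_iff.mpr hu
      have hwnorm : ‖(‖u‖⁻¹ • u)‖ = 1 := norm_smul_inv_norm hu
      have hrepr : u = ‖u‖ • (‖u‖⁻¹ • u) := by
        rw [smul_smul, mul_inv_cancel₀ hupos.ne', one_smul]
      have happ : (g (‖u‖⁻¹ • u)) u = ‖u‖ := by
        have h1 : (g (‖u‖⁻¹ • u)) (‖u‖ • (‖u‖⁻¹ • u)) = ‖u‖ := by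
          rw [map_smul, smul_eq_mul, hg_self _ hwnorm, mul_one]
        rw [← hrepr] at h1
        exact h1
      simp only [hsdef]
      rw [happ, pow_two]
  have hs_cs : ∀ u v : X, (s u v) ^ 2 ≤ s u u * s v v := by
    intro u v
    by_cases hv : v = 0
    · rw [hv, hs_zero_right, hs_self, hs_self]
      simp
    · have hwnorm : ‖(‖v‖⁻¹ • v)‖ = 1 := norm_smul_inv_norm hv
      have h1 : |s u v| ≤ ‖v‖ * ‖u‖ := by
        simp only [hsdef, abs_mul, abs_norm]
        exact mul_le_mul_of_nonneg_left (hg_abs _ hwnorm u) (norm_nonneg v)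
      have h2 : (s u v) ^ 2 ≤ (‖v‖ * ‖u‖) ^ 2 := by
        rw [← sq_abs]
        exact pow_le_pow_left₀ (abs_nonneg _) h1 2
      rw [hs_self, hs_self]
      calc (s u v) ^ 2 ≤ (‖v‖ * ‖u‖) ^ 2 := h2
        _ = ‖u‖ ^ 2 * ‖v‖ ^ 2 := by ring
  have hs_lin : ∀ (a b : ℝ) (u v w : X), s (a • u + b • v) w = a * s u w + b * s v w := by
    intro a b u v w
    simp only [hsdef, map_add, map_smul, smul_eq_mul]
    ring
  have hs_smul : ∀ (a : ℝ) (u v : X), s u (a • v) = a * s u v := by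
    intro a u v
    by_cases hv : v = 0
    · rw [hv, smul_zero, hs_zero_right, mul_zero]
    · by_cases ha : a = 0
      · rw [ha, zero_smul, hs_zero_right, zero_mul]
      · have hvpos : (0 : ℝ) < ‖v‖ := norm_pos_iff.mpr hv
        have hwnorm' : ‖(‖v‖⁻¹ • v : X)‖ = 1 := norm_smul_inv_norm hv
        have hwne : (‖v‖⁻¹ • v : X) ≠ 0 := by
          intro h0
          rw [h0, norm_zero] at hwnorm'
          exact zero_ne_one hwnorm'
        rcases lt_or_gt_of_ne ha with haneg | hapos
        · have hnorm : ‖a • v‖ = -a * ‖v‖ := by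
            rw [norm_smul, Real.norm_eq_abs, abs_of_neg haneg]
          have hdir : ‖a • v‖⁻¹ • (a • v) = -(‖v‖⁻¹ • v) := by
            rw [hnorm, smul_smul, ← neg_smul]
            congr 1
            field_simp
          simp only [hsdef]
          rw [hdir, hg_neg _ hwne, hnorm]
          simp only [ContinuousLinearMap.neg_apply]
          ring
        · have hnorm : ‖a • v‖ = a * ‖v‖ := by
            rw [norm_smul, Real.norm_eq_abs, abs_of_pos hapos]
          have hdir : ‖a • v‖⁻¹ • (a • v) = ‖v‖⁻¹ • v := by
            rw [hnorm, smul_smul]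
            congr 1
            field_simp
          simp only [hsdef]
          rw [hdir, hnorm]
          ring
  have hs_pos : ∀ u : X, u ≠ 0 → 0 < s u u := by
    intro u hu
    rw [hs_self]
    have h0 : 0 < ‖u‖ := norm_pos_iff.mpr hu
    positivity
  refine ⟨s, ⟨hs_lin, hs_pos, hs_cs, hs_smul, hs_self⟩, ?_⟩
  by_cases hx : x = 0
  · rw [hx, hs_zero_right]
  · have hxpos : (0 : ℝ) < ‖x‖ := norm_pos_iff.mpr hx
    have hwnorm : ‖(‖x‖⁻¹ • x)‖ = 1 := norm_smul_inv_norm hx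
    have hgy : 0 ≤ (g (‖x‖⁻¹ • x)) y := by
      rcases hσcases (‖x‖⁻¹ • x) with hσ1 | hσ1
      · simp only [hgdef, ContinuousLinearMap.smul_apply, smul_eq_mul, hσ1, one_smul, one_mul]
        exact hG3 _ hwnorm rfl
      · have h0 := hG4 (-(‖x‖⁻¹ • x)) (by rw [norm_neg]; exact hwnorm) rfl
        simp only [hgdef, ContinuousLinearMap.smul_apply, smul_eq_mul, hσ1, neg_smul, one_smul,
          ContinuousLinearMap.neg_apply]
        nlinarith [h0]
    simp only [hsdef]
    exact mul_nonneg hxpos.le hgy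
end

section
/- Let x, y be elements of a real normed linear space X. Then y ∈ x⁻ (i.e., ‖x + λy‖ ≥ ‖x‖ for all λ ≤ 0) if and only if there exists a semi-inner-product [·,·] on X compatible with the norm such that [y,x] ≤ 0. -/
section Helpers
variable {X : Type*} [NormedAddCommGroup X] [NormedSpace ℝ X]

private def rayRel (u v : X) : Prop := ∃ c : ℝ, c ≠ 0 ∧ u = c • v

private lemma rayRel_equiv : Equivalence (rayRel (X := X)) := by
  constructor
  · intro u; exact ⟨1, one_ne_zero, (one_smul ℝ u).symm⟩
  · rintro u v ⟨c, hc, rfl⟩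
    exact ⟨c⁻¹, inv_ne_zero hc, by rw [smul_smul, inv_mul_cancel₀ hc, one_smul]⟩
  · rintro u v w ⟨c, hc, rfl⟩ ⟨d, hd, rfl⟩
    exact ⟨c * d, mul_ne_zero hc hd, smul_smul c d w⟩

private def raySetoid (X : Type*) [NormedAddCommGroup X] [NormedSpace ℝ X] : Setoid X :=
  ⟨rayRel, rayRel_equiv⟩

private noncomputable def rayRep (v : X) : X :=
  Quotient.out (Quotient.mk (raySetoid X) v)

private lemma rayRep_rel (v : X) : rayRel (rayRep v) v :=
  Quotient.mk_out (s := raySetoid X) v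

private lemma rayRep_eq {u v : X} (h : rayRel u v) : rayRep u = rayRep v := by
  unfold rayRep
  rw [Quotient.sound (s := raySetoid X) h]

private lemma exists_rayCoef (v : X) : ∃ c : ℝ, v = c • rayRep v := by
  obtain ⟨c, hc, h⟩ := rayRep_rel v
  exact ⟨c⁻¹, by rw [h, smul_smul, inv_mul_cancel₀ hc, one_smul]⟩

private noncomputable def rayCoef (v : X) : ℝ := Classical.choose (exists_rayCoef v)

private lemma rayCoef_spec (v : X) : v = rayCoef v • rayRep v :=
  Classical.choose_spec (exists_rayCoef v)

private lemma rayRep_ne {v : X} (hv : v ≠ 0) : rayRep v ≠ 0 := by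
  intro h
  apply hv
  rw [rayCoef_spec v, h, smul_zero]

private lemma rayCoef_ne {v : X} (hv : v ≠ 0) : rayCoef v ≠ 0 := by
  intro h
  apply hv
  rw [rayCoef_spec v, h, zero_smul]

private lemma rayCoef_unique {v : X} (hv : v ≠ 0) {c : ℝ} (h : v = c • rayRep v) :
    c = rayCoef v := by
  have h2 := rayCoef_spec v
  have h3 : (c - rayCoef v) • rayRep v = 0 := by
    rw [sub_smul, ← h, ← h2, sub_self]
  rcases smul_eq_zero.mp h3 with h4 | h4
  · exact sub_eq_zero.mp h4
  · exact absurd h4 (rayRep_ne hv)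

private lemma norm_eq_coef (v : X) : ‖v‖ = |rayCoef v| * ‖rayRep v‖ := by
  conv_lhs => rw [rayCoef_spec v]
  rw [norm_smul (rayCoef v) (rayRep v), Real.norm_eq_abs]

private lemma exists_support (v : X) : ∃ f : X →L[ℝ] ℝ, ‖f‖ ≤ ‖v‖ ∧ f v = ‖v‖ ^ 2 := by
  by_cases hv : v = 0
  · exact ⟨0, by simp [hv]⟩
  · obtain ⟨g, hg1, hg2⟩ := exists_dual_vector ℝ v (norm_ne_zero_iff.mpr hv)
    refine ⟨‖v‖ • g, ?_, ?_⟩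
    · have h := norm_smul ‖v‖ g
      rw [Real.norm_eq_abs, abs_of_nonneg (norm_nonneg v), hg1, mul_one] at h
      exact le_of_eq h
    · rw [ContinuousLinearMap.smul_apply, hg2]
      simp [sq]

set_option maxHeartbeats 1600000 in
/-- Construction of a semi-inner-product from a single special support functional at `x`. -/
private lemma sip_of_special (x y : X) (f : X →L[ℝ] ℝ) (hf1 : ‖f‖ ≤ ‖x‖)
    (hf2 : f x = ‖x‖ ^ 2) (hf3 : f y ≤ 0) :
    ∃ s : X → X → ℝ,
      ((∀ (a b : ℝ) (u v w : X), s (a • u + b • v) w = a * s u w + b * s v w) ∧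
       (∀ u : X, u ≠ 0 → 0 < s u u) ∧
       (∀ u v : X, (s u v) ^ 2 ≤ s u u * s v v) ∧
       (∀ (a : ℝ) (u v : X), s u (a • v) = a * s u v) ∧
       (∀ u : X, s u u = ‖u‖ ^ 2)) ∧ s y x ≤ 0 := by
  classical
  set base : X → (X →L[ℝ] ℝ) := fun r =>
    if x ≠ 0 ∧ r = rayRep x then (rayCoef x)⁻¹ • f
    else Classical.choose (exists_support r) with hbase
  have base_prop : ∀ r : X, ‖base r‖ ≤ ‖r‖ ∧ base r r = ‖r‖ ^ 2 := by
    intro r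
    simp only [hbase]
    by_cases hr : x ≠ 0 ∧ r = rayRep x
    · rw [if_pos hr]
      obtain ⟨hx, hrr⟩ := hr
      have hc := rayCoef_ne hx
      have hnx : ‖x‖ = |rayCoef x| * ‖rayRep x‖ := norm_eq_coef x
      have habs : 0 < |rayCoef x| := abs_pos.mpr hc
      constructor
      · have h := norm_smul (rayCoef x)⁻¹ f
        rw [Real.norm_eq_abs, abs_inv] at h
        rw [h]
        subst hrr
        calc |rayCoef x|⁻¹ * ‖f‖ ≤ |rayCoef x|⁻¹ * ‖x‖ :=
              mul_le_mul_of_nonneg_left hf1 (by positivity)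
          _ = ‖rayRep x‖ := by rw [hnx]; field_simp
      · rw [ContinuousLinearMap.smul_apply, smul_eq_mul]
        have hfr : f x = rayCoef x * f (rayRep x) := by
          conv_lhs => rw [rayCoef_spec x]
          rw [map_smul, smul_eq_mul]
        subst hrr
        have hfval : f (rayRep x) = ‖x‖ ^ 2 / rayCoef x := by
          rw [hfr] at hf2
          field_simp at hf2 ⊢
          linarith
        rw [hfval, hnx, mul_pow, sq_abs]
        field_simp
    · rw [if_neg hr]
      exact Classical.choose_spec (exists_support r)
  set T : X → (X →L[ℝ] ℝ) := fun v =>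
    if v = 0 then 0 else rayCoef v • base (rayRep v) with hT
  have hT0 : T 0 = 0 := by simp only [hT]; simp
  have hTnorm : ∀ v : X, ‖T v‖ ≤ ‖v‖ := by
    intro v
    by_cases hv : v = 0
    · subst hv; rw [hT0]; simp
    · simp only [hT]
      rw [if_neg hv]
      have h := norm_smul (rayCoef v) (base (rayRep v))
      rw [Real.norm_eq_abs] at h
      rw [h, norm_eq_coef v]
      exact mul_le_mul_of_nonneg_left (base_prop (rayRep v)).1 (abs_nonneg _)
  have hTself : ∀ v : X, T v v = ‖v‖ ^ 2 := by
    intro v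
    by_cases hv : v = 0
    · subst hv; rw [hT0]; simp
    · simp only [hT]
      rw [if_neg hv]
      rw [ContinuousLinearMap.smul_apply, smul_eq_mul]
      have hms := (base (rayRep v)).map_smul (rayCoef v) (rayRep v)
      rw [← rayCoef_spec v] at hms
      rw [hms, smul_eq_mul, (base_prop (rayRep v)).2, norm_eq_coef v, mul_pow, sq_abs]
      ring
  have hThom : ∀ (a : ℝ) (v : X), T (a • v) = a • T v := by
    intro a v
    by_cases ha : a = 0
    · subst ha; rw [zero_smul, hT0, zero_smul]
    · by_cases hv : v = 0
      · subst hv; rw [smul_zero, hT0, smul_zero]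
      · have hav : a • v ≠ 0 := smul_ne_zero ha hv
        have hrel : rayRel (a • v) v := ⟨a, ha, rfl⟩
        have hrep : rayRep (a • v) = rayRep v := rayRep_eq hrel
        have hcoef : rayCoef (a • v) = a * rayCoef v :=
          (rayCoef_unique hav (by rw [hrep, mul_smul, ← rayCoef_spec v])).symm
        simp only [hT]
        rw [if_neg hav, if_neg hv, hrep, hcoef, mul_smul]
  have hTx : T x y ≤ 0 := by
    by_cases hx : x = 0
    · subst hx; rw [hT0]; simp
    · have hbx : base (rayRep x) = (rayCoef x)⁻¹ • f := by
        simp only [hbase]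
        exact if_pos ⟨hx, trivial⟩
      have hTxf : T x = f := by
        simp only [hT]
        rw [if_neg hx, hbx, smul_smul, mul_inv_cancel₀ (rayCoef_ne hx), one_smul]
      rw [hTxf]; exact hf3
  refine ⟨fun u v => T v u, ⟨?_, ?_, ?_, ?_, ?_⟩, hTx⟩
  · intro a b u v w
    show T w (a • u + b • v) = a * T w u + b * T w v
    rw [map_add, map_smul, map_smul]; simp
  · intro u hu
    show 0 < T u u
    rw [hTself u]
    exact pow_pos (norm_pos_iff.mpr hu) 2
  · intro u v
    show (T v u) ^ 2 ≤ T u u * T v v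
    have h1 : |T v u| ≤ ‖v‖ * ‖u‖ := by
      calc |T v u| = ‖T v u‖ := (Real.norm_eq_abs _).symm
        _ ≤ ‖T v‖ * ‖u‖ := (T v).le_opNorm u
        _ ≤ ‖v‖ * ‖u‖ := mul_le_mul_of_nonneg_right (hTnorm v) (norm_nonneg u)
    rw [hTself u, hTself v]
    nlinarith [abs_nonneg (T v u), sq_abs (T v u), norm_nonneg u, norm_nonneg v,
      mul_nonneg (norm_nonneg v) (norm_nonneg u)]
  · intro a u v
    show T (a • v) u = a * T v u
    rw [hThom a v, ContinuousLinearMap.smul_apply, smul_eq_mul]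
  · intro u
    exact hTself u

/-- The separation argument: existence of a support functional nonpositive at `y`. -/
private lemma exists_special (x y : X) (hx : x ≠ 0)
    (h : ∀ l : ℝ, l ≤ 0 → ‖x + l • y‖ ≥ ‖x‖) :
    ∃ f : X →L[ℝ] ℝ, ‖f‖ ≤ ‖x‖ ∧ f x = ‖x‖ ^ 2 ∧ f y ≤ 0 := by
  have hxpos : 0 < ‖x‖ := norm_pos_iff.mpr hx
  set T : Set X := {p | ∃ l : ℝ, l ≤ 0 ∧ p = x + l • y} with hTdef
  have hTconv : Convex ℝ T := by
    rintro p ⟨l1, hl1, rfl⟩ q ⟨l2, hl2, rfl⟩ a b ha hb hab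
    refine ⟨a * l1 + b * l2, ?_, ?_⟩
    · have h1 : a * l1 ≤ 0 := mul_nonpos_of_nonneg_of_nonpos ha hl1
      have h2 : b * l2 ≤ 0 := mul_nonpos_of_nonneg_of_nonpos hb hl2
      linarith
    · have heq : a • (x + l1 • y) + b • (x + l2 • y) = (a + b) • x + (a * l1 + b * l2) • y := by
        module
      rw [heq, hab, one_smul]
  have hdisj : Disjoint (Metric.ball (0 : X) ‖x‖) T := by
    rw [Set.disjoint_left]
    rintro p hp ⟨l, hl, rfl⟩
    have h1 := h l hl
    rw [Metric.mem_ball, dist_zero_right] at hp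
    linarith
  obtain ⟨f, u, hS, hT⟩ :=
    geometric_hahn_banach_open (convex_ball 0 ‖x‖) Metric.isOpen_ball hTconv hdisj
  have hu0 : 0 < u := by
    have h0 := hS 0 (by rw [Metric.mem_ball, dist_self]; exact hxpos)
    simpa using h0
  have hux : u ≤ f x := hT x ⟨0, le_refl 0, by simp⟩
  have hfy : f y ≤ 0 := by
    by_contra hpos
    push_neg at hpos
    set l := min 0 ((u - f x - 1) / f y) with hldef
    have hl0 : l ≤ 0 := min_le_left _ _
    have h2 : u ≤ f (x + l • y) := hT _ ⟨l, hl0, rfl⟩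
    have h3 : f (x + l • y) = f x + l * f y := by
      rw [map_add, map_smul, smul_eq_mul]
    have h4 : l * f y ≤ u - f x - 1 := by
      have hle : l ≤ (u - f x - 1) / f y := min_le_right _ _
      calc l * f y ≤ ((u - f x - 1) / f y) * f y :=
            mul_le_mul_of_nonneg_right hle (le_of_lt hpos)
        _ = u - f x - 1 := div_mul_cancel₀ _ (ne_of_gt hpos)
    rw [h3] at h2
    linarith
  have key : ∀ c : ℝ, 0 < c → c < ‖x‖ → ‖f‖ ≤ u / c := by
    intro c hc hcx
    apply ContinuousLinearMap.opNorm_le_bound _ (le_of_lt (div_pos hu0 hc))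
    intro z
    by_cases hz : z = 0
    · simp [hz]
    · have hzn : 0 < ‖z‖ := norm_pos_iff.mpr hz
      have hmem : ∀ w : X, ‖w‖ = c → w ∈ Metric.ball (0 : X) ‖x‖ := by
        intro w hw
        rw [Metric.mem_ball, dist_zero_right, hw]
        exact hcx
      have h1 : f ((c / ‖z‖) • z) < u := by
        apply hS
        apply hmem
        rw [norm_smul ((c / ‖z‖)) z, Real.norm_eq_abs, abs_of_pos (div_pos hc hzn),
          div_mul_cancel₀ _ (ne_of_gt hzn)]
      have h2 : f ((c / ‖z‖) • (-z)) < u := by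
        apply hS
        apply hmem
        rw [norm_smul ((c / ‖z‖)) (-z), norm_neg, Real.norm_eq_abs,
          abs_of_pos (div_pos hc hzn), div_mul_cancel₀ _ (ne_of_gt hzn)]
      rw [map_smul, smul_eq_mul, div_mul_eq_mul_div, div_lt_iff₀ hzn] at h1
      rw [map_smul, map_neg, smul_eq_mul, mul_neg, ← mul_neg, div_mul_eq_mul_div,
        div_lt_iff₀ hzn] at h2
      rw [Real.norm_eq_abs, div_mul_eq_mul_div, le_div_iff₀ hc]
      rcases abs_cases (f z) with ⟨habs, _⟩ | ⟨habs, _⟩ <;> rw [habs] <;> nlinarith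
  have hnorm : ‖f‖ * ‖x‖ ≤ u := by
    apply le_of_forall_pos_le_add
    intro ε hε
    set δ := min (‖x‖ / 2) (ε / (‖f‖ + 1)) with hδdef
    have hδpos : 0 < δ := lt_min (by linarith) (div_pos hε (by positivity))
    have hδ1 : δ ≤ ‖x‖ / 2 := min_le_left _ _
    have hδ2 : δ ≤ ε / (‖f‖ + 1) := min_le_right _ _
    set c := ‖x‖ - δ with hcdef
    have hc1 : 0 < c := by rw [hcdef]; linarith
    have hc2 : c < ‖x‖ := by rw [hcdef]; linarith
    have h5 : ‖f‖ * c ≤ u := by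
      have hk := key c hc1 hc2
      calc ‖f‖ * c ≤ (u / c) * c := mul_le_mul_of_nonneg_right hk (le_of_lt hc1)
        _ = u := div_mul_cancel₀ _ (ne_of_gt hc1)
    have h6 : ‖f‖ * δ ≤ ε := by
      have h7 : ‖f‖ * δ ≤ ‖f‖ * (ε / (‖f‖ + 1)) :=
        mul_le_mul_of_nonneg_left hδ2 (norm_nonneg f)
      have h8 : (ε / (‖f‖ + 1)) * (‖f‖ + 1) = ε := div_mul_cancel₀ _ (by positivity)
      nlinarith [norm_nonneg f, div_pos hε (show (0:ℝ) < ‖f‖ + 1 by positivity)]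
    calc ‖f‖ * ‖x‖ = ‖f‖ * c + ‖f‖ * δ := by rw [hcdef]; ring
      _ ≤ u + ε := add_le_add h5 h6
  have hfx_le : f x ≤ ‖f‖ * ‖x‖ := by
    calc f x ≤ |f x| := le_abs_self _
      _ = ‖f x‖ := (Real.norm_eq_abs _).symm
      _ ≤ ‖f‖ * ‖x‖ := f.le_opNorm x
  have hfxu : f x = u := le_antisymm (by linarith) hux
  have hfnu : ‖f‖ * ‖x‖ = u := le_antisymm hnorm (by linarith)
  refine ⟨(‖x‖ ^ 2 / u) • f, ?_, ?_, ?_⟩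
  · have hns := norm_smul (‖x‖ ^ 2 / u) f
    rw [Real.norm_eq_abs, abs_of_pos (div_pos (by positivity) hu0)] at hns
    rw [hns, div_mul_eq_mul_div, div_le_iff₀ hu0, ← hfnu]
    nlinarith [norm_nonneg f]
  · rw [ContinuousLinearMap.smul_apply, smul_eq_mul, hfxu, div_mul_cancel₀ _ (ne_of_gt hu0)]
  · rw [ContinuousLinearMap.smul_apply, smul_eq_mul]
    exact mul_nonpos_of_nonneg_of_nonpos (le_of_lt (div_pos (by positivity) hu0)) hfy

end Helpers

theorem mem_minus_iff_sip_nonpos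
    {X : Type*} [NormedAddCommGroup X] [NormedSpace ℝ X] (x y : X) :
    (∀ l : ℝ, l ≤ 0 → ‖x + l • y‖ ≥ ‖x‖) ↔
      ∃ s : X → X → ℝ, IsSIP s ∧ s y x ≤ 0 := by
  constructor
  · intro h
    by_cases hx : x = 0
    · subst hx
      obtain ⟨s, hs, hsy⟩ := sip_of_special (0 : X) y 0 (by simp) (by simp) (by simp)
      exact ⟨s, hs, hsy⟩
    · obtain ⟨f, hf1, hf2, hf3⟩ := exists_special x y hx h
      obtain ⟨s, hs, hsy⟩ := sip_of_special x y f hf1 hf2 hf3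
      exact ⟨s, hs, hsy⟩
  · rintro ⟨s, ⟨hlin, _, hcs, _, hself⟩, hyx⟩ l hl
    by_cases hx : x = 0
    · subst hx; simp only [norm_zero, zero_add, ge_iff_le]; exact norm_nonneg (l • y)
    · have hxpos : 0 < ‖x‖ := norm_pos_iff.mpr hx
      have heq : (1 : ℝ) • (x + l • y) + (-l) • y = x := by module
      have h1 : s x x = 1 * s (x + l • y) x + (-l) * s y x := by
        rw [← hlin 1 (-l) (x + l • y) y x, heq]
      have h2 : ‖x‖ ^ 2 ≤ s (x + l • y) x := by
        rw [hself] at h1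
        nlinarith [mul_nonpos_of_nonpos_of_nonneg hyx (by linarith : (0:ℝ) ≤ -l)]
      have h3 : (s (x + l • y) x) ^ 2 ≤ ‖x + l • y‖ ^ 2 * ‖x‖ ^ 2 := by
        have hc := hcs (x + l • y) x
        rw [hself, hself] at hc
        exact hc
      have hA0 : 0 ≤ s (x + l • y) x := le_trans (sq_nonneg _) h2
      have h4 : ‖x‖ ^ 2 * ‖x‖ ^ 2 ≤ (s (x + l • y) x) ^ 2 := by nlinarith
      have h5 : ‖x‖ ^ 2 ≤ ‖x + l • y‖ ^ 2 := by nlinarith [mul_pos hxpos hxpos]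
      nlinarith [norm_nonneg (x + l • y)]
end

section
/- Let T and A be compact linear operators from a reflexive real Banach space X to a real Banach space Y, and suppose the norm attainment set M_T = {x ∈ X : ‖x‖ = 1, ‖Tx‖ = ‖T‖} is a nonempty connected subset of the unit sphere of X. If T is Birkhoff-James orthogonal to A (i.e., ‖T + λA‖ ≥ ‖T‖ for all real λ), then there exists a unit vector x ∈ M_T such that Tx is Birkhoff-James orthogonal to Ax (i.e., ‖Tx + λAx‖ ≥ ‖Tx‖ for all real λ). -/
open Filter Topology Metric NormedSpace

lemma norm_combo_le {Y : Type*} [NormedAddCommGroup Y] [NormedSpace ℝ Y]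
    (u v : Y) {s t : ℝ} (hs : 0 ≤ s) (ht : 0 ≤ t) (hst : s + t = 1) (a b : ℝ) :
    ‖u + (s * a + t * b) • v‖ ≤ s * ‖u + a • v‖ + t * ‖u + b • v‖ := by
  have h : u + (s * a + t * b) • v = s • (u + a • v) + t • (u + b • v) := by
    have h1 : u = (s + t) • u := by rw [hst, one_smul]
    rw [smul_add, smul_add, smul_smul, smul_smul]
    nth_rewrite 1 [h1]
    rw [add_smul]
    rw [add_smul]
    abel
  rw [h]
  calc ‖s • (u + a • v) + t • (u + b • v)‖ ≤ ‖s • (u + a • v)‖ + ‖t • (u + b • v)‖ :=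
        norm_add_le _ _
    _ = s * ‖u + a • v‖ + t * ‖u + b • v‖ := by
        rw [norm_smul, norm_smul, Real.norm_of_nonneg hs, Real.norm_of_nonneg ht]

lemma exists_weak_cluster {X Y : Type*} [NormedAddCommGroup X] [NormedSpace ℝ X]
    [NormedAddCommGroup Y] [NormedSpace ℝ Y]
    (hrefl : Function.Surjective (NormedSpace.inclusionInDoubleDual ℝ X))
    (T A : X →L[ℝ] Y) (hT : IsCompactOperator T) (hA : IsCompactOperator A)
    (x : ℕ → X) (hx : ∀ n, ‖x n‖ ≤ 1) :
    ∃ (z : X) (𝒰 : Ultrafilter ℕ), ↑𝒰 ≤ (atTop : Filter ℕ) ∧ ‖z‖ ≤ 1 ∧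
      Tendsto (fun n => T (x n)) 𝒰 (𝓝 (T z)) ∧
      Tendsto (fun n => A (x n)) 𝒰 (𝓝 (A z)) := by
  classical
  have hinj : Function.Injective (inclusionInDoubleDual ℝ X) :=
    (inclusionInDoubleDualLi ℝ (E := X)).injective
  set e : X ≃ₗ[ℝ] StrongDual ℝ (StrongDual ℝ X) :=
    LinearEquiv.ofBijective ((inclusionInDoubleDual ℝ X) : X →ₗ[ℝ] StrongDual ℝ (StrongDual ℝ X))
      ⟨hinj, hrefl⟩ with he
  have he_apply : ∀ w : X, ∀ f : StrongDual ℝ X, e w f = f w := fun w f => rfl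
  have he_norm : ∀ w : X, ‖e w‖ = ‖w‖ := fun w =>
    (inclusionInDoubleDualLi ℝ (E := X)).norm_map w
  set D : Set (WeakDual ℝ (StrongDual ℝ X)) :=
    WeakDual.toStrongDual ⁻¹' closedBall (0 : StrongDual ℝ (StrongDual ℝ X)) 1 with hD
  have hDcomp : IsCompact D := WeakDual.isCompact_closedBall (0 : StrongDual ℝ (StrongDual ℝ X)) 1
  set φ : WeakDual ℝ (StrongDual ℝ X) → WeakSpace ℝ X :=
    fun ψ => toWeakSpace ℝ X (e.symm (WeakDual.toStrongDual ψ)) with hφ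
  have hφeval : ∀ ψ : WeakDual ℝ (StrongDual ℝ X), ∀ f : StrongDual ℝ X,
      f (e.symm (WeakDual.toStrongDual ψ)) = ψ f := by
    intro ψ f
    conv_lhs => rw [← he_apply (e.symm (WeakDual.toStrongDual ψ)) f]
    rw [e.apply_symm_apply]
    rfl
  have hφcont : Continuous φ := by
    apply WeakBilin.continuous_of_continuous_eval
    intro f
    have h1 : (fun ψ : WeakDual ℝ (StrongDual ℝ X) => (topDualPairing ℝ X).flip (φ ψ) f)
        = fun ψ : WeakDual ℝ (StrongDual ℝ X) => ψ f := by
      funext ψ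
      exact hφeval ψ f
    rw [h1]
    exact WeakDual.eval_continuous f
  have hKcomp : IsCompact (φ '' D) := hDcomp.image hφcont
  set 𝒰 : Ultrafilter ℕ := Ultrafilter.of atTop with h𝒰
  have h𝒰le : ↑𝒰 ≤ (atTop : Filter ℕ) := Ultrafilter.of_le _
  set g : ℕ → WeakSpace ℝ X := fun n => toWeakSpace ℝ X (x n) with hg
  have hgmem : ∀ n, g n ∈ φ '' D := by
    intro n
    refine ⟨StrongDual.toWeakDual (e (x n)), ?_, ?_⟩
    · simp only [hD, Set.mem_preimage, mem_closedBall, dist_zero_right]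
      rw [show WeakDual.toStrongDual (StrongDual.toWeakDual (e (x n))) = e (x n) from rfl]
      refine (dist_zero_right (e (x n))).trans_le ?_
      rw [he_norm]
      exact hx n
    · show toWeakSpace ℝ X
        (e.symm (WeakDual.toStrongDual (StrongDual.toWeakDual (e (x n))))) = g n
      rw [show WeakDual.toStrongDual (StrongDual.toWeakDual (e (x n))) = e (x n) from rfl,
        e.symm_apply_apply]
  have hKmem : ↑(Ultrafilter.map g 𝒰) ≤ 𝓟 (φ '' D) :=
    Filter.le_principal_iff.mpr (Filter.mem_map.mpr (Filter.univ_mem' fun n => hgmem n))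
  obtain ⟨w, hwK, hwconv⟩ := hKcomp.ultrafilter_le_nhds (𝒰.map g) hKmem
  obtain ⟨ψ, hψD, hψw⟩ := hwK
  set z : X := e.symm (WeakDual.toStrongDual ψ) with hz
  have hznorm : ‖z‖ ≤ 1 := by
    have h2 := he_norm z
    rw [hz, e.apply_symm_apply] at h2
    rw [hz, ← h2]
    exact (dist_zero_right (WeakDual.toStrongDual ψ)).symm.trans_le (by simpa only [hD, Set.mem_preimage, mem_closedBall] using hψD)
  have hweak : ∀ f : StrongDual ℝ X, Tendsto (fun n => f (x n)) 𝒰 (𝓝 (f z)) := by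
    intro f
    have hc : Continuous fun p : WeakSpace ℝ X => (topDualPairing ℝ X).flip p f :=
      WeakBilin.eval_continuous _ f
    have h3 := (hc.tendsto w).comp hwconv
    have hval : (topDualPairing ℝ X).flip w f = f z := by
      rw [← hψw]; rfl
    rw [hval] at h3
    exact h3.congr fun n => rfl
  have key : ∀ (S : X →L[ℝ] Y), IsCompactOperator S →
      Tendsto (fun n => S (x n)) 𝒰 (𝓝 (S z)) := by
    intro S hS
    have hbdd : Bornology.IsBounded (Set.range x) := by
      apply (isBounded_closedBall (x := (0:X)) (r := 1)).subset
      rintro a ⟨n, rfl⟩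
      simpa [dist_zero_right] using hx n
    have hS' : IsCompactOperator ⇑(S : X →ₗ[ℝ] Y) := hS
    obtain ⟨K, hKc, hKsub⟩ := hS'.image_subset_compact_of_bounded hbdd
    have hKmem2 : ↑(Ultrafilter.map (fun n => S (x n)) 𝒰) ≤ 𝓟 K :=
      Filter.le_principal_iff.mpr (Filter.mem_map.mpr (Filter.univ_mem'
        fun n => hKsub ⟨x n, Set.mem_range_self n, rfl⟩))
    obtain ⟨y, hyK, hyconv⟩ := hKc.ultrafilter_le_nhds (𝒰.map (fun n => S (x n))) hKmem2
    have hyz : y = S z := by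
      rw [NormedSpace.eq_iff_forall_dual_eq ℝ]
      intro gf
      have h1 : Tendsto (fun n => gf (S (x n))) 𝒰 (𝓝 (gf y)) :=
        (gf.continuous.tendsto y).comp hyconv
      have h2 : Tendsto (fun n => (gf.comp S) (x n)) 𝒰 (𝓝 ((gf.comp S) z)) :=
        hweak (gf.comp S)
      simp only [ContinuousLinearMap.comp_apply] at h2
      exact tendsto_nhds_unique h1 h2
    rw [← hyz]
    exact hyconv
  exact ⟨z, 𝒰, h𝒰le, hznorm, key T hT, key A hA⟩

lemma half_side {X Y : Type*} [NormedAddCommGroup X] [NormedSpace ℝ X]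
    [NormedAddCommGroup Y] [NormedSpace ℝ Y]
    (hrefl : Function.Surjective (NormedSpace.inclusionInDoubleDual ℝ X))
    (T A : X →L[ℝ] Y) (hT : IsCompactOperator T) (hA : IsCompactOperator A)
    (hTpos : 0 < ‖T‖) (horth : ∀ l : ℝ, ‖T + l • A‖ ≥ ‖T‖) :
    ∃ z : X, ‖z‖ = 1 ∧ ‖T z‖ = ‖T‖ ∧ ∀ l : ℝ, 0 ≤ l → ‖T z + l • A z‖ ≥ ‖T z‖ := by
  classical
  set lam : ℕ → ℝ := fun n => ((n : ℝ) + 1)⁻¹ with hlam_def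
  have hlam_pos : ∀ n, 0 < lam n := fun n => by positivity
  have hlam_lim : Tendsto lam atTop (𝓝 0) := by
    have := tendsto_one_div_add_atTop_nhds_zero_nat (𝕜 := ℝ)
    simpa [hlam_def, one_div] using this
  -- choose an approximate norm-attaining sequence
  have hxex : ∀ n : ℕ, ∃ xn : X, ‖xn‖ ≤ 1 ∧
      ‖T xn + lam n • A xn‖ > ‖T‖ - (lam n) ^ 2 := by
    intro n
    have hr : ‖T + lam n • A‖ - (lam n) ^ 2 < ‖T + lam n • A‖ := by
      have := hlam_pos n; nlinarith
    obtain ⟨xn, hxn1, hxn2⟩ := (T + lam n • A).exists_lt_apply_of_lt_opNorm hr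
    refine ⟨xn, le_of_lt hxn1, ?_⟩
    have h1 : (T + lam n • A) xn = T xn + lam n • A xn := by
      simp [ContinuousLinearMap.add_apply, ContinuousLinearMap.smul_apply]
    rw [h1] at hxn2
    have h2 : ‖T‖ - (lam n) ^ 2 ≤ ‖T + lam n • A‖ - (lam n) ^ 2 :=
      sub_le_sub_right (horth (lam n)) _
    linarith
  choose x hx1 hx2 using hxex
  obtain ⟨z, 𝒰, h𝒰le, hz1, hTz, hAz⟩ := exists_weak_cluster hrefl T A hT hA x hx1
  have hlam𝒰 : Tendsto lam 𝒰 (𝓝 0) := hlam_lim.mono_left h𝒰le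
  -- ‖T z‖ = ‖T‖
  have hTz_ge : ‖T‖ ≤ ‖T z‖ := by
    have hup : Tendsto (fun n => ‖T (x n) + lam n • A (x n)‖) 𝒰 (𝓝 ‖T z‖) := by
      have := (hTz.add (hlam𝒰.smul hAz)).norm
      simpa using this
    have hlow : Tendsto (fun n => ‖T‖ - (lam n) ^ 2) 𝒰 (𝓝 ‖T‖) := by
      have := ((hlam𝒰.mul hlam𝒰)).const_sub ‖T‖
      simpa [pow_two] using this
    exact le_of_tendsto_of_tendsto' hlow hup fun n => le_of_lt (hx2 n)
  have hTz_le : ‖T z‖ ≤ ‖T‖ := by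
    calc ‖T z‖ ≤ ‖T‖ * ‖z‖ := T.le_opNorm z
      _ ≤ ‖T‖ * 1 := by nlinarith
      _ = ‖T‖ := mul_one _
  have hTz_eq : ‖T z‖ = ‖T‖ := le_antisymm hTz_le hTz_ge
  have hz_eq : ‖z‖ = 1 := by
    refine le_antisymm hz1 ?_
    have := T.le_opNorm z
    nlinarith
  refine ⟨z, hz_eq, hTz_eq, ?_⟩
  intro l hl
  rcases eq_or_lt_of_le hl with rfl | hl
  · simp
  -- the uniform lower bound for fixed l > 0
  have hev : ∀ᶠ n in (𝒰 : Filter ℕ), ‖T‖ - lam n * l ≤ ‖T (x n) + l • A (x n)‖ := by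
    have hevat : ∀ᶠ n in (atTop : Filter ℕ), lam n < l := hlam_lim.eventually_lt_const hl
    refine Filter.Eventually.mono (hevat.filter_mono h𝒰le) ?_
    intro n hn
    have hc : 0 < lam n := hlam_pos n
    have hlne : l ≠ 0 := ne_of_gt hl
    have hs : (0:ℝ) ≤ 1 - lam n / l := by
      rw [sub_nonneg, div_le_one hl]; exact le_of_lt hn
    have ht : (0:ℝ) ≤ lam n / l := le_of_lt (div_pos hc hl)
    have hcombo := norm_combo_le (T (x n)) (A (x n)) hs ht (by ring) 0 l
    have hco : (1 - lam n / l) * 0 + lam n / l * l = lam n := by field_simp; ring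
    rw [hco] at hcombo
    have hT0 : ‖T (x n) + (0:ℝ) • A (x n)‖ ≤ ‖T‖ := by
      have h3 := T.le_opNorm (x n)
      have h4 : ‖T‖ * ‖x n‖ ≤ ‖T‖ * 1 := by nlinarith [hx1 n, norm_nonneg (T (x n))]
      simpa using le_trans h3 (by linarith)
    have hkey := hx2 n
    have ht' : 0 < lam n / l := div_pos hc hl
    -- from hcombo, hT0, hkey derive the bound
    have h5 : ‖T‖ - (lam n)^2 < (1 - lam n / l) * ‖T‖ + lam n / l * ‖T (x n) + l • A (x n)‖ := by
      calc ‖T‖ - (lam n)^2 < ‖T (x n) + lam n • A (x n)‖ := hkey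
        _ ≤ (1 - lam n / l) * ‖T (x n) + (0:ℝ) • A (x n)‖
            + lam n / l * ‖T (x n) + l • A (x n)‖ := hcombo
        _ ≤ (1 - lam n / l) * ‖T‖ + lam n / l * ‖T (x n) + l • A (x n)‖ := by nlinarith
    -- multiply out: (lam n / l) * (‖T‖ - N) < lam n ^ 2, so ‖T‖ - N < lam n * l
    set N := ‖T (x n) + l • A (x n)‖
    have h6 : lam n / l * (‖T‖ - N) < (lam n)^2 := by nlinarith
    have h7 : lam n * (‖T‖ - N) < (lam n)^2 * l := by
      have h6' := mul_lt_mul_of_pos_right h6 hl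
      calc lam n * (‖T‖ - N) = lam n / l * (‖T‖ - N) * l := by field_simp
        _ < (lam n)^2 * l := h6'
    nlinarith [h7, hc, mul_pos hc hl]
  have hup : Tendsto (fun n => ‖T (x n) + l • A (x n)‖) 𝒰 (𝓝 ‖T z + l • A z‖) :=
    (hTz.add (hAz.const_smul l)).norm
  have hlow : Tendsto (fun n => ‖T‖ - lam n * l) 𝒰 (𝓝 ‖T‖) := by
    have := (hlam𝒰.mul_const l).const_sub ‖T‖
    simpa using this
  have := le_of_tendsto_of_tendsto hlow hup hev
  rw [hTz_eq]
  exact this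

theorem birkhoff_ortho_of_connected_norm_attainment
    {X Y : Type*} [NormedAddCommGroup X] [NormedSpace ℝ X] [CompleteSpace X]
    [NormedAddCommGroup Y] [NormedSpace ℝ Y] [CompleteSpace Y]
    (hrefl : Function.Surjective (NormedSpace.inclusionInDoubleDual ℝ X))
    (T A : X →L[ℝ] Y) (hT : IsCompactOperator T) (hA : IsCompactOperator A)
    (hconn : IsConnected {x : X | ‖x‖ = 1 ∧ ‖T x‖ = ‖T‖})
    (horth : ∀ l : ℝ, ‖T + l • A‖ ≥ ‖T‖) :
    ∃ x : X, (‖x‖ = 1 ∧ ‖T x‖ = ‖T‖) ∧ ∀ l : ℝ, ‖T x + l • A x‖ ≥ ‖T x‖ := by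
  classical
  rcases eq_or_lt_of_le (norm_nonneg T) with hT0 | hTpos
  · obtain ⟨x₀, hx₀⟩ := hconn.nonempty
    refine ⟨x₀, hx₀, fun l => ?_⟩
    rw [hx₀.2, ← hT0]
    exact norm_nonneg _
  -- nontrivial case
  have hnegA : IsCompactOperator ⇑(-A) := hA.neg
  have horth2 : ∀ l : ℝ, ‖T + l • (-A)‖ ≥ ‖T‖ := by
    intro l
    have heq : T + l • (-A) = T + (-l) • A := by rw [smul_neg, neg_smul]
    rw [heq]
    exact horth (-l)
  obtain ⟨p, hp1, hp2, hp3⟩ := half_side hrefl T A hT hA hTpos horth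
  obtain ⟨q, hq1, hq2, hq3⟩ := half_side hrefl T (-A) hT hnegA hTpos horth2
  have hq3' : ∀ l : ℝ, l ≤ 0 → ‖T q + l • A q‖ ≥ ‖T q‖ := by
    intro l hl
    have h := hq3 (-l) (neg_nonneg.mpr hl)
    have heq : (-l) • (-A) q = l • A q := by
      rw [ContinuousLinearMap.neg_apply, smul_neg, neg_smul, neg_neg]
    rwa [heq] at h
  set Sp : Set X := {x : X | ∀ l : ℝ, 0 ≤ l → ‖T x‖ ≤ ‖T x + l • A x‖} with hSp
  set Sm : Set X := {x : X | ∀ l : ℝ, l ≤ 0 → ‖T x‖ ≤ ‖T x + l • A x‖} with hSm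
  have hclosed : ∀ (P : ℝ → Prop),
      IsClosed {x : X | ∀ l : ℝ, P l → ‖T x‖ ≤ ‖T x + l • A x‖} := by
    intro P
    have heq : {x : X | ∀ l : ℝ, P l → ‖T x‖ ≤ ‖T x + l • A x‖}
        = ⋂ l : ℝ, {x : X | P l → ‖T x‖ ≤ ‖T x + l • A x‖} := by
      ext x; simp [Set.mem_iInter]
    rw [heq]
    refine isClosed_iInter fun l => ?_
    by_cases hl : P l
    · simp only [hl, true_implies]
      exact isClosed_le T.continuous.norm
        ((T.continuous.add (A.continuous.const_smul l)).norm)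
    · simp only [hl, false_implies, Set.setOf_true]
      exact isClosed_univ
  have hSpc : IsClosed Sp := hclosed _
  have hSmc : IsClosed Sm := hclosed _
  set M : Set X := {x : X | ‖x‖ = 1 ∧ ‖T x‖ = ‖T‖} with hM
  have hcover : M ⊆ Sp ∪ Sm := by
    intro w _
    by_contra hcon
    simp only [Set.mem_union, not_or] at hcon
    obtain ⟨h1, h2⟩ := hcon
    rw [hSp, Set.mem_setOf_eq] at h1
    rw [hSm, Set.mem_setOf_eq] at h2
    push_neg at h1 h2
    obtain ⟨l₁, hl₁0, hlt₁⟩ := h1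
    obtain ⟨l₂, hl₂0, hlt₂⟩ := h2
    have hl₁pos : 0 < l₁ := by
      rcases eq_or_lt_of_le hl₁0 with rfl | h
      · simp at hlt₁
      · exact h
    have hl₂neg : l₂ < 0 := by
      rcases eq_or_lt_of_le hl₂0 with rfl | h
      · simp at hlt₂
      · exact h
    have hden : 0 < l₁ - l₂ := by linarith
    set s : ℝ := l₁ / (l₁ - l₂) with hs_def
    set t : ℝ := -l₂ / (l₁ - l₂) with ht_def
    have hs : 0 ≤ s := le_of_lt (div_pos hl₁pos hden)
    have hs' : 0 < s := div_pos hl₁pos hden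
    have ht' : 0 < t := div_pos (by linarith) hden
    have ht : 0 ≤ t := le_of_lt ht'
    have hst : s + t = 1 := by
      rw [hs_def, ht_def]
      field_simp
      ring
    have hzero : s * l₂ + t * l₁ = 0 := by
      rw [hs_def, ht_def]
      field_simp
      ring
    have hcombo := norm_combo_le (T w) (A w) hs ht hst l₂ l₁
    rw [hzero] at hcombo
    simp only [zero_smul, add_zero] at hcombo
    have hm1 := mul_lt_mul_of_pos_left hlt₂ hs'
    have hm2 := mul_lt_mul_of_pos_left hlt₁ ht'
    have hsum : s * ‖T w‖ + t * ‖T w‖ = ‖T w‖ := by rw [← add_mul, hst, one_mul]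
    linarith
  have hpmem : (M ∩ Sp).Nonempty := ⟨p, ⟨hp1, hp2⟩, fun l hl => hp3 l hl⟩
  have hqmem : (M ∩ Sm).Nonempty := ⟨q, ⟨hq1, hq2⟩, fun l hl => hq3' l hl⟩
  obtain ⟨r, hrM, hrSp, hrSm⟩ :=
    isPreconnected_closed_iff.mp hconn.isPreconnected Sp Sm hSpc hSmc hcover hpmem hqmem
  refine ⟨r, hrM, fun l => ?_⟩
  rcases le_total 0 l with h | h
  · exact hrSp l h
  · exact hrSm l h
end

section
/- Let X be a finite-dimensional real Hilbert (Euclidean) space. Then for every linear operator T on X, the norm attainment set M_T = {x : ‖x‖ = 1, ‖Tx‖ = ‖T‖} is the unit sphere of some linear subspace of X. -/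
open scoped RealInnerProductSpace

lemma aux_pos_ker {X : Type*} [NormedAddCommGroup X] [InnerProductSpace ℝ X]
    (S : X →L[ℝ] X) (hsym : ∀ a b : X, ⟪S a, b⟫ = ⟪a, S b⟫)
    (hpos : ∀ a : X, 0 ≤ ⟪S a, a⟫) {x : X} (hx : ⟪S x, x⟫ = 0) : S x = 0 := by
  have key : ∀ y : X, ⟪S x, y⟫ = 0 := by
    intro y
    set a := ⟪S x, y⟫ with ha
    set b := ⟪S y, y⟫ with hb
    have hb0 : 0 ≤ b := hpos y
    set t : ℝ := -a / (b + 1) with ht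
    have h := hpos (x + t • y)
    have expand : ⟪S (x + t • y), x + t • y⟫ = 2 * t * a + t ^ 2 * b := by
      have h1 : ⟪S y, x⟫ = a := by
        rw [hsym, real_inner_comm]
      simp [map_add, map_smul, inner_add_left, inner_add_right,
        real_inner_smul_left, real_inner_smul_right, hx, h1]
      ring
    rw [expand] at h
    have hb1 : 0 < b + 1 := by linarith
    rw [ht] at h
    have h2 : a ^ 2 * (b + 2) / (b + 1) ^ 2 ≤ 0 := by
      have : 2 * (-a / (b + 1)) * a + (-a / (b + 1)) ^ 2 * b
          = -(a ^ 2 * (b + 2) / (b + 1) ^ 2) := by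
        field_simp; ring
      linarith [this ▸ h]
    have h3 : 0 ≤ a ^ 2 * (b + 2) / (b + 1) ^ 2 := by positivity
    have h4 : a ^ 2 * (b + 2) = 0 := by
      have := le_antisymm h2 h3
      field_simp at this
      rwa [mul_zero] at this
    have : a ^ 2 = 0 := by nlinarith
    exact pow_eq_zero_iff (n := 2) (by norm_num) |>.mp this
  have := key (S x)
  exact inner_self_eq_zero.mp this

theorem norm_attainment_set_is_sphere_of_subspace
    {X : Type*} [NormedAddCommGroup X] [InnerProductSpace ℝ X] [FiniteDimensional ℝ X]
    (T : X →L[ℝ] X) :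
    ∃ V : Submodule ℝ X,
      {x : X | ‖x‖ = 1 ∧ ‖T x‖ = ‖T‖} = {x : X | x ∈ V ∧ ‖x‖ = 1} := by
  classical
  set S : X →L[ℝ] X := (‖T‖ ^ 2) • (1 : X →L[ℝ] X) - (ContinuousLinearMap.adjoint T) ∘L T with hS
  have hSapp : ∀ a b : X, ⟪S a, b⟫ = ‖T‖ ^ 2 * ⟪a, b⟫ - ⟪T a, T b⟫ := by
    intro a b
    simp [hS, ContinuousLinearMap.sub_apply, ContinuousLinearMap.smul_apply,
      inner_sub_left, real_inner_smul_left, ContinuousLinearMap.adjoint_inner_left]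
  have hsym : ∀ a b : X, ⟪S a, b⟫ = ⟪a, S b⟫ := by
    intro a b
    rw [hSapp, real_inner_comm (S b) a, hSapp, real_inner_comm b a, real_inner_comm (T b) (T a)]
  have hpos : ∀ a : X, 0 ≤ ⟪S a, a⟫ := by
    intro a
    rw [hSapp]
    have h1 := T.le_opNorm a
    have h2 : ⟪T a, T a⟫ = ‖T a‖ ^ 2 := real_inner_self_eq_norm_sq _
    have h3 : ⟪a, a⟫ = ‖a‖ ^ 2 := real_inner_self_eq_norm_sq _
    rw [h2, h3]
    nlinarith [norm_nonneg (T a), norm_nonneg a, norm_nonneg T]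
  refine ⟨LinearMap.ker (S : X →ₗ[ℝ] X), ?_⟩
  ext x
  simp only [Set.mem_setOf_eq, LinearMap.mem_ker, ContinuousLinearMap.coe_coe]
  constructor
  · rintro ⟨hx1, hx2⟩
    refine ⟨aux_pos_ker S hsym hpos ?_, hx1⟩
    rw [hSapp, real_inner_self_eq_norm_sq, real_inner_self_eq_norm_sq, hx1, hx2]
    ring
  · rintro ⟨hx1, hx2⟩
    refine ⟨hx2, ?_⟩
    have := hSapp x x
    rw [hx1] at this
    simp [real_inner_self_eq_norm_sq, hx2] at this
    have hsq : ‖T x‖ ^ 2 = ‖T‖ ^ 2 := by linarith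
    nlinarith [norm_nonneg (T x), norm_nonneg T]
end

section
/- Let X be a reflexive real Banach space, Y a real Banach space, and T, A compact linear operators from X to Y with T ⊥_B A. Then ‖T‖ = sup{ [Tx, y] : ‖x‖ = 1, ‖y‖ = 1, [·,·] a semi-inner-product on Y compatible with the norm, [Ax, y] ≥ 0 }. -/
open Filter Metric NormedSpace Topology

open Classical in
/-- A sign function `ε` with `ε (-u) = - ε u` for `u ≠ 0`, and values `±1`. -/
noncomputable def sipSign {Y : Type*} [NormedAddCommGroup Y] [NormedSpace ℝ Y] (u : Y) : ℝ :=
  if WellOrderingRel u (-u) then 1 else -1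

lemma sipSign_pm {Y : Type*} [NormedAddCommGroup Y] [NormedSpace ℝ Y] (u : Y) :
    sipSign u = 1 ∨ sipSign u = -1 := by
  unfold sipSign
  split_ifs
  · left; rfl
  · right; rfl

lemma sipSign_sq {Y : Type*} [NormedAddCommGroup Y] [NormedSpace ℝ Y] (u : Y) :
    sipSign u * sipSign u = 1 := by
  rcases sipSign_pm u with h | h <;> rw [h] <;> norm_num

lemma sipSign_abs {Y : Type*} [NormedAddCommGroup Y] [NormedSpace ℝ Y] (u : Y) :
    |sipSign u| = 1 := by
  rcases sipSign_pm u with h | h <;> rw [h] <;> norm_num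

lemma sipSign_neg {Y : Type*} [NormedAddCommGroup Y] [NormedSpace ℝ Y] (u : Y) (hu : u ≠ 0) :
    sipSign (-u) = -sipSign u := by
  have hne : u ≠ -u := by
    intro he
    apply hu
    have h2 : (2 : ℝ) • u = 0 := by
      rw [two_smul]
      nth_rewrite 2 [he]
      exact add_neg_cancel u
    rcases smul_eq_zero.mp h2 with h | h
    · norm_num at h
    · exact h
  unfold sipSign
  rw [neg_neg]
  by_cases h : WellOrderingRel u (-u)
  · rw [if_pos h, if_neg (asymm h)]
  · have h2 : WellOrderingRel (-u) u := by
      rcases trichotomous_of WellOrderingRel u (-u) with h3 | h3 | h3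
      · exact absurd h3 h
      · exact absurd h3 hne
      · exact h3
    rw [if_neg h, if_pos h2]
    norm_num

lemma exists_sip {Y : Type*} [NormedAddCommGroup Y] [NormedSpace ℝ Y]
    (y : Y) (hy : ‖y‖ = 1) (f : Y →L[ℝ] ℝ) (hf1 : ‖f‖ = 1) (hfy : f y = 1) :
    ∃ s : Y → Y → ℝ, IsSIP s ∧ ∀ u, s u y = f u := by
  classical
  have hy0 : y ≠ 0 := by
    intro h
    rw [h, norm_zero] at hy
    norm_num at hy
  -- dual selection Φ with an override at `sipSign y • y`
  obtain ⟨Φ, hΦ, hΦy⟩ : ∃ Φ : Y → (Y →L[ℝ] ℝ),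
      (∀ w : Y, w ≠ 0 → ‖Φ w‖ = 1 ∧ Φ w w = ‖w‖) ∧ Φ (sipSign y • y) = sipSign y • f := by
    refine ⟨fun w => if w = sipSign y • y then sipSign y • f
      else if hw : w = 0 then 0 else Classical.choose (exists_dual_vector ℝ w (norm_ne_zero_iff.2 hw)), ?_, ?_⟩
    · intro w hw
      dsimp only
      by_cases h : w = sipSign y • y
      · rw [if_pos h]
        have hnw : ‖w‖ = 1 := by
          rw [h, norm_smul, Real.norm_eq_abs, sipSign_abs, hy, one_mul]
        have happ : (sipSign y • f) w = sipSign y * f w := rfl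
        have hfw : f w = sipSign y := by
          rw [h, map_smul, smul_eq_mul, hfy, mul_one]
        constructor
        · rcases sipSign_pm y with hs | hs <;> rw [hs]
          · rw [one_smul]; exact hf1
          · rw [norm_smul, hf1]; norm_num
        · rw [happ, hfw, sipSign_sq, hnw]
      · rw [if_neg h, dif_neg hw]
        exact Classical.choose_spec (exists_dual_vector ℝ w (norm_ne_zero_iff.2 hw))
    · dsimp only
      rw [if_pos rfl]
  -- normalized selection g with g y = f
  obtain ⟨g, hg, hgneg, hgy⟩ : ∃ g : Y → (Y →L[ℝ] ℝ),
      (∀ u : Y, u ≠ 0 → ‖g u‖ = 1 ∧ g u u = ‖u‖) ∧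
      (∀ u : Y, u ≠ 0 → g (-u) = -(g u)) ∧ g y = f := by
    refine ⟨fun u => sipSign u • Φ (sipSign u • u), ?_, ?_, ?_⟩
    · intro u hu
      have hrep0 : sipSign u • u ≠ 0 := by
        intro h
        rcases smul_eq_zero.mp h with h2 | h2
        · rcases sipSign_pm u with h3 | h3 <;> rw [h3] at h2 <;> norm_num at h2
        · exact hu h2
      have h1 := hΦ (sipSign u • u) hrep0
      have hrepnorm : ‖sipSign u • u‖ = ‖u‖ := by
        rw [norm_smul, Real.norm_eq_abs, sipSign_abs, one_mul]
      constructor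
      · show ‖sipSign u • Φ (sipSign u • u)‖ = 1
        rcases sipSign_pm u with hs | hs <;> rw [hs] at h1 ⊢
        · simp only [one_smul] at h1 ⊢
          exact h1.1
        · simp only [neg_smul, one_smul] at h1 ⊢
          rw [norm_smul, h1.1]
          norm_num
      · have h3 : sipSign u • (sipSign u • u) = u := by
          rw [smul_smul, sipSign_sq, one_smul]
        have happ : (sipSign u • Φ (sipSign u • u)) u = sipSign u * Φ (sipSign u • u) u := rfl
        have h4 : Φ (sipSign u • u) u = sipSign u * ‖sipSign u • u‖ := by
          calc Φ (sipSign u • u) u = Φ (sipSign u • u) (sipSign u • (sipSign u • u)) := by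
                rw [h3]
          _ = sipSign u * Φ (sipSign u • u) (sipSign u • u) := by rw [map_smul, smul_eq_mul]
          _ = sipSign u * ‖sipSign u • u‖ := by rw [h1.2]
        rw [happ, h4, ← mul_assoc, sipSign_sq, one_mul, hrepnorm]
    · intro u hu
      have h1 : sipSign (-u) • (-u) = sipSign u • u := by
        rw [sipSign_neg u hu, neg_smul, smul_neg, neg_neg]
      show sipSign (-u) • Φ (sipSign (-u) • (-u)) = -(sipSign u • Φ (sipSign u • u))
      rw [h1, sipSign_neg u hu]
      exact neg_smul (sipSign u) (Φ (sipSign u • u))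
    · show sipSign y • Φ (sipSign y • y) = f
      rw [hΦy, smul_smul, sipSign_sq, one_smul]
  -- the semi-inner-product
  have hnv : ∀ v : Y, v ≠ 0 → ‖(‖v‖⁻¹ • v)‖ = 1 ∧ (‖v‖⁻¹ • v) ≠ 0 := by
    intro v hv
    have h1 : ‖(‖v‖⁻¹ • v)‖ = 1 := by
      rw [norm_smul, Real.norm_eq_abs, abs_of_nonneg (inv_nonneg.2 (norm_nonneg v)),
        inv_mul_cancel₀ (norm_ne_zero_iff.2 hv)]
    refine ⟨h1, ?_⟩
    intro h
    rw [h, norm_zero] at h1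
    norm_num at h1
  refine ⟨fun u v => if v = 0 then 0 else ‖v‖ * g (‖v‖⁻¹ • v) u, ⟨?_, ?_, ?_, ?_, ?_⟩, ?_⟩
  rotate_right 2
  · -- s u u = ‖u‖ ^ 2   (proved first; reused below)
    intro u
    by_cases h : u = 0
    · simp [h]
    · dsimp only
      rw [if_neg h]
      have hu' : (‖u‖ : ℝ) • (‖u‖⁻¹ • u) = u := by
        rw [smul_smul, mul_inv_cancel₀ (norm_ne_zero_iff.2 h), one_smul]
      have h2 : g (‖u‖⁻¹ • u) u = ‖u‖ := by
        calc g (‖u‖⁻¹ • u) u = g (‖u‖⁻¹ • u) (‖u‖ • (‖u‖⁻¹ • u)) := by rw [hu']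
        _ = ‖u‖ * g (‖u‖⁻¹ • u) (‖u‖⁻¹ • u) := by rw [map_smul, smul_eq_mul]
        _ = ‖u‖ * ‖(‖u‖⁻¹ • u)‖ := by rw [(hg _ (hnv u h).2).2]
        _ = ‖u‖ := by rw [(hnv u h).1, mul_one]
      rw [h2]
      ring
  · -- value at y
    intro u
    dsimp only
    rw [if_neg hy0, hy, inv_one, one_smul, one_mul, hgy]
  · -- linearity in first variable
    intro a b u v w
    by_cases h : w = 0
    · simp [h]
    · dsimp only
      split_ifs
      simp only [map_add, map_smul, smul_eq_mul]
      ring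
  · -- positivity
    intro u hu
    dsimp only
    rw [if_neg hu]
    have hu' : (‖u‖ : ℝ) • (‖u‖⁻¹ • u) = u := by
      rw [smul_smul, mul_inv_cancel₀ (norm_ne_zero_iff.2 hu), one_smul]
    have h2 : g (‖u‖⁻¹ • u) u = ‖u‖ := by
      calc g (‖u‖⁻¹ • u) u = g (‖u‖⁻¹ • u) (‖u‖ • (‖u‖⁻¹ • u)) := by rw [hu']
      _ = ‖u‖ * g (‖u‖⁻¹ • u) (‖u‖⁻¹ • u) := by rw [map_smul, smul_eq_mul]
      _ = ‖u‖ * ‖(‖u‖⁻¹ • u)‖ := by rw [(hg _ (hnv u hu).2).2]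
      _ = ‖u‖ := by rw [(hnv u hu).1, mul_one]
    rw [h2]
    have : 0 < ‖u‖ := norm_pos_iff.2 hu
    positivity
  · -- Cauchy-Schwarz
    intro u v
    by_cases hv : v = 0
    · subst hv
      simp
    by_cases hu : u = 0
    · subst hu
      dsimp only
      simp only [if_neg hv, if_pos rfl, map_zero, mul_zero]
      norm_num
    dsimp only
    simp only [if_neg hv, if_neg hu]
    have hu' : (‖u‖ : ℝ) • (‖u‖⁻¹ • u) = u := by
      rw [smul_smul, mul_inv_cancel₀ (norm_ne_zero_iff.2 hu), one_smul]
    have h2u : g (‖u‖⁻¹ • u) u = ‖u‖ := by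
      calc g (‖u‖⁻¹ • u) u = g (‖u‖⁻¹ • u) (‖u‖ • (‖u‖⁻¹ • u)) := by rw [hu']
      _ = ‖u‖ * g (‖u‖⁻¹ • u) (‖u‖⁻¹ • u) := by rw [map_smul, smul_eq_mul]
      _ = ‖u‖ * ‖(‖u‖⁻¹ • u)‖ := by rw [(hg _ (hnv u hu).2).2]
      _ = ‖u‖ := by rw [(hnv u hu).1, mul_one]
    have hv' : (‖v‖ : ℝ) • (‖v‖⁻¹ • v) = v := by
      rw [smul_smul, mul_inv_cancel₀ (norm_ne_zero_iff.2 hv), one_smul]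
    have h2v : g (‖v‖⁻¹ • v) v = ‖v‖ := by
      calc g (‖v‖⁻¹ • v) v = g (‖v‖⁻¹ • v) (‖v‖ • (‖v‖⁻¹ • v)) := by rw [hv']
      _ = ‖v‖ * g (‖v‖⁻¹ • v) (‖v‖⁻¹ • v) := by rw [map_smul, smul_eq_mul]
      _ = ‖v‖ * ‖(‖v‖⁻¹ • v)‖ := by rw [(hg _ (hnv v hv).2).2]
      _ = ‖v‖ := by rw [(hnv v hv).1, mul_one]
    rw [h2u, h2v]
    have hb : |g (‖v‖⁻¹ • v) u| ≤ ‖u‖ := by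
      calc |g (‖v‖⁻¹ • v) u| = ‖g (‖v‖⁻¹ • v) u‖ := (Real.norm_eq_abs _).symm
      _ ≤ ‖g (‖v‖⁻¹ • v)‖ * ‖u‖ := (g _).le_opNorm u
      _ = ‖u‖ := by rw [(hg _ (hnv v hv).2).1, one_mul]
    have h3 : (g (‖v‖⁻¹ • v) u) ^ 2 ≤ ‖u‖ ^ 2 :=
      sq_le_sq' (abs_le.mp hb).1 (abs_le.mp hb).2
    calc (‖v‖ * g (‖v‖⁻¹ • v) u) ^ 2 = ‖v‖ ^ 2 * (g (‖v‖⁻¹ • v) u) ^ 2 := by ring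
    _ ≤ ‖v‖ ^ 2 * ‖u‖ ^ 2 := mul_le_mul_of_nonneg_left h3 (sq_nonneg ‖v‖)
    _ = ‖u‖ * ‖u‖ * (‖v‖ * ‖v‖) := by ring
  · -- homogeneity in second variable
    intro a u v
    by_cases hv : v = 0
    · simp [hv]
    by_cases ha : a = 0
    · subst ha
      dsimp only
      rw [zero_smul, if_pos rfl, zero_mul]
    have hav : a • v ≠ 0 := smul_ne_zero ha hv
    dsimp only
    simp only [if_neg hav, if_neg hv]
    have hnorm : ‖a • v‖ = |a| * ‖v‖ := by rw [norm_smul, Real.norm_eq_abs]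
    have hunit : ‖a • v‖⁻¹ • (a • v) = (|a|⁻¹ * a) • (‖v‖⁻¹ • v) := by
      rw [hnorm, smul_smul, smul_smul, mul_inv]
      congr 1
      ring
    rcases lt_or_gt_of_ne ha with hlt | hgt
    · have habs : |a| = -a := abs_of_neg hlt
      have hsgn : |a|⁻¹ * a = -1 := by
        rw [habs]
        field_simp
      rw [hunit, hsgn, neg_one_smul, hgneg _ (hnv v hv).2]
      simp only [ContinuousLinearMap.neg_apply, hnorm, habs]
      ring
    · have habs : |a| = a := abs_of_pos hgt
      have hsgn : |a|⁻¹ * a = 1 := by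
        rw [habs]
        field_simp
      rw [hunit, hsgn, one_smul, hnorm, habs]
      ring


lemma sip_slope {Y : Type*} [NormedAddCommGroup Y] [NormedSpace ℝ Y]
    (u v : Y) {c d t l : ℝ} (ht : 0 < t) (htl : t ≤ l)
    (hu : ‖u‖ ≤ c) (h : c - d ≤ ‖u + t • v‖) :
    c - d * (l / t) ≤ ‖u + l • v‖ := by
  have hl : 0 < l := lt_of_lt_of_le ht htl
  have hθ : 0 < t / l := div_pos ht hl
  have hθ1 : t / l ≤ 1 := (div_le_one hl).2 htl
  have key : u + t • v = (1 - t / l) • u + (t / l) • (u + l • v) := by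
    rw [smul_add, sub_smul, one_smul, smul_smul, div_mul_cancel₀ _ (ne_of_gt hl)]
    abel
  have h2 : ‖u + t • v‖ ≤ (1 - t / l) * ‖u‖ + (t / l) * ‖u + l • v‖ := by
    rw [key]
    refine (norm_add_le _ _).trans ?_
    rw [norm_smul, norm_smul, Real.norm_eq_abs, Real.norm_eq_abs,
      abs_of_nonneg (by linarith), abs_of_pos hθ]
  have h4 : (t / l) * c - d ≤ ‖u + l • v‖ * (t / l) := by
    have h5 : (1 - t / l) * ‖u‖ ≤ (1 - t / l) * c :=
      mul_le_mul_of_nonneg_left hu (by linarith)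
    nlinarith
  have h6 : (c - d * (l / t)) * (t / l) = (t / l) * c - d := by
    field_simp
  exact (mul_le_mul_iff_left₀ hθ).1 (by rw [h6]; exact h4)

lemma exists_support_functional {Y : Type*} [NormedAddCommGroup Y] [NormedSpace ℝ Y]
    (z w : Y) (hz : z ≠ 0) (h : ∀ t : ℝ, 0 ≤ t → ‖z‖ ≤ ‖z + t • w‖) :
    ∃ f : Y →L[ℝ] ℝ, ‖f‖ = 1 ∧ f z = ‖z‖ ∧ 0 ≤ f w := by
  classical
  set t : ℕ → ℝ := fun n => 1 / (n + 1) with htdef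
  have ht : ∀ n, 0 < t n := fun n => by positivity
  have hzpos : 0 < ‖z‖ := norm_pos_iff.2 hz
  have hzn : ∀ n, z + t n • w ≠ 0 := by
    intro n h0
    have := h (t n) (ht n).le
    rw [h0, norm_zero] at this
    linarith
  have H : ∀ n, ∃ g : Y →L[ℝ] ℝ, ‖g‖ = 1 ∧ g (z + t n • w) = ‖z + t n • w‖ :=
    fun n => exists_dual_vector ℝ _ (norm_ne_zero_iff.2 (hzn n))
  choose g hg1 hg2 using H
  -- expand evaluations
  have hexp : ∀ n, g n z + t n * g n w = ‖z + t n • w‖ := by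
    intro n
    have := hg2 n
    rw [map_add, map_smul] at this
    simpa [smul_eq_mul] using this
  have hgz_le : ∀ n, g n z ≤ ‖z‖ := by
    intro n
    calc g n z ≤ |g n z| := le_abs_self _
    _ ≤ ‖g n‖ * ‖z‖ := by rw [← Real.norm_eq_abs]; exact (g n).le_opNorm z
    _ = ‖z‖ := by rw [hg1, one_mul]
  have hgw_le : ∀ n, g n w ≤ ‖w‖ := by
    intro n
    calc g n w ≤ |g n w| := le_abs_self _
    _ ≤ ‖g n‖ * ‖w‖ := by rw [← Real.norm_eq_abs]; exact (g n).le_opNorm w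
    _ = ‖w‖ := by rw [hg1, one_mul]
  have hgz_ge : ∀ n, ‖z‖ - t n * ‖w‖ ≤ g n z := by
    intro n
    have h1 := h (t n) (ht n).le
    have h2 := hexp n
    have h3 : t n * g n w ≤ t n * ‖w‖ := mul_le_mul_of_nonneg_left (hgw_le n) (ht n).le
    linarith
  have hgw_nonneg : ∀ n, 0 ≤ g n w := by
    intro n
    have h1 := h (t n) (ht n).le
    have h2 := hexp n
    have h3 := hgz_le n
    have h4 : 0 ≤ t n * g n w := by linarith
    exact (mul_nonneg_iff_of_pos_left (ht n)).1 h4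
  -- weak-* cluster point
  let F : ℕ → WeakDual ℝ Y := fun n => StrongDual.toWeakDual (g n)
  let K : Set (WeakDual ℝ Y) := WeakDual.toStrongDual ⁻¹' closedBall 0 1
  have hK : IsCompact K := WeakDual.isCompact_closedBall (𝕜 := ℝ) (E := Y) 0 1
  have hFK : ∀ n, F n ∈ K := by
    intro n
    simp only [K, Set.mem_preimage, mem_closedBall, dist_zero_right]
    show ‖g n‖ ≤ 1
    rw [hg1]
  let U : Ultrafilter ℕ := Ultrafilter.of atTop
  have hUle : (U : Filter ℕ) ≤ atTop := Ultrafilter.of_le _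
  have hmap : ↑(U.map F) ≤ 𝓟 K := by
    rw [Ultrafilter.coe_map, le_principal_iff, mem_map]
    exact univ_mem' hFK
  obtain ⟨φ, hφK, hφ⟩ := hK.ultrafilter_le_nhds (U.map F) hmap
  rw [Ultrafilter.coe_map] at hφ
  have htends : Tendsto F (U : Filter ℕ) (𝓝 φ) := hφ
  have heval : ∀ v : Y, Tendsto (fun n => g n v) (U : Filter ℕ) (𝓝 (φ v)) := by
    intro v
    exact ((WeakDual.eval_continuous v).tendsto φ).comp htends
  have httend : Tendsto t atTop (𝓝 0) := by
    rw [htdef]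
    exact tendsto_one_div_add_atTop_nhds_zero_nat
  have httendU : Tendsto t (U : Filter ℕ) (𝓝 0) := httend.mono_left hUle
  set f : Y →L[ℝ] ℝ := WeakDual.toStrongDual φ with hfdef
  have hfle : ‖f‖ ≤ 1 := by
    have := hφK
    simpa [K, dist_zero_right] using this
  have hfeval : ∀ v : Y, f v = φ v := fun _ => rfl
  have hfz : f z = ‖z‖ := by
    have hlowt : Tendsto (fun n => ‖z‖ - t n * ‖w‖) (U : Filter ℕ) (𝓝 ‖z‖) := by
      have hc : Tendsto (fun _ : ℕ => ‖z‖) (U : Filter ℕ) (𝓝 ‖z‖) := tendsto_const_nhds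
      have hc2 := hc.sub (httendU.mul_const ‖w‖)
      simp only [zero_mul, sub_zero] at hc2
      exact hc2
    have hlow : ‖z‖ ≤ φ z := le_of_tendsto_of_tendsto' hlowt (heval z) hgz_ge
    have hup : φ z ≤ ‖z‖ := by
      have h1 : f z ≤ |f z| := le_abs_self _
      have h2 : |f z| ≤ ‖f‖ * ‖z‖ := by
        rw [← Real.norm_eq_abs]; exact f.le_opNorm z
      have h3 : ‖f‖ * ‖z‖ ≤ 1 * ‖z‖ := mul_le_mul_of_nonneg_right hfle (norm_nonneg _)
      rw [hfeval] at h1 h2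
      linarith
    rw [hfeval]
    linarith
  refine ⟨f, ?_, hfz, ?_⟩
  · refine le_antisymm hfle ?_
    have h1 : ‖z‖ = f z := hfz.symm
    have h2 : f z ≤ ‖f‖ * ‖z‖ := by
      calc f z ≤ |f z| := le_abs_self _
      _ ≤ ‖f‖ * ‖z‖ := by rw [← Real.norm_eq_abs]; exact f.le_opNorm z
    nlinarith
  · rw [hfeval]
    exact ge_of_tendsto' (heval w) hgw_nonneg

set_option maxHeartbeats 2000000 in
theorem norm_eq_sup_sip_nonneg
    {X Y : Type*} [NormedAddCommGroup X] [NormedSpace ℝ X] [CompleteSpace X]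
    [NormedAddCommGroup Y] [NormedSpace ℝ Y] [CompleteSpace Y]
    (hrefl : Function.Surjective (NormedSpace.inclusionInDoubleDual ℝ X))
    (T A : X →L[ℝ] Y) (hT : IsCompactOperator T) (hA : IsCompactOperator A)
    (horth : ∀ l : ℝ, ‖T + l • A‖ ≥ ‖T‖) :
    ‖T‖ = sSup {r : ℝ | ∃ (x : X) (y : Y) (s : Y → Y → ℝ),
      ‖x‖ = 1 ∧ ‖y‖ = 1 ∧ IsSIP s ∧ 0 ≤ s (A x) y ∧ r = s (T x) y} := by
  classical
  set S : Set ℝ := {r : ℝ | ∃ (x : X) (y : Y) (s : Y → Y → ℝ),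
      ‖x‖ = 1 ∧ ‖y‖ = 1 ∧ IsSIP s ∧ 0 ≤ s (A x) y ∧ r = s (T x) y} with hSdef
  have hub : ∀ r ∈ S, r ≤ ‖T‖ := by
    rintro r ⟨x, y, s, hx, hy, ⟨hlin, hpos, hcs, hhom, hnorm⟩, hAx, rfl⟩
    have h1 : (s (T x) y) ^ 2 ≤ s (T x) (T x) * s y y := hcs _ _
    rw [hnorm, hnorm, hy] at h1
    have h2 : ‖T x‖ ≤ ‖T‖ := by
      calc ‖T x‖ ≤ ‖T‖ * ‖x‖ := T.le_opNorm x
      _ = ‖T‖ := by rw [hx, mul_one]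
    have h3 : s (T x) y ≤ ‖T x‖ := by
      nlinarith [norm_nonneg (T x), sq_nonneg (s (T x) y + ‖T x‖)]
    linarith
  by_cases hT0 : T = 0
  · have hz : ∀ r ∈ S, r = 0 := by
      rintro r ⟨x, y, s, hx, hy, ⟨hlin, hpos, hcs, hhom, hnorm⟩, hAx, rfl⟩
      have h0 : s 0 y = 0 := by
        have := hlin 0 0 0 0 y
        simpa using this
      rw [hT0]
      simpa using h0
    rcases Set.eq_empty_or_nonempty S with hS0 | hS0
    · rw [hT0, hS0]
      simp [Real.sSup_empty]
    · have hsing : S = {0} := Set.eq_singleton_iff_nonempty_unique_mem.mpr ⟨hS0, hz⟩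
      rw [hT0, hsing, csSup_singleton]
      simp
  -- main case : T ≠ 0
  have hTpos : 0 < ‖T‖ := norm_pos_iff.mpr hT0
  set t : ℕ → ℝ := fun n => 1 / (n + 1) with htdef
  have ht : ∀ n, 0 < t n := fun n => by positivity
  have httend : Tendsto t atTop (𝓝 0) := tendsto_one_div_add_atTop_nhds_zero_nat
  have hSn_norm : ∀ n, ‖T‖ ≤ ‖T + t n • A‖ := fun n => horth (t n)
  have hx_ex : ∀ n : ℕ, ∃ x : X, ‖x‖ ≤ 1 ∧ ‖T + t n • A‖ - (t n) ^ 2 < ‖(T + t n • A) x‖ := by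
    intro n
    have h1 : ‖T + t n • A‖ - (t n) ^ 2 < ‖T + t n • A‖ := by nlinarith [ht n]
    obtain ⟨x, hx1, hx2⟩ := ContinuousLinearMap.exists_lt_apply_of_lt_opNorm (T + t n • A) h1
    exact ⟨x, hx1.le, hx2⟩
  choose x hx1 hx2 using hx_ex
  have hx2' : ∀ n, ‖T‖ - (t n) ^ 2 ≤ ‖T (x n) + t n • A (x n)‖ := by
    intro n
    have h1 := hx2 n
    have heq : (T + t n • A) (x n) = T (x n) + t n • A (x n) := by
      simp [ContinuousLinearMap.add_apply, ContinuousLinearMap.smul_apply]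
    rw [heq] at h1
    linarith [hSn_norm n]
  have hTxn_le : ∀ n, ‖T (x n)‖ ≤ ‖T‖ := by
    intro n
    calc ‖T (x n)‖ ≤ ‖T‖ * ‖x n‖ := T.le_opNorm _
    _ ≤ ‖T‖ * 1 := mul_le_mul_of_nonneg_left (hx1 n) (norm_nonneg T)
    _ = ‖T‖ := mul_one _
  -- weak-* limit in the double dual
  set J : X →L[ℝ] StrongDual ℝ (StrongDual ℝ X) :=
    NormedSpace.inclusionInDoubleDual ℝ X with hJdef
  have hJnorm : ∀ z : X, ‖J z‖ = ‖z‖ := fun z =>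
    (NormedSpace.inclusionInDoubleDualLi ℝ).norm_map z
  set ι : X → WeakDual ℝ (StrongDual ℝ X) :=
    fun z => StrongDual.toWeakDual (J z) with hιdef
  set K : Set (WeakDual ℝ (StrongDual ℝ X)) :=
    WeakDual.toStrongDual ⁻¹' Metric.closedBall 0 1 with hKdef
  have hK : IsCompact K := WeakDual.isCompact_closedBall (𝕜 := ℝ) (E := StrongDual ℝ X) 0 1
  have hxK : ∀ n, ι (x n) ∈ K := by
    intro n
    show WeakDual.toStrongDual (ι (x n)) ∈ Metric.closedBall 0 1
    refine (mem_closedBall_zero_iff (E := StrongDual ℝ (StrongDual ℝ X))).mpr ?_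
    show ‖J (x n)‖ ≤ 1
    rw [hJnorm]
    exact hx1 n
  set U : Ultrafilter ℕ := Ultrafilter.of atTop with hUdef
  have hUle : (U : Filter ℕ) ≤ atTop := Ultrafilter.of_le _
  obtain ⟨ξ, hξK, hξ⟩ := hK.ultrafilter_le_nhds (U.map (fun n => ι (x n)))
    (by rw [Ultrafilter.coe_map, le_principal_iff, mem_map]; exact univ_mem' hxK)
  rw [Ultrafilter.coe_map] at hξ
  have hξt : Tendsto (fun n => ι (x n)) (U : Filter ℕ) (𝓝 ξ) := hξ
  obtain ⟨xb, hxb⟩ := hrefl (WeakDual.toStrongDual ξ)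
  have hxb1 : ‖xb‖ ≤ 1 := by
    rw [← hJnorm xb]
    show ‖J xb‖ ≤ 1
    rw [show J xb = WeakDual.toStrongDual ξ from hxb]
    exact (mem_closedBall_zero_iff (E := StrongDual ℝ (StrongDual ℝ X))).mp hξK
  -- norm limits of T (x n) and A (x n)
  have hT' : IsCompactOperator (⇑(T : X →ₗ[ℝ] Y)) := hT
  have hA' : IsCompactOperator (⇑(A : X →ₗ[ℝ] Y)) := hA
  obtain ⟨CT, hCT, hCTsub⟩ := hT'.image_closedBall_subset_compact (𝕜₁ := ℝ) 1
  obtain ⟨CA, hCA, hCAsub⟩ := hA'.image_closedBall_subset_compact (𝕜₁ := ℝ) 1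
  have hTmem : ∀ n, T (x n) ∈ CT := fun n =>
    hCTsub ⟨x n, by rw [mem_closedBall_zero_iff]; exact hx1 n, rfl⟩
  have hAmem : ∀ n, A (x n) ∈ CA := fun n =>
    hCAsub ⟨x n, by rw [mem_closedBall_zero_iff]; exact hx1 n, rfl⟩
  obtain ⟨vT, hvTC, hvT⟩ := hCT.ultrafilter_le_nhds (U.map (fun n => T (x n)))
    (by rw [Ultrafilter.coe_map, le_principal_iff, mem_map]; exact univ_mem' hTmem)
  obtain ⟨vA, hvAC, hvA⟩ := hCA.ultrafilter_le_nhds (U.map (fun n => A (x n)))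
    (by rw [Ultrafilter.coe_map, le_principal_iff, mem_map]; exact univ_mem' hAmem)
  rw [Ultrafilter.coe_map] at hvT hvA
  have hvTt : Tendsto (fun n => T (x n)) (U : Filter ℕ) (𝓝 vT) := hvT
  have hvAt : Tendsto (fun n => A (x n)) (U : Filter ℕ) (𝓝 vA) := hvA
  -- identify the limits
  have hident : ∀ (B : X →L[ℝ] Y) (v : Y), Tendsto (fun n => B (x n)) (U : Filter ℕ) (𝓝 v) →
      v = B xb := by
    intro B v hv
    apply (NormedSpace.eq_iff_forall_dual_eq ℝ).2
    intro gd
    have h1 : Tendsto (fun n => gd (B (x n))) (U : Filter ℕ) (𝓝 (gd v)) :=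
      (gd.continuous.tendsto v).comp hv
    have h3 : Tendsto (fun n => (ι (x n)) (gd.comp B)) (U : Filter ℕ) (𝓝 (ξ (gd.comp B))) :=
      ((WeakDual.eval_continuous (gd.comp B)).tendsto ξ).comp hξt
    have h4 : ∀ n, (ι (x n)) (gd.comp B) = gd (B (x n)) := fun n => rfl
    have h5 : ξ (gd.comp B) = gd (B xb) := by
      calc ξ (gd.comp B) = (WeakDual.toStrongDual ξ) (gd.comp B) := rfl
      _ = (J xb) (gd.comp B) := by rw [hxb]
      _ = gd (B xb) := rfl
    have h2 : Tendsto (fun n => gd (B (x n))) (U : Filter ℕ) (𝓝 (gd (B xb))) := by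
      rw [← h5]
      exact h3.congr h4
    exact tendsto_nhds_unique h1 h2
  have hvTeq : vT = T xb := hident T vT hvTt
  have hvAeq : vA = A xb := hident A vA hvAt
  rw [hvTeq] at hvTt
  rw [hvAeq] at hvAt
  -- ‖T xb‖ = ‖T‖
  have httendU : Tendsto t (U : Filter ℕ) (𝓝 0) := httend.mono_left hUle
  have hTxb : ‖T xb‖ = ‖T‖ := by
    have hlow : ∀ n, ‖T‖ - (t n) ^ 2 - t n * ‖A‖ ≤ ‖T (x n)‖ := by
      intro n
      have h1 := hx2' n
      have h2 : ‖T (x n) + t n • A (x n)‖ ≤ ‖T (x n)‖ + t n * ‖A‖ := by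
        calc ‖T (x n) + t n • A (x n)‖ ≤ ‖T (x n)‖ + ‖t n • A (x n)‖ := norm_add_le _ _
        _ = ‖T (x n)‖ + t n * ‖A (x n)‖ := by
            rw [norm_smul, Real.norm_eq_abs, abs_of_pos (ht n)]
        _ ≤ ‖T (x n)‖ + t n * ‖A‖ := by
            have h3 : ‖A (x n)‖ ≤ ‖A‖ := by
              calc ‖A (x n)‖ ≤ ‖A‖ * ‖x n‖ := A.le_opNorm _
              _ ≤ ‖A‖ * 1 := mul_le_mul_of_nonneg_left (hx1 n) (norm_nonneg A)
              _ = ‖A‖ := mul_one _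
            nlinarith [ht n]
      linarith
    have hlowt : Tendsto (fun n => ‖T‖ - (t n) ^ 2 - t n * ‖A‖) (U : Filter ℕ) (𝓝 ‖T‖) := by
      have hc : Tendsto (fun _ : ℕ => ‖T‖) (U : Filter ℕ) (𝓝 ‖T‖) := tendsto_const_nhds
      have h1 := (hc.sub ((httendU.pow 2))).sub (httendU.mul_const ‖A‖)
      rw [show ‖T‖ - (0:ℝ) ^ 2 - 0 * ‖A‖ = ‖T‖ by norm_num] at h1
      exact h1
    have hnt : Tendsto (fun n => ‖T (x n)‖) (U : Filter ℕ) (𝓝 ‖T xb‖) := hvTt.norm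
    have h1 : ‖T‖ ≤ ‖T xb‖ := le_of_tendsto_of_tendsto' hlowt hnt hlow
    have h2 : ‖T xb‖ ≤ ‖T‖ := by
      calc ‖T xb‖ ≤ ‖T‖ * ‖xb‖ := T.le_opNorm _
      _ ≤ ‖T‖ * 1 := mul_le_mul_of_nonneg_left hxb1 (norm_nonneg T)
      _ = ‖T‖ := mul_one _
    linarith
  have hxbnorm : ‖xb‖ = 1 := by
    refine le_antisymm hxb1 ?_
    have h1 := T.le_opNorm xb
    rw [hTxb] at h1
    nlinarith
  -- one-sided orthogonality at xb
  have hkey : ∀ l : ℝ, 0 ≤ l → ‖T xb‖ ≤ ‖T xb + l • A xb‖ := by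
    intro l hl
    rcases eq_or_lt_of_le hl with hl0 | hl0
    · rw [← hl0, zero_smul, add_zero]
    have hev : ∀ᶠ n in (U : Filter ℕ), ‖T‖ - l * t n ≤ ‖T (x n) + l • A (x n)‖ := by
      have hev1 : ∀ᶠ n in atTop, t n ≤ l := by
        obtain ⟨N, hN⟩ := exists_nat_gt (1 / l)
        filter_upwards [eventually_ge_atTop N] with n hn
        have h1 : (1 : ℝ) / l < n + 1 := by
          calc (1 : ℝ) / l < N := hN
          _ ≤ n := by exact_mod_cast hn
          _ ≤ n + 1 := by linarith
        rw [htdef]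
        rw [div_le_iff₀ (by positivity)]
        rw [div_lt_iff₀ hl0] at h1
        linarith
      filter_upwards [hUle hev1] with n hn
      have hs := sip_slope (T (x n)) (A (x n)) (ht n) hn (hTxn_le n) (hx2' n)
      have heq : (t n) ^ 2 * (l / t n) = l * t n := by
        field_simp
      rw [heq] at hs
      exact hs
    have hnt : Tendsto (fun n => ‖T (x n) + l • A (x n)‖) (U : Filter ℕ)
        (𝓝 ‖T xb + l • A xb‖) := (hvTt.add (hvAt.const_smul l)).norm
    have hlt : Tendsto (fun n => ‖T‖ - l * t n) (U : Filter ℕ) (𝓝 ‖T‖) := by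
      have hc : Tendsto (fun _ : ℕ => ‖T‖) (U : Filter ℕ) (𝓝 ‖T‖) := tendsto_const_nhds
      have h1 := hc.sub (httendU.const_mul l)
      rw [show ‖T‖ - l * (0:ℝ) = ‖T‖ by norm_num] at h1
      exact h1
    have h1 : ‖T‖ ≤ ‖T xb + l • A xb‖ := le_of_tendsto_of_tendsto hlt hnt hev
    rw [hTxb]
    exact h1
  have hTxb0 : T xb ≠ 0 := by
    intro h
    rw [h, norm_zero] at hTxb
    linarith
  obtain ⟨f, hf1, hfz, hfw⟩ := exists_support_functional (T xb) (A xb) hTxb0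
    (fun l hl => hkey l hl)
  set y₀ : Y := ‖T xb‖⁻¹ • T xb with hy₀def
  have hTxbpos : 0 < ‖T xb‖ := by rw [hTxb]; exact hTpos
  have hy₀ : ‖y₀‖ = 1 := by
    rw [hy₀def, norm_smul, Real.norm_eq_abs, abs_of_pos (inv_pos.2 hTxbpos),
      inv_mul_cancel₀ (ne_of_gt hTxbpos)]
  have hfy₀ : f y₀ = 1 := by
    rw [hy₀def, map_smul, smul_eq_mul, hfz, inv_mul_cancel₀ (ne_of_gt hTxbpos)]
  obtain ⟨s, hsip, hsy⟩ := exists_sip y₀ hy₀ f hf1 hfy₀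
  have hmem : ‖T‖ ∈ S := by
    refine ⟨xb, y₀, s, hxbnorm, hy₀, hsip, ?_, ?_⟩
    · rw [hsy]
      exact hfw
    · rw [hsy, hfz, hTxb]
  have hbdd : BddAbove S := ⟨‖T‖, fun r hr => hub r hr⟩
  exact le_antisymm (le_csSup hbdd hmem) (csSup_le ⟨_, hmem⟩ hub)
end

section
/- Let X be a reflexive real Banach space, Y a real Banach space, and T, A compact linear operators from X to Y with T ⊥_B A. Then ‖T‖ = sup{ [Tx, y] : ‖x‖ = 1, ‖y‖ = 1, [·,·] a semi-inner-product on Y compatible with the norm, [Ax, y] ≤ 0 }. -/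
set_option linter.unusedSectionVars false
set_option maxHeartbeats 1000000

open NormedSpace


section SIPBuild

attribute [local instance] Classical.propDecidable

variable {Y : Type*} [NormedAddCommGroup Y] [NormedSpace ℝ Y]

lemma ne_neg_self_of_ne_zero {u : Y} (hu : u ≠ 0) : u ≠ -u := by
  intro h
  apply hu
  have h2 : (2:ℝ) • u = 0 := by
    rw [two_smul]; nth_rewrite 2 [h]; simp
  simpa [two_ne_zero] using (smul_eq_zero.mp h2).resolve_left (by norm_num)

def antipodalSetoid (Y : Type*) [AddCommGroup Y] : Setoid Y where
  r u v := u = v ∨ u = -v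
  iseqv := by
    constructor
    · exact fun u => Or.inl rfl
    · rintro u v (rfl | rfl)
      · exact Or.inl rfl
      · exact Or.inr (neg_neg v).symm
    · rintro u v w (rfl | rfl) (rfl | rfl) <;> simp

noncomputable def antipodalRep (Y : Type*) [AddCommGroup Y] : Y → Y :=
  fun u => (Quotient.mk (antipodalSetoid Y) u).out

lemma antipodalRep_spec (Y : Type*) [AddCommGroup Y] (u : Y) :
    antipodalRep Y u = u ∨ antipodalRep Y u = -u :=
  Quotient.mk_out (s := antipodalSetoid Y) u

lemma antipodalRep_neg (Y : Type*) [AddCommGroup Y] (u : Y) :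
    antipodalRep Y (-u) = antipodalRep Y u := by
  unfold antipodalRep
  congr 1
  exact Quotient.sound (Or.inr rfl)

variable (y₀ : Y) (f : Y →L[ℝ] ℝ)

/-- choice of (almost) support functionals -/
noncomputable def suppFun : Y → (Y →L[ℝ] ℝ) :=
  fun w => Classical.choose (exists_dual_vector'' ℝ w)

lemma suppFun_norm (w : Y) : ‖suppFun w‖ ≤ 1 :=
  (Classical.choose_spec (exists_dual_vector'' ℝ w)).1

lemma suppFun_self (w : Y) : suppFun w w = ‖w‖ := by
  have := (Classical.choose_spec (exists_dual_vector'' ℝ w)).2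
  simpa [suppFun] using this

noncomputable def psiFun : Y → (Y →L[ℝ] ℝ) := fun u =>
  if u = y₀ then f else if u = -y₀ then -f
  else if antipodalRep Y u = u then suppFun (antipodalRep Y u) else -(suppFun (antipodalRep Y u))

variable (hy₀ : ‖y₀‖ = 1) (hf1 : ‖f‖ ≤ 1) (hfy : f y₀ = 1)

lemma psiFun_y₀ : psiFun y₀ f y₀ = f := if_pos rfl

include hy₀ in
lemma psiFun_neg (u : Y) (hu : u ≠ 0) : psiFun y₀ f (-u) = -psiFun y₀ f u := by
  have hy0ne : y₀ ≠ 0 := by intro h; rw [h] at hy₀; simp at hy₀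
  have hy0 : y₀ ≠ -y₀ := ne_neg_self_of_ne_zero hy0ne
  have huu : u ≠ -u := ne_neg_self_of_ne_zero hu
  unfold psiFun
  by_cases h1 : u = y₀
  · subst h1
    rw [if_pos rfl, if_neg (fun h : -u = u => huu h.symm), if_pos rfl]
  by_cases h2 : u = -y₀
  · subst h2
    rw [if_neg h1, if_pos rfl, neg_neg, if_pos rfl]
    simp
  have h1' : -u ≠ y₀ := fun h => h2 (by rw [← h]; simp)
  have h2' : -u ≠ -y₀ := fun h => h1 (by simpa using congrArg Neg.neg h)
  rw [if_neg h1, if_neg h2, if_neg h1', if_neg h2', antipodalRep_neg]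
  rcases antipodalRep_spec Y u with h | h
  · rw [if_neg (show ¬antipodalRep Y u = -u from fun hh => huu (h.symm.trans hh)), if_pos h]
  · rw [if_pos h, if_neg (show ¬antipodalRep Y u = u from fun hh => huu (hh.symm.trans h)),
      neg_neg]

include hf1 in
lemma psiFun_norm (u : Y) : ‖psiFun y₀ f u‖ ≤ 1 := by
  unfold psiFun
  split_ifs with h1 h2 h3
  · exact hf1
  · simpa using hf1
  · exact suppFun_norm _
  · simpa using suppFun_norm (antipodalRep Y u)

include hfy in
lemma psiFun_self (u : Y) (hu : ‖u‖ = 1) : psiFun y₀ f u u = 1 := by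
  have hune : u ≠ 0 := by intro h; rw [h] at hu; simp at hu
  have huu : u ≠ -u := ne_neg_self_of_ne_zero hune
  unfold psiFun
  split_ifs with h1 h2 h3
  · rw [h1]; exact hfy
  · subst h2; simp [hfy]
  · rw [h3]; rw [suppFun_self, hu]
  · rcases antipodalRep_spec Y u with h | h
    · exact absurd h h3
    · rw [h]
      have := suppFun_self (-u)
      have h2 : suppFun (-u) u = -‖u‖ := by
        have : suppFun (-u) (-u) = ‖-u‖ := suppFun_self (-u)
        simpa [norm_neg, neg_eq_iff_eq_neg] using this
      simp [h2, hu]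

end SIPBuild

section SIPBuild2

attribute [local instance] Classical.propDecidable

variable {Y : Type*} [NormedAddCommGroup Y] [NormedSpace ℝ Y]
variable (y₀ : Y) (f : Y →L[ℝ] ℝ)

noncomputable def sipG : Y → (Y →L[ℝ] ℝ) := fun v =>
  if v = 0 then 0 else ‖v‖ • psiFun y₀ f (‖v‖⁻¹ • v)

variable (hy₀ : ‖y₀‖ = 1) (hf1 : ‖f‖ ≤ 1) (hfy : f y₀ = 1)

include hy₀ in
lemma sipG_smul (a : ℝ) (v : Y) : sipG y₀ f (a • v) = a • sipG y₀ f v := by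
  by_cases hv : v = 0
  · simp [sipG, hv]
  by_cases ha : a = 0
  · simp [sipG, ha]
  have hav : a • v ≠ 0 := smul_ne_zero ha hv
  have hvn : ‖v‖ ≠ 0 := norm_ne_zero_iff.mpr hv
  unfold sipG
  rw [if_neg hav, if_neg hv]
  rcases lt_or_gt_of_ne ha with ha' | ha'
  · have hunit : ‖a • v‖⁻¹ • (a • v) = -(‖v‖⁻¹ • v) := by
      rw [norm_smul, Real.norm_eq_abs, abs_of_neg ha', smul_smul, ← neg_smul]
      congr 1
      field_simp
    rw [hunit, psiFun_neg y₀ f hy₀ _ (by simp [hvn, hv]), norm_smul, Real.norm_eq_abs,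
      abs_of_neg ha', smul_neg, ← neg_smul]
    have hsc : -(-a * ‖v‖) = a * ‖v‖ := by ring
    rw [hsc, mul_smul]
  · have hunit : ‖a • v‖⁻¹ • (a • v) = ‖v‖⁻¹ • v := by
      rw [norm_smul, Real.norm_eq_abs, abs_of_pos ha', smul_smul]
      congr 1
      field_simp
    rw [hunit, norm_smul, Real.norm_eq_abs, abs_of_pos ha', mul_smul]

include hfy in
lemma sipG_apply_self (v : Y) : sipG y₀ f v v = ‖v‖ ^ 2 := by
  by_cases hv : v = 0
  · simp [sipG, hv]
  have hvn : ‖v‖ ≠ 0 := norm_ne_zero_iff.mpr hv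
  have hunit : ‖(‖v‖⁻¹ • v : Y)‖ = 1 := norm_smul_inv_norm hv
  unfold sipG
  rw [if_neg hv]
  have key : psiFun y₀ f (‖v‖⁻¹ • v) v = ‖v‖ := by
    have h1 : psiFun y₀ f (‖v‖⁻¹ • v) (‖v‖ • (‖v‖⁻¹ • v)) = ‖v‖ := by
      rw [map_smul, smul_eq_mul, psiFun_self y₀ f hfy _ hunit, mul_one]
    rwa [smul_inv_smul₀ hvn v] at h1
  rw [ContinuousLinearMap.smul_apply, key, smul_eq_mul, sq]

include hf1 in
lemma sipG_apply_le (v w : Y) : |sipG y₀ f v w| ≤ ‖v‖ * ‖w‖ := by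
  by_cases hv : v = 0
  · simp [sipG, hv]
  unfold sipG
  rw [if_neg hv, ContinuousLinearMap.smul_apply, smul_eq_mul, abs_mul,
    abs_of_nonneg (norm_nonneg v)]
  apply mul_le_mul_of_nonneg_left _ (norm_nonneg v)
  calc |psiFun y₀ f (‖v‖⁻¹ • v) w| = ‖psiFun y₀ f (‖v‖⁻¹ • v) w‖ := rfl
    _ ≤ ‖psiFun y₀ f (‖v‖⁻¹ • v)‖ * ‖w‖ := ContinuousLinearMap.le_opNorm _ _
    _ ≤ 1 * ‖w‖ := mul_le_mul_of_nonneg_right (psiFun_norm y₀ f hf1 _) (norm_nonneg w)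
    _ = ‖w‖ := one_mul _

include hy₀ in
lemma sipG_y₀ : sipG y₀ f y₀ = f := by
  have h0 : y₀ ≠ 0 := by intro h; rw [h] at hy₀; simp at hy₀
  unfold sipG
  rw [if_neg h0, hy₀]
  simp [psiFun_y₀]

include hy₀ hf1 hfy in
lemma exists_sip_s10 : ∃ s : Y → Y → ℝ, IsSIP s ∧ ∀ u : Y, s u y₀ = f u := by
  refine ⟨fun u v => sipG y₀ f v u, ⟨?_, ?_, ?_, ?_, ?_⟩,
    fun u => by dsimp only; rw [sipG_y₀ y₀ f hy₀]⟩
  · intro a b u v w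
    dsimp only
    simp [smul_eq_mul]
  · intro u hu
    dsimp only
    rw [sipG_apply_self y₀ f hfy]
    have := norm_pos_iff.mpr hu
    positivity
  · intro u v
    dsimp only
    have h1 : |sipG y₀ f v u| ≤ ‖v‖ * ‖u‖ := sipG_apply_le y₀ f hf1 v u
    rw [sipG_apply_self y₀ f hfy, sipG_apply_self y₀ f hfy]
    calc (sipG y₀ f v u) ^ 2 = |sipG y₀ f v u| ^ 2 := (sq_abs _).symm
      _ ≤ (‖v‖ * ‖u‖) ^ 2 := by
          apply pow_le_pow_left₀ (abs_nonneg _) h1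
      _ = ‖u‖ ^ 2 * ‖v‖ ^ 2 := by ring
  · intro a u v
    dsimp only
    rw [sipG_smul y₀ f hy₀]
    simp
  · intro u
    exact sipG_apply_self y₀ f hfy u

end SIPBuild2

section Weak

open Metric NormedSpace

variable {X : Type*} [NormedAddCommGroup X] [NormedSpace ℝ X]

theorem weakSpace_t2 [CompleteSpace X] : T2Space (WeakSpace ℝ X) := by
  refine ⟨fun x y hxy => ?_⟩
  obtain ⟨g, hg⟩ : ∃ g : StrongDual ℝ X,
      (topDualPairing ℝ X).flip x g ≠ (topDualPairing ℝ X).flip y g := by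
    by_contra h
    push_neg at h
    exact hxy ((NormedSpace.eq_iff_forall_dual_eq (𝕜 := ℝ)
      (E := X) (x := (toWeakSpace ℝ X).symm x) (y := (toWeakSpace ℝ X).symm y)).mpr h)
  exact separated_by_continuous (WeakBilin.eval_continuous ((topDualPairing ℝ X).flip) g) hg

theorem isCompact_image_closedBall_weakSpace [CompleteSpace X]
    (hrefl : Function.Surjective (inclusionInDoubleDual ℝ X)) (r : ℝ) :
    IsCompact (toWeakSpace ℝ X '' Metric.closedBall (0 : X) r) := by
  set J := inclusionInDoubleDualLi ℝ (E := X) with hJ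
  have hJsurj : Function.Surjective (J : X → StrongDual ℝ (StrongDual ℝ X)) := hrefl
  have hbij : Function.Bijective (J : X → StrongDual ℝ (StrongDual ℝ X)) := ⟨J.injective, hJsurj⟩
  set e := Equiv.ofBijective _ hbij with he
  set F : WeakDual ℝ (StrongDual ℝ X) → WeakSpace ℝ X :=
    fun g => toWeakSpace ℝ X (e.symm (WeakDual.toStrongDual g)) with hF
  have hFcont : Continuous F := by
    apply WeakBilin.continuous_of_continuous_eval
    intro l
    have key : (fun g : WeakDual ℝ (StrongDual ℝ X) => (topDualPairing ℝ X).flip (F g) l)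
        = fun g : WeakDual ℝ (StrongDual ℝ X) => g l := by
      funext g
      show l (e.symm (WeakDual.toStrongDual g)) = g l
      have h1 : (J (e.symm (WeakDual.toStrongDual g)) : StrongDual ℝ (StrongDual ℝ X)) l
          = l (e.symm (WeakDual.toStrongDual g)) := rfl
      rw [← h1]
      have h2 : (J (e.symm (WeakDual.toStrongDual g)) : StrongDual ℝ (StrongDual ℝ X))
          = WeakDual.toStrongDual g := e.apply_symm_apply _
      rw [h2]
      rfl
    rw [key]
    exact WeakDual.eval_continuous l
  have hcball : IsCompact
      (WeakDual.toStrongDual ⁻¹' closedBall (0 : StrongDual ℝ (StrongDual ℝ X)) r) :=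
    WeakDual.isCompact_closedBall (𝕜 := ℝ) (E := StrongDual ℝ X) 0 r
  have himage : F '' (WeakDual.toStrongDual ⁻¹' closedBall (0 : StrongDual ℝ (StrongDual ℝ X)) r)
      = toWeakSpace ℝ X '' Metric.closedBall (0 : X) r := by
    ext z
    constructor
    · rintro ⟨g, hg, rfl⟩
      refine ⟨e.symm (WeakDual.toStrongDual g), ?_, rfl⟩
      simp only [Set.mem_preimage, mem_closedBall_zero_iff] at hg ⊢
      have : ‖(J (e.symm (WeakDual.toStrongDual g)) : StrongDual ℝ (StrongDual ℝ X))‖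
          = ‖(e.symm (WeakDual.toStrongDual g) : X)‖ := J.norm_map _
      rw [← this]
      have h2 : (J (e.symm (WeakDual.toStrongDual g)) : StrongDual ℝ (StrongDual ℝ X))
          = WeakDual.toStrongDual g := e.apply_symm_apply _
      rw [h2]
      exact (mem_closedBall_zero_iff (E := StrongDual ℝ (StrongDual ℝ X))).mp hg
    · rintro ⟨x, hx, rfl⟩
      refine ⟨WeakDual.toStrongDual.symm (J x), ?_, ?_⟩
      · simp only [Set.mem_preimage, mem_closedBall_zero_iff] at hx ⊢
        refine (mem_closedBall_zero_iff (E := StrongDual ℝ (StrongDual ℝ X))).mpr ?_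
        rw [LinearEquiv.apply_symm_apply, J.norm_map]
        exact hx
      · show toWeakSpace ℝ X (e.symm (WeakDual.toStrongDual (WeakDual.toStrongDual.symm (J x)))) = _
        rw [LinearEquiv.apply_symm_apply]
        have : e.symm (J x) = x := e.symm_apply_apply x
        rw [this]
  exact himage ▸ hcball.image hFcont

end Weak

section HB

open NormedSpace Pointwise

variable {Y : Type*} [NormedAddCommGroup Y] [NormedSpace ℝ Y]

theorem exists_support_nonpos (u v : Y) (hu : u ≠ 0)
    (hP : ∀ s : ℝ, 0 ≤ s → ‖u‖ ≤ ‖u - s • v‖) :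
    ∃ f : Y →L[ℝ] ℝ, ‖f‖ ≤ 1 ∧ f u = ‖u‖ ∧ f v ≤ 0 := by
  set S : Y → Set ℝ := fun w => {r : ℝ | ∃ s : ℝ, 0 ≤ s ∧ r = ‖w - s • v‖} with hS
  set p : Y → ℝ := fun w => sInf (S w) with hp
  have hne : ∀ w : Y, (S w).Nonempty := fun w => ⟨‖w‖, 0, le_refl 0, by simp⟩
  have hbdd : ∀ w : Y, BddBelow (S w) := fun w => ⟨0, by rintro r ⟨s, hs, rfl⟩; positivity⟩
  have hp_nonneg : ∀ w, 0 ≤ p w := fun w =>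
    le_csInf (hne w) (by rintro r ⟨s, hs, rfl⟩; positivity)
  have hp_le : ∀ (w : Y) (s : ℝ), 0 ≤ s → p w ≤ ‖w - s • v‖ := fun w s hs =>
    csInf_le (hbdd w) ⟨s, hs, rfl⟩
  have hp_le_norm : ∀ w : Y, p w ≤ ‖w‖ := fun w => by simpa using hp_le w 0 le_rfl
  have h_hom : ∀ c : ℝ, 0 < c → ∀ w, p (c • w) = c * p w := by
    intro c hc w
    have hset : S (c • w) = c • S w := by
      ext r
      constructor
      · rintro ⟨s, hs, rfl⟩
        refine ⟨‖w - (s / c) • v‖, ⟨s / c, by positivity, rfl⟩, ?_⟩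
        show c • ‖w - (s / c) • v‖ = ‖c • w - s • v‖
        have hvec : c • w - s • v = c • (w - (s / c) • v) := by
          rw [smul_sub, smul_smul]
          congr 2
          field_simp
        rw [hvec, norm_smul, Real.norm_eq_abs, abs_of_pos hc, smul_eq_mul]
      · rintro ⟨r', ⟨s, hs, rfl⟩, rfl⟩
        refine ⟨c * s, by positivity, ?_⟩
        show c • ‖w - s • v‖ = ‖c • w - (c * s) • v‖
        have hvec : c • w - (c * s) • v = c • (w - s • v) := by
          rw [smul_sub, smul_smul]
        rw [hvec, norm_smul, Real.norm_eq_abs, abs_of_pos hc, smul_eq_mul]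
    show sInf (S (c • w)) = c * sInf (S w)
    rw [hset, Real.sInf_smul_of_nonneg hc.le, smul_eq_mul]
  have h_add : ∀ w₁ w₂ : Y, p (w₁ + w₂) ≤ p w₁ + p w₂ := by
    intro w₁ w₂
    have key : ∀ r₁ ∈ S w₁, ∀ r₂ ∈ S w₂, p (w₁ + w₂) ≤ r₁ + r₂ := by
      rintro r₁ ⟨s₁, hs₁, rfl⟩ r₂ ⟨s₂, hs₂, rfl⟩
      have hsum : (w₁ + w₂) - (s₁ + s₂) • v = (w₁ - s₁ • v) + (w₂ - s₂ • v) := by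
        rw [add_smul]; abel
      calc p (w₁ + w₂) ≤ ‖(w₁ + w₂) - (s₁ + s₂) • v‖ := hp_le _ _ (by positivity)
        _ ≤ ‖w₁ - s₁ • v‖ + ‖w₂ - s₂ • v‖ := by rw [hsum]; exact norm_add_le _ _
    have h1 : ∀ r₁ ∈ S w₁, p (w₁ + w₂) - r₁ ≤ p w₂ := fun r₁ h₁ =>
      le_csInf (hne w₂) (fun r₂ h₂ => by linarith [key r₁ h₁ r₂ h₂])
    have h2 : p (w₁ + w₂) - p w₂ ≤ p w₁ :=
      le_csInf (hne w₁) (fun r₁ h₁ => by linarith [h1 r₁ h₁])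
    linarith
  have hpu : p u = ‖u‖ := by
    refine le_antisymm (hp_le_norm u) (le_csInf (hne u) ?_)
    rintro r ⟨s, hs, rfl⟩
    exact hP s hs
  have hspan : ∀ z : (LinearPMap.mkSpanSingleton (K := ℝ) (L := ℝ) (σ := RingHom.id ℝ) u (‖u‖ : ℝ) hu).domain,
      (LinearPMap.mkSpanSingleton (K := ℝ) (L := ℝ) (σ := RingHom.id ℝ) u (‖u‖ : ℝ) hu) z ≤ p z := by
    rintro ⟨z, hz⟩
    obtain ⟨c, rfl⟩ := Submodule.mem_span_singleton.mp hz
    rw [LinearPMap.mkSpanSingleton'_apply]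
    rcases lt_trichotomy c 0 with hc | hc | hc
    · have : c • ‖u‖ ≤ 0 := by
        rw [smul_eq_mul]
        exact mul_nonpos_of_nonpos_of_nonneg hc.le (norm_nonneg u)
      exact this.trans (hp_nonneg _)
    · subst hc
      simpa using hp_nonneg (0 : Y)
    · rw [h_hom c hc u, hpu, smul_eq_mul, RingHom.id_apply]
  obtain ⟨g, hg_eq, hg_le⟩ :=
    exists_extension_of_le_sublinear (LinearPMap.mkSpanSingleton (K := ℝ) (L := ℝ) (σ := RingHom.id ℝ) u (‖u‖ : ℝ) hu) p h_hom h_add hspan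
  have habs : ∀ w : Y, |g w| ≤ ‖w‖ := by
    intro w
    rw [abs_le]
    constructor
    · have := (hg_le (-w)).trans (hp_le_norm (-w))
      rw [map_neg, norm_neg] at this
      linarith
    · exact (hg_le w).trans (hp_le_norm w)
  refine ⟨g.mkContinuous 1 (fun w => by rw [one_mul, Real.norm_eq_abs]; exact habs w), ?_, ?_, ?_⟩
  · exact g.mkContinuous_norm_le zero_le_one _
  · show g u = ‖u‖
    have := hg_eq ⟨u, Submodule.mem_span_singleton_self u⟩
    rw [LinearPMap.mkSpanSingleton_apply] at this
    exact this
  · show g v ≤ 0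
    have h1 : p v ≤ 0 := by simpa using hp_le v 1 zero_le_one
    exact (hg_le v).trans h1

end HB

section Key

open Metric Filter Topology NormedSpace

lemma MapClusterPt.mem_of_closed {α β : Type*} [TopologicalSpace β] {F : Filter α} {u : α → β}
    {q : β} (h : MapClusterPt q F u) {s : Set β} (hs : IsClosed s)
    (hev : ∀ᶠ n in F, u n ∈ s) : q ∈ s := by
  have h2 : Filter.map u F ≤ Filter.principal s := le_principal_iff.mpr (mem_map.mpr hev)
  have h3 := h.clusterPt.mono h2
  rwa [← hs.closure_eq, mem_closure_iff_clusterPt]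

variable {X Y : Type*} [NormedAddCommGroup X] [NormedSpace ℝ X] [CompleteSpace X]
  [NormedAddCommGroup Y] [NormedSpace ℝ Y] [CompleteSpace Y]

theorem exists_norming_point
    (hrefl : Function.Surjective (inclusionInDoubleDual ℝ X))
    (T A : X →L[ℝ] Y) (hT : IsCompactOperator T) (hA : IsCompactOperator A)
    (horth : ∀ l : ℝ, ‖T + l • A‖ ≥ ‖T‖) (hT0 : T ≠ 0) :
    ∃ x : X, ‖x‖ = 1 ∧ ‖T x‖ = ‖T‖ ∧ ∀ l : ℝ, l ≤ 0 → ‖T‖ ≤ ‖T x + l • A x‖ := by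
  haveI : T2Space (WeakSpace ℝ Y) := weakSpace_t2
  set a : ℕ → ℝ := fun n => 1 / (n + 1) with ha
  have ha_pos : ∀ n, 0 < a n := fun n => by positivity
  have hx_ex : ∀ n : ℕ, ∃ x : X,
      ‖x‖ < 1 ∧ ‖T + (-(a n)) • A‖ - (a n) ^ 2 < ‖(T + (-(a n)) • A) x‖ := by
    intro n
    apply ContinuousLinearMap.exists_lt_apply_of_lt_opNorm
    have := ha_pos n
    nlinarith
  choose x hx1 hx2 using hx_ex
  -- compact images
  have hT' : IsCompactOperator ((T : X →ₗ[ℝ] Y) : X → Y) := hT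
  have hA' : IsCompactOperator ((A : X →ₗ[ℝ] Y) : X → Y) := hA
  obtain ⟨KT, hKTc, hKT⟩ := hT'.image_closedBall_subset_compact (𝕜₁ := ℝ) 1
  obtain ⟨KA, hKAc, hKA⟩ := hA'.image_closedBall_subset_compact (𝕜₁ := ℝ) 1
  -- cluster point in the product
  set Φ : ℕ → WeakSpace ℝ X × Y × Y :=
    fun n => (toWeakSpace ℝ X (x n), T (x n), A (x n)) with hΦ
  have hball := isCompact_image_closedBall_weakSpace hrefl 1
  have hC : IsCompact ((toWeakSpace ℝ X '' Metric.closedBall (0 : X) 1) ×ˢ (KT ×ˢ KA)) :=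
    hball.prod (hKTc.prod hKAc)
  have hxball : ∀ n, x n ∈ Metric.closedBall (0 : X) 1 := fun n =>
    mem_closedBall_zero_iff.mpr (hx1 n).le
  have hmem : ∀ n, Φ n ∈ (toWeakSpace ℝ X '' Metric.closedBall (0 : X) 1) ×ˢ (KT ×ˢ KA) := by
    intro n
    refine ⟨⟨x n, hxball n, rfl⟩, ?_, ?_⟩
    · exact hKT ⟨x n, hxball n, rfl⟩
    · exact hKA ⟨x n, hxball n, rfl⟩
  have hle : Filter.map Φ atTop ≤ Filter.principal
      ((toWeakSpace ℝ X '' Metric.closedBall (0 : X) 1) ×ˢ (KT ×ˢ KA)) :=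
    le_principal_iff.mpr (mem_map.mpr (Eventually.of_forall hmem))
  obtain ⟨p, hpC, hp⟩ := hC.exists_clusterPt hle
  have hmcp : MapClusterPt p atTop Φ := hp
  obtain ⟨x₀, hx₀ball, hx₀w⟩ := hpC.1
  -- identify limits of T (x n) and A (x n)
  have hTu : T x₀ = p.2.1 := by
    set g₁ : WeakSpace ℝ X × Y × Y → WeakSpace ℝ Y × WeakSpace ℝ Y :=
      fun q => (WeakSpace.map T q.1, toWeakSpaceCLM ℝ Y q.2.1) with hg₁def
    have hg₁ : Continuous g₁ :=
      ((WeakSpace.map T).continuous.comp continuous_fst).prodMk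
        ((toWeakSpaceCLM ℝ Y).continuous.comp (continuous_fst.comp continuous_snd))
    have hclu : MapClusterPt (g₁ p) atTop (g₁ ∘ Φ) := hmcp.continuousAt_comp hg₁.continuousAt
    have hdiag : (g₁ p) ∈ {q : WeakSpace ℝ Y × WeakSpace ℝ Y | q.1 = q.2} := by
      refine hclu.mem_of_closed (isClosed_eq continuous_fst continuous_snd) ?_
      refine Eventually.of_forall fun n => ?_
      show WeakSpace.map T (toWeakSpace ℝ X (x n)) = toWeakSpaceCLM ℝ Y (T (x n))
      rfl
    have heq : WeakSpace.map T p.1 = toWeakSpaceCLM ℝ Y p.2.1 := hdiag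
    have heq2 : WeakSpace.map T (toWeakSpace ℝ X x₀) = toWeakSpaceCLM ℝ Y p.2.1 := by
      rw [hx₀w]; exact heq
    exact (toWeakSpace ℝ Y).injective heq2
  have hAv : A x₀ = p.2.2 := by
    set g₂ : WeakSpace ℝ X × Y × Y → WeakSpace ℝ Y × WeakSpace ℝ Y :=
      fun q => (WeakSpace.map A q.1, toWeakSpaceCLM ℝ Y q.2.2) with hg₂def
    have hg₂ : Continuous g₂ :=
      ((WeakSpace.map A).continuous.comp continuous_fst).prodMk
        ((toWeakSpaceCLM ℝ Y).continuous.comp (continuous_snd.comp continuous_snd))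
    have hclu : MapClusterPt (g₂ p) atTop (g₂ ∘ Φ) := hmcp.continuousAt_comp hg₂.continuousAt
    have hdiag : (g₂ p) ∈ {q : WeakSpace ℝ Y × WeakSpace ℝ Y | q.1 = q.2} := by
      refine hclu.mem_of_closed (isClosed_eq continuous_fst continuous_snd) ?_
      refine Eventually.of_forall fun n => ?_
      show WeakSpace.map A (toWeakSpace ℝ X (x n)) = toWeakSpaceCLM ℝ Y (A (x n))
      rfl
    have heq : WeakSpace.map A p.1 = toWeakSpaceCLM ℝ Y p.2.2 := hdiag
    have heq2 : WeakSpace.map A (toWeakSpace ℝ X x₀) = toWeakSpaceCLM ℝ Y p.2.2 := by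
      rw [hx₀w]; exact heq
    exact (toWeakSpace ℝ Y).injective heq2
  -- per-n convexity estimate
  have est : ∀ (n : ℕ) (l : ℝ), l ≤ -(a n) →
      ‖T‖ - (-l) * a n ≤ ‖T (x n) + l • A (x n)‖ := by
    intro n l hl
    have han := ha_pos n
    set u0 := T (x n) with hu0def
    set v0 := A (x n) with hv0def
    have hln : l < 0 := lt_of_le_of_lt hl (by linarith)
    set t := (-(a n)) / l with htdef
    have ht0 : 0 < t := div_pos_of_neg_of_neg (by linarith) hln
    have htl : t * l = -(a n) := div_mul_cancel₀ _ (ne_of_lt hln)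
    have ht1 : t ≤ 1 := by nlinarith
    have hid : u0 + (-(a n)) • v0 = t • (u0 + l • v0) + (1 - t) • u0 := by
      rw [smul_add, smul_smul, htl, sub_smul, one_smul]
      abel
    have h1 : ‖T‖ - (a n) ^ 2 < ‖u0 + (-(a n)) • v0‖ := by
      have h2 := hx2 n
      have h3 : (T + (-(a n)) • A) (x n) = u0 + (-(a n)) • v0 := by
        simp [ContinuousLinearMap.add_apply, ContinuousLinearMap.smul_apply, hu0def, hv0def]
      rw [h3] at h2
      have h4 := horth (-(a n))
      linarith
    have hu0T : ‖u0‖ ≤ ‖T‖ := by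
      calc ‖u0‖ ≤ ‖T‖ * ‖x n‖ := T.le_opNorm _
        _ ≤ ‖T‖ * 1 := mul_le_mul_of_nonneg_left (hx1 n).le (norm_nonneg _)
        _ = ‖T‖ := mul_one _
    have hnorm : ‖u0 + (-(a n)) • v0‖ ≤ t * ‖u0 + l • v0‖ + (1 - t) * ‖u0‖ := by
      rw [hid]
      calc ‖t • (u0 + l • v0) + (1 - t) • u0‖
          ≤ ‖t • (u0 + l • v0)‖ + ‖(1 - t) • u0‖ := norm_add_le _ _
        _ = t * ‖u0 + l • v0‖ + (1 - t) * ‖u0‖ := by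
            rw [norm_smul, norm_smul, Real.norm_eq_abs, Real.norm_eq_abs, abs_of_pos ht0,
              abs_of_nonneg (by linarith : (0:ℝ) ≤ 1 - t)]
    have he : (a n) ^ 2 = t * ((-l) * a n) := by
      have h4 : t * (-l) = a n := by linarith [htl]
      calc (a n) ^ 2 = (a n) * (a n) := sq (a n) ▸ rfl
        _ = (t * (-l)) * a n := by rw [h4]
        _ = t * ((-l) * a n) := by ring
    have hkey : t * (‖T‖ - (-l) * a n) ≤ t * ‖u0 + l • v0‖ := by
      nlinarith [mul_le_mul_of_nonneg_left hu0T (by linarith : (0:ℝ) ≤ 1 - t)]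
    exact le_of_mul_le_mul_left hkey ht0
  -- limit bound for l < 0
  have hlim : Tendsto a atTop (nhds 0) := tendsto_one_div_add_atTop_nhds_zero_nat
  have hlbound : ∀ l : ℝ, l < 0 → ‖T‖ ≤ ‖T x₀ + l • A x₀‖ := by
    intro l hl
    refine le_of_forall_pos_le_add ?_
    intro ε hε
    set ρ : WeakSpace ℝ X × Y × Y → ℝ := fun q => ‖q.2.1 + l • q.2.2‖ with hρdef
    have hρ : Continuous ρ :=
      ((continuous_fst.comp continuous_snd).add
        ((continuous_snd.comp continuous_snd).const_smul l)).norm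
    have hclu : MapClusterPt (ρ p) atTop (ρ ∘ Φ) := hmcp.continuousAt_comp hρ.continuousAt
    have hev : ∀ᶠ n in atTop, (ρ ∘ Φ) n ∈ {r : ℝ | ‖T‖ - ε ≤ r} := by
      have h1 : ∀ᶠ n in atTop, a n < -l := hlim.eventually (gt_mem_nhds (by linarith))
      have h2 : ∀ᶠ n in atTop, a n < ε / (-l) :=
        hlim.eventually (gt_mem_nhds (div_pos hε (by linarith)))
      filter_upwards [h1, h2] with n hn1 hn2
      have h3 := est n l (by linarith)
      have h4 : (-l) * a n ≤ ε := by
        have h5 : a n * (-l) ≤ ε := (le_div_iff₀ (by linarith : (0:ℝ) < -l)).mp hn2.le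
        calc (-l) * a n = a n * (-l) := mul_comm _ _
          _ ≤ ε := h5
      show ‖T‖ - ε ≤ ‖T (x n) + l • A (x n)‖
      linarith
    have hmemc : ρ p ∈ {r : ℝ | ‖T‖ - ε ≤ r} :=
      hclu.mem_of_closed (isClosed_le continuous_const continuous_id) hev
    have heq : ρ p = ‖T x₀ + l • A x₀‖ := by rw [hρdef]; simp only; rw [← hTu, ← hAv]
    have hmemc' : ‖T‖ - ε ≤ ρ p := hmemc
    rw [heq] at hmemc'
    linarith
  -- norm attainment
  have hTx_ge : ‖T‖ ≤ ‖T x₀‖ := by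
    refine le_of_forall_pos_le_add ?_
    intro ε hε
    have hq : 0 < ε / (‖A x₀‖ + 1) := by positivity
    have h1 := hlbound (-(ε / (‖A x₀‖ + 1))) (by linarith)
    have h2 : ‖T x₀ + (-(ε / (‖A x₀‖ + 1))) • A x₀‖ ≤ ‖T x₀‖ + ε := by
      calc ‖T x₀ + (-(ε / (‖A x₀‖ + 1))) • A x₀‖
          ≤ ‖T x₀‖ + ‖(-(ε / (‖A x₀‖ + 1))) • A x₀‖ := norm_add_le _ _
        _ = ‖T x₀‖ + |(-(ε / (‖A x₀‖ + 1)))| * ‖A x₀‖ := by rw [norm_smul, Real.norm_eq_abs]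
        _ ≤ ‖T x₀‖ + ε := by
            have h3 : |(-(ε / (‖A x₀‖ + 1)))| = ε / (‖A x₀‖ + 1) := by
              rw [abs_neg, abs_of_pos hq]
            rw [h3]
            have h4 : ε / (‖A x₀‖ + 1) * ‖A x₀‖ ≤ ε := by
              rw [div_mul_eq_mul_div, div_le_iff₀ (by positivity)]
              nlinarith [norm_nonneg (A x₀)]
            linarith
    linarith
  have hx₀le : ‖x₀‖ ≤ 1 := mem_closedBall_zero_iff.mp hx₀ball
  have hTx_le : ‖T x₀‖ ≤ ‖T‖ := by
    calc ‖T x₀‖ ≤ ‖T‖ * ‖x₀‖ := T.le_opNorm _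
      _ ≤ ‖T‖ * 1 := mul_le_mul_of_nonneg_left hx₀le (norm_nonneg _)
      _ = ‖T‖ := mul_one _
  have hTx : ‖T x₀‖ = ‖T‖ := le_antisymm hTx_le hTx_ge
  have hTpos : 0 < ‖T‖ := by
    rcases (norm_nonneg T).lt_or_eq with h | h
    · exact h
    · exact absurd (by simpa using h.symm) hT0
  have hx₀ : ‖x₀‖ = 1 := by
    refine le_antisymm hx₀le ?_
    by_contra hcon
    push_neg at hcon
    have : ‖T x₀‖ < ‖T‖ := by
      calc ‖T x₀‖ ≤ ‖T‖ * ‖x₀‖ := T.le_opNorm _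
        _ < ‖T‖ * 1 := by exact mul_lt_mul_of_pos_left hcon hTpos
        _ = ‖T‖ := mul_one _
    rw [hTx] at this
    exact lt_irrefl _ this
  refine ⟨x₀, hx₀, hTx, ?_⟩
  intro l hl
  rcases hl.lt_or_eq with hl' | hl'
  · exact hlbound l hl'
  · rw [hl']
    simp only [zero_smul, add_zero]
    exact hTx_ge

end Key

section Main

open NormedSpace

lemma csSup_eq_of_mem_of_ub {S : Set ℝ} {c : ℝ} (hmem : c ∈ S) (hub : ∀ r ∈ S, r ≤ c) :
    c = sSup S :=
  le_antisymm (le_csSup ⟨c, fun r hr => hub r hr⟩ hmem) (csSup_le ⟨c, hmem⟩ hub)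

variable {X Y : Type*} [NormedAddCommGroup X] [NormedSpace ℝ X] [CompleteSpace X]
  [NormedAddCommGroup Y] [NormedSpace ℝ Y] [CompleteSpace Y]

lemma mem_sip_set (T A : X →L[ℝ] Y) (x₀ : X) (hx₀ : ‖x₀‖ = 1) (y₀ : Y) (hy₀ : ‖y₀‖ = 1)
    (f : Y →L[ℝ] ℝ) (hf1 : ‖f‖ ≤ 1) (hfy : f y₀ = 1) (hfA : f (A x₀) ≤ 0) :
    f (T x₀) ∈ {r : ℝ | ∃ (x : X) (y : Y) (s : Y → Y → ℝ),
      ‖x‖ = 1 ∧ ‖y‖ = 1 ∧ IsSIP s ∧ s (A x) y ≤ 0 ∧ r = s (T x) y} := by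
  obtain ⟨s, hs, hsy⟩ := exists_sip_s10 y₀ f hy₀ hf1 hfy
  exact ⟨x₀, y₀, s, hx₀, hy₀, hs, by rw [hsy]; exact hfA, (hsy _).symm⟩

lemma sip_set_bound (T A : X →L[ℝ] Y) {r : ℝ}
    (hr : r ∈ {r : ℝ | ∃ (x : X) (y : Y) (s : Y → Y → ℝ),
      ‖x‖ = 1 ∧ ‖y‖ = 1 ∧ IsSIP s ∧ s (A x) y ≤ 0 ∧ r = s (T x) y}) : r ≤ ‖T‖ := by
  obtain ⟨x, y, s, hx, hy, ⟨h1, h2, h3, h4, h5⟩, hA, rfl⟩ := hr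
  have hcs := h3 (T x) y
  rw [h5, h5, hy] at hcs
  have hTx : ‖T x‖ ≤ ‖T‖ := by
    calc ‖T x‖ ≤ ‖T‖ * ‖x‖ := T.le_opNorm _
      _ = ‖T‖ := by rw [hx, mul_one]
  nlinarith [norm_nonneg (T x), norm_nonneg T, hcs, hTx]

theorem norm_eq_sup_sip_nonpos'
    (hrefl : Function.Surjective (NormedSpace.inclusionInDoubleDual ℝ X))
    (T A : X →L[ℝ] Y) (hT : IsCompactOperator T) (hA : IsCompactOperator A)
    (horth : ∀ l : ℝ, ‖T + l • A‖ ≥ ‖T‖) :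
    ‖T‖ = sSup {r : ℝ | ∃ (x : X) (y : Y) (s : Y → Y → ℝ),
      ‖x‖ = 1 ∧ ‖y‖ = 1 ∧ IsSIP s ∧ s (A x) y ≤ 0 ∧ r = s (T x) y} := by
  by_cases hT0 : T = 0
  · subst hT0
    by_cases hx : ∃ x : X, ‖x‖ = 1
    · obtain ⟨x₀, hx₀⟩ := hx
      by_cases hv : A x₀ = 0
      · by_cases hy : ∃ y : Y, ‖y‖ = 1
        · obtain ⟨y₀, hy₀⟩ := hy
          have hy₀ne : y₀ ≠ 0 := by intro h; rw [h] at hy₀; simp at hy₀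
          obtain ⟨f, hf1, hfy⟩ := exists_dual_vector ℝ y₀ (norm_ne_zero_iff.mpr hy₀ne)
          have hfy1 : f y₀ = 1 := by rw [hfy, hy₀]; norm_num
          have hmem := mem_sip_set 0 A x₀ hx₀ y₀ hy₀ f hf1.le hfy1 (by rw [hv]; simp)
          have hmem0 : ‖(0 : X →L[ℝ] Y)‖ ∈ {r : ℝ | ∃ (x : X) (y : Y) (s : Y → Y → ℝ),
              ‖x‖ = 1 ∧ ‖y‖ = 1 ∧ IsSIP s ∧ s (A x) y ≤ 0 ∧ r = s ((0 : X →L[ℝ] Y) x) y} := by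
            simpa using hmem
          exact csSup_eq_of_mem_of_ub hmem0 (fun r hr => sip_set_bound 0 A hr)
        · have hempty : {r : ℝ | ∃ (x : X) (y : Y) (s : Y → Y → ℝ),
              ‖x‖ = 1 ∧ ‖y‖ = 1 ∧ IsSIP s ∧ s ((A : X →L[ℝ] Y) x) y ≤ 0 ∧
                r = s ((0 : X →L[ℝ] Y) x) y} = ∅ := by
            ext r
            simp only [Set.mem_setOf_eq, Set.mem_empty_iff_false, iff_false]
            rintro ⟨x, y, s, hx1, hy1, _⟩
            exact hy ⟨y, hy1⟩
          rw [hempty, Real.sSup_empty, norm_zero]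
      · set y₀ : Y := -(‖A x₀‖⁻¹ • A x₀) with hy₀def
        have hy₀ : ‖y₀‖ = 1 := by
          rw [hy₀def, norm_neg]
          exact norm_smul_inv_norm hv
        have hy₀ne : y₀ ≠ 0 := by intro h; rw [h] at hy₀; simp at hy₀
        obtain ⟨f, hf1, hfy⟩ := exists_dual_vector ℝ y₀ (norm_ne_zero_iff.mpr hy₀ne)
        have hfy1 : f y₀ = 1 := by rw [hfy, hy₀]; norm_num
        have hAy : A x₀ = (-‖A x₀‖) • y₀ := by
          rw [hy₀def, smul_neg, neg_smul, neg_neg, smul_smul,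
            mul_inv_cancel₀ (norm_ne_zero_iff.mpr hv), one_smul]
        have hfA : f (A x₀) ≤ 0 := by
          rw [hAy, map_smul, smul_eq_mul, hfy1, mul_one, neg_nonpos]
          exact norm_nonneg _
        have hmem := mem_sip_set 0 A x₀ hx₀ y₀ hy₀ f hf1.le hfy1 hfA
        have hmem0 : ‖(0 : X →L[ℝ] Y)‖ ∈ {r : ℝ | ∃ (x : X) (y : Y) (s : Y → Y → ℝ),
            ‖x‖ = 1 ∧ ‖y‖ = 1 ∧ IsSIP s ∧ s (A x) y ≤ 0 ∧ r = s ((0 : X →L[ℝ] Y) x) y} := by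
          simpa using hmem
        exact csSup_eq_of_mem_of_ub hmem0 (fun r hr => sip_set_bound 0 A hr)
    · have hempty : {r : ℝ | ∃ (x : X) (y : Y) (s : Y → Y → ℝ),
          ‖x‖ = 1 ∧ ‖y‖ = 1 ∧ IsSIP s ∧ s ((A : X →L[ℝ] Y) x) y ≤ 0 ∧
            r = s ((0 : X →L[ℝ] Y) x) y} = ∅ := by
        ext r
        simp only [Set.mem_setOf_eq, Set.mem_empty_iff_false, iff_false]
        rintro ⟨x, y, s, hx1, _⟩
        exact hx ⟨x, hx1⟩
      rw [hempty, Real.sSup_empty, norm_zero]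
  · obtain ⟨x₀, hx₀, hTx₀, hl⟩ := exists_norming_point hrefl T A hT hA horth hT0
    have hTnorm : ‖T‖ ≠ 0 := fun h => hT0 ((ContinuousLinearMap.opNorm_zero_iff T).mp h)
    have hu0 : T x₀ ≠ 0 := by
      rw [← norm_ne_zero_iff, hTx₀]
      exact hTnorm
    have hP : ∀ s : ℝ, 0 ≤ s → ‖T x₀‖ ≤ ‖T x₀ - s • A x₀‖ := by
      intro s hs
      have h1 := hl (-s) (by linarith)
      rw [neg_smul, ← sub_eq_add_neg] at h1
      rw [hTx₀]
      exact h1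
    obtain ⟨f, hf1, hfu, hfv⟩ := exists_support_nonpos (T x₀) (A x₀) hu0 hP
    set y₀ : Y := ‖T x₀‖⁻¹ • T x₀ with hy₀def
    have hy₀ : ‖y₀‖ = 1 := norm_smul_inv_norm hu0
    have hfy1 : f y₀ = 1 := by
      rw [hy₀def, map_smul, smul_eq_mul, hfu, inv_mul_cancel₀ (norm_ne_zero_iff.mpr hu0)]
    have hval : f (T x₀) = ‖T‖ := by rw [hfu, hTx₀]
    have hmemT := mem_sip_set T A x₀ hx₀ y₀ hy₀ f hf1 hfy1 hfv
    rw [hval] at hmemT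
    exact csSup_eq_of_mem_of_ub hmemT (fun r hr => sip_set_bound T A hr)

end Main


theorem norm_eq_sup_sip_nonpos
    {X Y : Type*} [NormedAddCommGroup X] [NormedSpace ℝ X] [CompleteSpace X]
    [NormedAddCommGroup Y] [NormedSpace ℝ Y] [CompleteSpace Y]
    (hrefl : Function.Surjective (NormedSpace.inclusionInDoubleDual ℝ X))
    (T A : X →L[ℝ] Y) (hT : IsCompactOperator T) (hA : IsCompactOperator A)
    (horth : ∀ l : ℝ, ‖T + l • A‖ ≥ ‖T‖) :
    ‖T‖ = sSup {r : ℝ | ∃ (x : X) (y : Y) (s : Y → Y → ℝ),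
      ‖x‖ = 1 ∧ ‖y‖ = 1 ∧ IsSIP s ∧ s (A x) y ≤ 0 ∧ r = s (T x) y} :=
  norm_eq_sup_sip_nonpos' hrefl T A hT hA horth
end

section
/- Let X be a real normed linear space whose dual X* is strictly convex, and let f, g ∈ X* with f ⊥_B g. Then ‖f‖ = sup{ f(x) : ‖x‖ = 1, g(x) ≥ 0 } and also ‖f‖ = sup{ f(x) : ‖x‖ = 1, g(x) ≤ 0 }. -/
lemma key_half {X : Type*} [NormedAddCommGroup X] [NormedSpace ℝ X]
    [StrictConvexSpace ℝ (X →L[ℝ] ℝ)]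
    (f g : X →L[ℝ] ℝ) (horth : ∀ l : ℝ, ‖f + l • g‖ ≥ ‖f‖) :
    ‖f‖ = sSup {r : ℝ | ∃ x : X, ‖x‖ = 1 ∧ 0 ≤ g x ∧ r = f x} := by
  set S := {r : ℝ | ∃ x : X, ‖x‖ = 1 ∧ 0 ≤ g x ∧ r = f x} with hSdef
  have hmemle : ∀ r ∈ S, r ≤ ‖f‖ := by
    rintro r ⟨x, hx, -, rfl⟩
    calc f x ≤ ‖f x‖ := le_abs_self _
      _ ≤ ‖f‖ * ‖x‖ := f.le_opNorm x
      _ = ‖f‖ := by rw [hx, mul_one]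
  have hbdd : BddAbove S := ⟨‖f‖, hmemle⟩
  have hub : sSup S ≤ ‖f‖ := Real.sSup_le hmemle (norm_nonneg f)
  refine le_antisymm ?_ hub
  by_contra hlt
  push_neg at hlt
  by_cases hg : g = 0
  · -- then the constraint is vacuous and the sup is ‖f‖ (or 0 if X trivial)
    have hM : ‖f‖ ≤ max (sSup S) 0 := by
      refine f.opNorm_le_bound (le_max_right _ _) fun x => ?_
      rcases eq_or_ne x 0 with rfl | hx0
      · simp
      · set u : X := ‖x‖⁻¹ • x with hu
        have hun : ‖u‖ = 1 := by
          rw [hu, norm_smul, norm_inv, norm_norm, inv_mul_cancel₀ (norm_ne_zero_iff.2 hx0)]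
        have h1 : f u ≤ sSup S := le_csSup hbdd ⟨u, hun, by simp [hg], rfl⟩
        have h2 : f (-u) ≤ sSup S := le_csSup hbdd ⟨-u, by simp [hun], by simp [hg], rfl⟩
        have habs : |f u| ≤ max (sSup S) 0 := by
          rw [abs_le]
          constructor
          · have : -(f u) ≤ sSup S := by simpa using h2
            linarith [le_max_left (sSup S) 0]
          · linarith [le_max_left (sSup S) 0]
        have hxu : f x = ‖x‖ * f u := by
          have hux : (‖x‖ : ℝ) • u = x := by
            rw [hu, smul_smul, mul_inv_cancel₀ (norm_ne_zero_iff.2 hx0), one_smul]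
          calc f x = f ((‖x‖ : ℝ) • u) := by rw [hux]
            _ = ‖x‖ * f u := by rw [map_smul, smul_eq_mul]
        rw [Real.norm_eq_abs, hxu, abs_mul, abs_of_nonneg (norm_nonneg x), mul_comm]
        exact mul_le_mul_of_nonneg_right habs (norm_nonneg x)
    rcases max_cases (sSup S) 0 with ⟨he, -⟩ | ⟨he, hle⟩
    · rw [he] at hM; linarith
    · rw [he] at hM
      have hf0 : ‖f‖ = 0 := le_antisymm hM (norm_nonneg f)
      have hge : (0:ℝ) ≤ sSup S := by
        apply Real.sSup_nonneg
        rintro r ⟨x, hx, -, rfl⟩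
        have : f = 0 := norm_eq_zero.mp hf0
        simp [this]
      linarith
  · have hgn : 0 < ‖g‖ := norm_pos_iff.2 hg
    set l : ℝ := (‖f‖ - sSup S) / (2 * ‖g‖) with hl
    have hlpos : 0 < l := div_pos (by linarith) (by linarith)
    have hkey : ‖f + l • g‖ ≤ ‖f‖ := by
      refine (f + l • g).opNorm_le_bound (norm_nonneg f) fun x => ?_
      have claim : ∀ y : X, ‖y‖ = 1 → (f + l • g) y ≤ ‖f‖ := by
        intro y hy
        have hfy : f y ≤ ‖f‖ := by
          calc f y ≤ ‖f y‖ := le_abs_self _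
            _ ≤ ‖f‖ * ‖y‖ := f.le_opNorm y
            _ = ‖f‖ := by rw [hy, mul_one]
        rcases le_or_gt 0 (g y) with hgy | hgy
        · have hfS : f y ≤ sSup S := le_csSup hbdd ⟨y, hy, hgy, rfl⟩
          have hgyle : g y ≤ ‖g‖ := by
            calc g y ≤ ‖g y‖ := le_abs_self _
              _ ≤ ‖g‖ * ‖y‖ := g.le_opNorm y
              _ = ‖g‖ := by rw [hy, mul_one]
          have : (f + l • g) y = f y + l * g y := by simp
          rw [this]
          have : l * g y ≤ l * ‖g‖ := mul_le_mul_of_nonneg_left hgyle hlpos.le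
          have hlg : l * ‖g‖ = (‖f‖ - sSup S) / 2 := by
            field_simp [hl]
            rw [hl, div_mul_eq_mul_div, div_mul_eq_mul_div, div_eq_iff (mul_ne_zero two_ne_zero hgn.ne')]
            ring
          nlinarith
        · have : (f + l • g) y = f y + l * g y := by simp
          rw [this]
          nlinarith
      rcases eq_or_ne x 0 with rfl | hx0
      · simp
      · set u : X := ‖x‖⁻¹ • x with hu
        have hun : ‖u‖ = 1 := by
          rw [hu, norm_smul, norm_inv, norm_norm, inv_mul_cancel₀ (norm_ne_zero_iff.2 hx0)]
        have h1 := claim u hun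
        have h2 := claim (-u) (by simp [hun])
        have habs : |(f + l • g) u| ≤ ‖f‖ := by
          rw [abs_le]
          constructor
          · rw [map_neg] at h2
            linarith
          · exact h1
        have hxu : (f + l • g) x = ‖x‖ * (f + l • g) u := by
          have hux : (‖x‖ : ℝ) • u = x := by
            rw [hu, smul_smul, mul_inv_cancel₀ (norm_ne_zero_iff.2 hx0), one_smul]
          calc (f + l • g) x = (f + l • g) ((‖x‖ : ℝ) • u) := by rw [hux]
            _ = ‖x‖ * (f + l • g) u := by rw [map_smul, smul_eq_mul]
        rw [Real.norm_eq_abs, hxu, abs_mul, abs_of_nonneg (norm_nonneg x), mul_comm]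
        exact mul_le_mul_of_nonneg_right habs (norm_nonneg x)
    -- strict convexity contradiction
    have hne : f ≠ f + l • g := by
      intro h
      apply hg
      ext x
      have hx := ContinuousLinearMap.ext_iff.mp h x
      simp only [ContinuousLinearMap.add_apply, ContinuousLinearMap.smul_apply,
        smul_eq_mul] at hx
      have hz : l * g x = 0 := by linarith
      have := (mul_eq_zero.mp hz).resolve_left hlpos.ne'
      simpa using this
    have hmid : ‖(2⁻¹ : ℝ) • f + (2⁻¹ : ℝ) • (f + l • g)‖ < ‖f‖ :=
      norm_combo_lt_of_ne le_rfl hkey hne (by norm_num) (by norm_num) (by norm_num)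
    have heq : (2⁻¹ : ℝ) • f + (2⁻¹ : ℝ) • (f + l • g) = f + (l / 2) • g := by
      ext x
      simp only [ContinuousLinearMap.add_apply, ContinuousLinearMap.smul_apply,
        smul_eq_mul]
      ring
    rw [heq] at hmid
    exact absurd (horth (l / 2)) (not_le.2 hmid)

theorem norm_functional_eq_sup_on_halfspaces
    {X : Type*} [NormedAddCommGroup X] [NormedSpace ℝ X]
    [StrictConvexSpace ℝ (X →L[ℝ] ℝ)]
    (f g : X →L[ℝ] ℝ) (horth : ∀ l : ℝ, ‖f + l • g‖ ≥ ‖f‖) :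
    ‖f‖ = sSup {r : ℝ | ∃ x : X, ‖x‖ = 1 ∧ 0 ≤ g x ∧ r = f x} ∧
    ‖f‖ = sSup {r : ℝ | ∃ x : X, ‖x‖ = 1 ∧ g x ≤ 0 ∧ r = f x} := by
  constructor
  · exact key_half f g horth
  · have horth' : ∀ l : ℝ, ‖f + l • (-g)‖ ≥ ‖f‖ := fun l => by
      rw [smul_neg, ← neg_smul]
      exact horth (-l)
    have hset : {r : ℝ | ∃ x : X, ‖x‖ = 1 ∧ g x ≤ 0 ∧ r = f x}
        = {r : ℝ | ∃ x : X, ‖x‖ = 1 ∧ 0 ≤ (-g) x ∧ r = f x} := by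
      simp only [ContinuousLinearMap.neg_apply, neg_nonneg]
    rw [hset]
    exact key_half f (-g) horth'
end

section
/- Let X be a real normed linear space and f, g ∈ X* with f ⊥_B g. Fix ε > 0. Then ‖f‖ = max{ l(ε), k₁ } = max{ l(ε), k₂ }, where l(ε) = sup{ f(x) : ‖x‖ = 1, |g(x)| < ε }, k₁ = sup{ f(x) : ‖x‖ = 1, g(x) ≥ 0 }, and k₂ = sup{ f(x) : ‖x‖ = 1, g(x) ≤ 0 }. -/
private lemma key_aux
    {X : Type*} [NormedAddCommGroup X] [NormedSpace ℝ X]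
    (f g : X →L[ℝ] ℝ) (horth : ∀ l : ℝ, ‖f + l • g‖ ≥ ‖f‖)
    (ε : ℝ) (hε : 0 < ε) (σ : ℝ) (hσ : |σ| = 1) :
    ‖f‖ = max (sSup {r : ℝ | ∃ x : X, ‖x‖ = 1 ∧ |g x| < ε ∧ r = f x})
              (sSup {r : ℝ | ∃ x : X, ‖x‖ = 1 ∧ 0 ≤ σ * g x ∧ r = f x}) := by
  set A : Set ℝ := {r : ℝ | ∃ x : X, ‖x‖ = 1 ∧ |g x| < ε ∧ r = f x} with hA
  set B : Set ℝ := {r : ℝ | ∃ x : X, ‖x‖ = 1 ∧ 0 ≤ σ * g x ∧ r = f x} with hB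
  have hfx : ∀ x : X, ‖x‖ = 1 → f x ≤ ‖f‖ := by
    intro x hx
    calc f x ≤ |f x| := le_abs_self _
    _ ≤ ‖f‖ * ‖x‖ := f.le_opNorm x
    _ = ‖f‖ := by rw [hx, mul_one]
  have hAle : ∀ r ∈ A, r ≤ ‖f‖ := by
    rintro r ⟨x, hx, -, rfl⟩; exact hfx x hx
  have hBle : ∀ r ∈ B, r ≤ ‖f‖ := by
    rintro r ⟨x, hx, -, rfl⟩; exact hfx x hx
  apply le_antisymm
  swap
  · exact max_le (Real.sSup_le hAle (norm_nonneg f)) (Real.sSup_le hBle (norm_nonneg f))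
  by_contra hcon
  push_neg at hcon
  set m : ℝ := max (sSup A) (sSup B) with hm
  have hbA : BddAbove A := ⟨‖f‖, hAle⟩
  have hbB : BddAbove B := ⟨‖f‖, hBle⟩
  set t : ℝ := (‖f‖ - m) / (‖g‖ + ε) with ht
  have hden : 0 < ‖g‖ + ε := by positivity
  have ht0 : 0 < t := div_pos (by linarith) hden
  set C : ℝ := max (m + t * ‖g‖) (‖f‖ - t * ε) with hC
  -- bound on unit vectors
  have hunit : ∀ x : X, ‖x‖ = 1 → (f + (σ * t) • g) x ≤ C := by
    intro x hx
    have hval : (f + (σ * t) • g) x = f x + (σ * t) * g x := by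
      simp [ContinuousLinearMap.add_apply, ContinuousLinearMap.smul_apply, smul_eq_mul]
    rw [hval]
    have hgabs : |g x| ≤ ‖g‖ := by
      calc |g x| ≤ ‖g‖ * ‖x‖ := g.le_opNorm x
      _ = ‖g‖ := by rw [hx, mul_one]
    have habs : |(σ * t) * g x| ≤ t * ‖g‖ := by
      rw [abs_mul, abs_mul, hσ, one_mul, abs_of_pos ht0]
      exact mul_le_mul_of_nonneg_left hgabs ht0.le
    by_cases h1 : |g x| < ε
    · have : f x ≤ sSup A := le_csSup hbA ⟨x, hx, h1, rfl⟩
      have h2 : (σ * t) * g x ≤ t * ‖g‖ := (le_abs_self _).trans habs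
      have : f x ≤ m := this.trans (le_max_left _ _)
      calc f x + (σ * t) * g x ≤ m + t * ‖g‖ := by linarith
      _ ≤ C := le_max_left _ _
    · by_cases h2 : 0 ≤ σ * g x
      · have hfB : f x ≤ sSup B := le_csSup hbB ⟨x, hx, h2, rfl⟩
        have : f x ≤ m := hfB.trans (le_max_right _ _)
        have h3 : (σ * t) * g x ≤ t * ‖g‖ := (le_abs_self _).trans habs
        calc f x + (σ * t) * g x ≤ m + t * ‖g‖ := by linarith
        _ ≤ C := le_max_left _ _
      · push_neg at h1 h2
        have hsg : σ * g x ≤ -ε := by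
          have habs' : |σ * g x| = |g x| := by rw [abs_mul, hσ, one_mul]
          rcases abs_le.mp (le_of_eq habs'.symm) with ⟨hl, hr⟩
          -- σ * g x < 0 and |σ * g x| = |g x| ≥ ε
          have : ε ≤ |σ * g x| := habs' ▸ h1
          rcases abs_cases (σ * g x) with ⟨he, _⟩ | ⟨he, _⟩
          · linarith [he ▸ this]
          · linarith [he ▸ this]
        have : (σ * t) * g x ≤ -(t * ε) := by
          have : t * (σ * g x) ≤ t * (-ε) := mul_le_mul_of_nonneg_left hsg ht0.le
          nlinarith
        calc f x + (σ * t) * g x ≤ ‖f‖ - t * ε := by linarith [hfx x hx]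
        _ ≤ C := le_max_right _ _
  -- operator norm bound
  have hnorm : ‖f + (σ * t) • g‖ ≤ max C 0 := by
    apply ContinuousLinearMap.opNorm_le_bound _ (le_max_right _ _)
    intro x
    rcases eq_or_ne x 0 with rfl | hx0
    · simp
    · have hxn : 0 < ‖x‖ := norm_pos_iff.mpr hx0
      set y : X := ‖x‖⁻¹ • x with hy
      have hyn : ‖y‖ = 1 := by
        rw [hy, norm_smul, norm_inv, norm_norm, inv_mul_cancel₀ hxn.ne']
      have hyn' : ‖-y‖ = 1 := by rw [norm_neg]; exact hyn
      have h1 : (f + (σ * t) • g) y ≤ max C 0 := (hunit y hyn).trans (le_max_left _ _)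
      have h2 : -((f + (σ * t) • g) y) ≤ max C 0 := by
        have := hunit (-y) hyn'
        rw [map_neg] at this
        exact this.trans (le_max_left _ _)
      have habs : |(f + (σ * t) • g) y| ≤ max C 0 := abs_le.mpr ⟨by linarith, h1⟩
      have hxy : (f + (σ * t) • g) x = ‖x‖ * (f + (σ * t) • g) y := by
        rw [hy, map_smul, smul_eq_mul, ← mul_assoc, mul_inv_cancel₀ hxn.ne', one_mul]
      rw [hxy, Real.norm_eq_abs, abs_mul, abs_of_pos hxn, mul_comm]
      exact mul_le_mul_of_nonneg_right habs hxn.le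
  have hge : ‖f‖ ≤ max C 0 := le_trans (horth (σ * t)) hnorm
  have hClt : C < ‖f‖ := by
    apply max_lt
    · have : t * ‖g‖ < ‖f‖ - m := by
        rw [ht, div_mul_eq_mul_div, div_lt_iff₀ hden]
        have h1 : 0 < ‖f‖ - m := by linarith
        nlinarith [norm_nonneg g]
      linarith
    · nlinarith
  rcases max_cases C 0 with ⟨he, _⟩ | ⟨he, hle⟩
  · rw [he] at hge; linarith
  · rw [he] at hge
    have hf0 : ‖f‖ = 0 := le_antisymm hge (norm_nonneg f)
    have hfzero : f = 0 := by rwa [norm_eq_zero] at hf0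
    have hAz : 0 ≤ sSup A := by
      apply Real.sSup_nonneg
      rintro r ⟨x, -, -, rfl⟩
      simp [hfzero]
    have : 0 ≤ m := hAz.trans (le_max_left _ _)
    linarith

theorem norm_functional_eq_max_sups
    {X : Type*} [NormedAddCommGroup X] [NormedSpace ℝ X]
    (f g : X →L[ℝ] ℝ) (horth : ∀ l : ℝ, ‖f + l • g‖ ≥ ‖f‖)
    (ε : ℝ) (hε : 0 < ε) :
    ‖f‖ = max (sSup {r : ℝ | ∃ x : X, ‖x‖ = 1 ∧ |g x| < ε ∧ r = f x})
              (sSup {r : ℝ | ∃ x : X, ‖x‖ = 1 ∧ 0 ≤ g x ∧ r = f x}) ∧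
    ‖f‖ = max (sSup {r : ℝ | ∃ x : X, ‖x‖ = 1 ∧ |g x| < ε ∧ r = f x})
              (sSup {r : ℝ | ∃ x : X, ‖x‖ = 1 ∧ g x ≤ 0 ∧ r = f x}) := by
  constructor
  · have h := key_aux f g horth ε hε 1 (by norm_num)
    simpa using h
  · have h := key_aux f g horth ε hε (-1) (by norm_num)
    convert h using 4
    ext r
    constructor
    · rintro ⟨x, hx, hg, rfl⟩; exact ⟨x, hx, by linarith, rfl⟩
    · rintro ⟨x, hx, hg, rfl⟩; exact ⟨x, hx, by linarith, rfl⟩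
end

section
/- Let H₁, H₂ be real Hilbert spaces and T, A : H₁ → H₂ compact linear operators such that for every λ ∈ ℝ the norm attainment set M_{T+λA} is nonempty and of the form D_λ ∪ (−D_λ) with D_λ connected in the unit sphere of H₁. Then dist(T, span{A}) = sup{ ⟨Tx, y⟩ : ‖x‖ = 1, ‖y‖ = 1, ⟨Ax, y⟩ = 0 }. -/
open RealInnerProductSpace

section AuxiliaryLemmas

open Filter Topology ContinuousLinearMap

variable {H₁ H₂ : Type*} [NormedAddCommGroup H₁] [InnerProductSpace ℝ H₁] [CompleteSpace H₁]
  [NormedAddCommGroup H₂] [InnerProductSpace ℝ H₂] [CompleteSpace H₂]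

lemma compact_seq_extract {E F : Type*} [NormedAddCommGroup E] [NormedSpace ℝ E]
    [NormedAddCommGroup F] [NormedSpace ℝ F]
    (B : E →L[ℝ] F) (hB : IsCompactOperator B) (u : ℕ → E) (hu : ∀ n, ‖u n‖ ≤ 1) :
    ∃ y, ∃ φ : ℕ → ℕ, StrictMono φ ∧ Tendsto (fun n => B (u (φ n))) atTop (𝓝 y) := by
  have hb : Bornology.IsVonNBounded ℝ (Metric.closedBall (0:E) 1) :=
    NormedSpace.isVonNBounded_closedBall ℝ E 1
  have hK : IsCompact (closure (⇑B '' Metric.closedBall (0:E) 1)) :=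
    IsCompactOperator.isCompact_closure_image_of_isVonNBounded
      (f := (B : E →ₗ[ℝ] F)) hB hb
  have hmem : ∀ n, B (u n) ∈ closure (⇑B '' Metric.closedBall (0:E) 1) := fun n =>
    subset_closure ⟨u n, by simpa [Metric.mem_closedBall, dist_eq_norm] using hu n, rfl⟩
  obtain ⟨y, _, φ, hφ, hconv⟩ := hK.isSeqCompact hmem
  exact ⟨y, φ, hφ, hconv⟩

-- basic facts about B = S† ∘ S
lemma Bsa (S : H₁ →L[ℝ] H₂) : IsSelfAdjoint (adjoint S ∘L S) := by
  rw [isSelfAdjoint_iff']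
  rw [adjoint_comp, adjoint_adjoint]

lemma B_inner_self (S : H₁ →L[ℝ] H₂) (x : H₁) : ⟪(adjoint S ∘L S) x, x⟫ = ‖S x‖ ^ 2 := by
  rw [comp_apply, adjoint_inner_left, real_inner_self_eq_norm_sq]

-- eigen equation at norm attaining points
lemma eig_of_max (S : H₁ →L[ℝ] H₂) {x : H₁} (hx : ‖x‖ = 1) (hSx : ‖S x‖ = ‖S‖) :
    (adjoint S ∘L S) x = (‖S‖ ^ 2) • x := by
  set B := adjoint S ∘L S with hB
  have hmax : IsMaxOn B.reApplyInnerSelf (Metric.sphere (0:H₁) ‖x‖) x := by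
    intro z hz
    have hz1 : ‖z‖ = 1 := by simpa [hx] using hz
    have h1 : B.reApplyInnerSelf z = ‖S z‖ ^ 2 := by
      rw [reApplyInnerSelf_apply, ← B_inner_self S z]; rfl
    have h2 : B.reApplyInnerSelf x = ‖S‖ ^ 2 := by
      have h2' : B.reApplyInnerSelf x = ‖S x‖ ^ 2 := by
        rw [reApplyInnerSelf_apply, ← B_inner_self S x]; rfl
      rw [h2', hSx]
    have : ‖S z‖ ≤ ‖S‖ := by
      calc ‖S z‖ ≤ ‖S‖ * ‖z‖ := le_opNorm S z
      _ = ‖S‖ := by rw [hz1, mul_one]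
    simp only [Set.mem_setOf_eq, h1, h2]
    exact pow_le_pow_left₀ (norm_nonneg _) this 2
  have hext := (Bsa S).eq_smul_self_of_isLocalExtrOn_real (Or.inr hmax.localize)
  have hray : B.rayleighQuotient x = ‖S‖ ^ 2 := by
    rw [rayleighQuotient, reApplyInnerSelf_apply, hx]
    have := B_inner_self S x
    simp only [RCLike.re_to_real] at *
    rw [this, hSx]
    norm_num
  rwa [hray] at hext

lemma spectral_gap (S : H₁ →L[ℝ] H₂) (hS : IsCompactOperator S) (hpos : 0 < ‖S‖) :
    ∃ μ' < ‖S‖ ^ 2, ∀ q ∈ (LinearMap.ker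
        ((adjoint S ∘L S - ‖S‖ ^ 2 • ContinuousLinearMap.id ℝ H₁ : H₁ →L[ℝ] H₁) : H₁ →ₗ[ℝ] H₁))ᗮ,
      ⟪(adjoint S ∘L S) q, q⟫ ≤ μ' * ‖q‖ ^ 2 := by
  set B := adjoint S ∘L S with hBdef
  set μ := ‖S‖ ^ 2 with hμdef
  have hμpos : 0 < μ := by positivity
  have hBnorm : ‖B‖ = μ := by rw [hBdef, norm_adjoint_comp_self, hμdef, sq]
  have hBc : IsCompactOperator B := by
    have := hS.clm_comp (adjoint S)
    rwa [show ⇑(adjoint S) ∘ ⇑S = ⇑B from rfl] at this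
  set E := LinearMap.ker ((B - μ • ContinuousLinearMap.id ℝ H₁ : H₁ →L[ℝ] H₁) : H₁ →ₗ[ℝ] H₁) with hEdef
  by_contra hcon
  push_neg at hcon
  -- build unit vectors q n in Eᗮ with inner > μ - 1/(n+1)
  have hseq : ∀ n : ℕ, ∃ q : H₁, q ∈ Eᗮ ∧ ‖q‖ = 1 ∧ μ - 1/(n+1) < ⟪B q, q⟫ := by
    intro n
    obtain ⟨q, hq1, hq2⟩ := hcon (μ - 1/(n+1)) (by
      have : (0:ℝ) < 1/(n+1) := by positivity
      linarith)
    have hq0 : q ≠ 0 := by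
      rintro rfl
      simp at hq2
    have hqn : (0:ℝ) < ‖q‖ := norm_pos_iff.mpr hq0
    refine ⟨‖q‖⁻¹ • q, Submodule.smul_mem _ _ hq1, by
      rw [norm_smul, norm_inv, norm_norm]; field_simp, ?_⟩
    have : ⟪B (‖q‖⁻¹ • q), ‖q‖⁻¹ • q⟫ = ‖q‖⁻¹ * ‖q‖⁻¹ * ⟪B q, q⟫ := by
      rw [map_smul, real_inner_smul_left, real_inner_smul_right]; ring
    rw [this]
    have key := mul_lt_mul_of_pos_left hq2 (show (0:ℝ) < ‖q‖⁻¹ * ‖q‖⁻¹ by positivity)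
    calc μ - 1/(n+1) = ‖q‖⁻¹ * ‖q‖⁻¹ * ((μ - 1/(n+1)) * ‖q‖^2) := by
          field_simp
        _ < ‖q‖⁻¹ * ‖q‖⁻¹ * ⟪B q, q⟫ := key
  choose q hq1 hq2 hq3 using hseq
  -- ⟪B q n, q n⟫ ≤ μ
  have hBq_le : ∀ n, ⟪B (q n), q n⟫ ≤ μ := by
    intro n
    calc ⟪B (q n), q n⟫ ≤ ‖B (q n)‖ * ‖q n‖ := real_inner_le_norm _ _
      _ ≤ ‖B‖ * ‖q n‖ * ‖q n‖ :=
        mul_le_mul_of_nonneg_right (le_opNorm B _) (norm_nonneg _)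
      _ = μ := by rw [hq2, hBnorm]; ring
  -- ‖B q n - μ q n‖² ≤ 2μ/(n+1)
  have hsmall : ∀ n : ℕ, ‖B (q n) - μ • q n‖ ≤ Real.sqrt (2*μ/(n+1)) := by
    intro n
    have hsq : ‖B (q n) - μ • q n‖^2 ≤ 2*μ/(n+1) := by
      have hns : ‖B (q n) - μ • q n‖^2
          = ‖B (q n)‖^2 - 2*(μ*⟪B (q n), q n⟫) + μ^2 := by
        rw [norm_sub_sq_real, real_inner_smul_right, norm_smul, hq2]
        simp [abs_of_pos hμpos]
      have h1 : ‖B (q n)‖ ≤ μ := by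
        calc ‖B (q n)‖ ≤ ‖B‖ * ‖q n‖ := le_opNorm B _
          _ = μ := by rw [hq2, hBnorm, mul_one]
      have h2 := hq3 n
      have h3 : (0:ℝ) ≤ ‖B (q n)‖ := norm_nonneg _
      have h4 : (0:ℝ) < (n:ℝ)+1 := by positivity
      rw [hns, le_div_iff₀ h4]
      have h5 : ‖B (q n)‖^2 ≤ μ^2 := by nlinarith
      have h2' : μ - ⟪B (q n), q n⟫ < 1/((n:ℝ)+1) := by linarith
      have h6 : (μ - ⟪B (q n), q n⟫) * ((n:ℝ)+1) < 1 := (lt_div_iff₀ h4).mp h2'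
      nlinarith [mul_le_mul_of_nonneg_right h5 h4.le,
        mul_lt_mul_of_pos_left h6 (show (0:ℝ) < 2*μ by positivity)]
    calc ‖B (q n) - μ • q n‖ = Real.sqrt (‖B (q n) - μ • q n‖^2) :=
        (Real.sqrt_sq (norm_nonneg _)).symm
      _ ≤ Real.sqrt (2*μ/(n+1)) := Real.sqrt_le_sqrt hsq
  have htend0 : Tendsto (fun n => B (q n) - μ • q n) atTop (𝓝 0) := by
    apply squeeze_zero_norm hsmall
    have h0 : Tendsto (fun n : ℕ => 2*μ*(1/((n:ℝ)+1))) atTop (𝓝 (2*μ*0)) :=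
      tendsto_one_div_add_atTop_nhds_zero_nat.const_mul (2*μ)
    have h0' : Tendsto (fun n : ℕ => 2*μ/((n:ℝ)+1)) atTop (𝓝 0) := by
      simpa [div_eq_mul_inv] using h0
    have := (Real.continuous_sqrt.tendsto 0).comp h0'
    simpa [Function.comp_def] using this
  obtain ⟨y, φ, hφ, hBconv⟩ := compact_seq_extract B hBc q (fun n => le_of_eq (hq2 n))
  have hμq : Tendsto (fun n => μ • q (φ n)) atTop (𝓝 y) := by
    have h0 : Tendsto (fun n => B (q (φ n)) - μ • q (φ n)) atTop (𝓝 0) :=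
      htend0.comp hφ.tendsto_atTop
    have := hBconv.sub h0
    simpa using this
  set x := μ⁻¹ • y with hxdef
  have hqconv : Tendsto (fun n => q (φ n)) atTop (𝓝 x) := by
    have := hμq.const_smul μ⁻¹
    simpa [hxdef, smul_smul, inv_mul_cancel₀ hμpos.ne'] using this
  have hxE' : x ∈ Eᗮ := by
    have hcl : IsClosed (Eᗮ : Set H₁) := Submodule.isClosed_orthogonal E
    exact hcl.mem_of_tendsto hqconv (Eventually.of_forall (fun n => hq1 (φ n)))
  have hxnorm : ‖x‖ = 1 := by
    have h1 : Tendsto (fun n => ‖q (φ n)‖) atTop (𝓝 ‖x‖) := hqconv.norm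
    have h2 : Tendsto (fun n => ‖q (φ n)‖) atTop (𝓝 1) := by
      simpa [hq2] using tendsto_const_nhds (x := (1:ℝ)) (f := atTop (α := ℕ))
    exact tendsto_nhds_unique h1 h2
  have hBx : B x = μ • x := by
    have h1 : Tendsto (fun n => B (q (φ n))) atTop (𝓝 (B x)) :=
      (B.continuous.tendsto x).comp hqconv
    have h2 : Tendsto (fun n => μ • q (φ n)) atTop (𝓝 (μ • x)) := hqconv.const_smul μ
    have := tendsto_nhds_unique h1 hBconv
    rw [this]
    exact tendsto_nhds_unique hμq h2
  have hxE : x ∈ E := by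
    rw [hEdef, LinearMap.mem_ker]
    have : ((B - μ • ContinuousLinearMap.id ℝ H₁ : H₁ →L[ℝ] H₁) : H₁ →ₗ[ℝ] H₁) x = B x - μ • x := by
      simp
    rw [this, hBx, sub_self]
  have : x = 0 := by
    have := (Submodule.orthogonal_disjoint E).le_bot ⟨hxE, hxE'⟩
    simpa using this
  rw [this] at hxnorm
  simp at hxnorm

lemma arith_aux (ε c g K₀ K₂ t μ X Y Z : ℝ) (hε : 0 < ε) (hc : 0 < c) (hg : 0 < g)
    (hK₀ : 0 ≤ K₀) (hK₂ : 0 ≤ K₂) (ht0 : 0 ≤ t) (ht1 : t ≤ 1)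
    (hc1 : ε*(4*c+1) ≤ g) (hc2 : ε*(8*K₀^2 + g*K₂ + g) ≤ c*g)
    (hX : X ≤ μ - g*t^2) (hY : c*(1-t^2) - 2*K₀*t ≤ Y) (hZ : Z ≤ K₂) :
    X - 2*(ε*Y) + ε^2*Z ≤ μ - ε*c := by
  have h4c : 4*(ε*c) ≤ g := by nlinarith
  have hcε : ε*(ε*(8*K₀^2 + g*K₂ + g)) ≤ ε*(c*g) := mul_le_mul_of_nonneg_left hc2 hε.le
  have A1 : 4*(ε*K₀)*t*g ≤ (1/2)*(g*t)^2 + 8*(ε*K₀)^2 := by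
    nlinarith [sq_nonneg (g*t - 4*(ε*K₀))]
  have A2 : 2*(ε*c)*(t^2)*g ≤ (1/2)*(g*t)^2 := by
    nlinarith [mul_nonneg (mul_nonneg (sub_nonneg.mpr h4c) hg.le) (sq_nonneg t)]
  have A3 : 8*(ε*K₀)^2 + ε^2*K₂*g ≤ (ε*c)*g := by
    nlinarith [hcε, mul_nonneg (sq_nonneg ε) hg.le]
  have Pg : (2*(ε*c)*t^2 - g*t^2 + 4*(ε*K₀)*t + ε^2*K₂)*g ≤ (ε*c)*g := by
    nlinarith [A1, A2, A3]
  have P : 2*(ε*c)*t^2 - g*t^2 + 4*(ε*K₀)*t + ε^2*K₂ ≤ ε*c :=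
    le_of_mul_le_mul_right Pg hg
  have st2 : -(2*(ε*Y)) ≤ -(2*(ε*c)) + 2*(ε*c)*t^2 + 4*(ε*K₀)*t := by
    nlinarith [mul_le_mul_of_nonneg_left hY (show (0:ℝ) ≤ 2*ε by positivity)]
  have st3 : ε^2*Z ≤ ε^2*K₂ := mul_le_mul_of_nonneg_left hZ (sq_nonneg ε)
  linarith

set_option maxHeartbeats 2000000 in
lemma key_perturb (S A' : H₁ →L[ℝ] H₂) (hS : IsCompactOperator S) (hpos : 0 < ‖S‖)
    (hne : ∃ x : H₁, ‖x‖ = 1 ∧ ‖S x‖ = ‖S‖)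
    (hfpos : ∀ x : H₁, ‖x‖ = 1 → ‖S x‖ = ‖S‖ → 0 < ⟪S x, A' x⟫) :
    ∃ ε : ℝ, 0 < ε ∧ ‖S - ε • A'‖ < ‖S‖ := by
  set B := adjoint S ∘L S with hBdef
  set μ := ‖S‖ ^ 2 with hμdef
  have hμpos : 0 < μ := by positivity
  have hBc : IsCompactOperator B := by
    have := hS.clm_comp (adjoint S)
    rwa [show ⇑(adjoint S) ∘ ⇑S = ⇑B from rfl] at this
  set E := LinearMap.ker ((B - μ • ContinuousLinearMap.id ℝ H₁ : H₁ →L[ℝ] H₁) : H₁ →ₗ[ℝ] H₁) with hEdef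
  have hE_iff : ∀ x : H₁, x ∈ E ↔ B x = μ • x := by
    intro x
    rw [hEdef, LinearMap.mem_ker]
    have : ((B - μ • ContinuousLinearMap.id ℝ H₁ : H₁ →L[ℝ] H₁) : H₁ →ₗ[ℝ] H₁) x = B x - μ • x := by simp
    rw [this, sub_eq_zero]
  have hMeq : ∀ x : H₁, ‖x‖ = 1 → (‖S x‖ = ‖S‖ ↔ x ∈ E) := by
    intro x hx
    constructor
    · intro hSx
      rw [hE_iff]
      exact eig_of_max S hx hSx
    · intro hxE
      rw [hE_iff] at hxE
      have h1 : ‖S x‖ ^ 2 = μ := by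
        rw [← B_inner_self S x, ← hBdef, hxE, real_inner_smul_left,
          real_inner_self_eq_norm_sq, hx]
        ring
      have := congrArg Real.sqrt h1
      rwa [Real.sqrt_sq (norm_nonneg _), hμdef, Real.sqrt_sq (norm_nonneg _)] at this
  set Mset : Set H₁ := {x | ‖x‖ = 1 ∧ ‖S x‖ = ‖S‖} with hMdef
  -- Mset is compact
  have hMc : IsCompact Mset := by
    rw [isCompact_iff_isSeqCompact]
    intro u hu
    obtain ⟨y, φ, hφ, hconv⟩ := compact_seq_extract B hBc u (fun n => (hu n).1.le)
    have hBu : ∀ n, B (u n) = μ • u n := fun n =>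
      (hE_iff _).mp ((hMeq _ (hu n).1).mp (hu n).2)
    have hμu : Tendsto (fun n => μ • u (φ n)) atTop (𝓝 y) := by
      simpa [hBu] using hconv
    set x := μ⁻¹ • y with hxdef
    have huconv : Tendsto (fun n => u (φ n)) atTop (𝓝 x) := by
      have := hμu.const_smul μ⁻¹
      simpa [hxdef, smul_smul, inv_mul_cancel₀ hμpos.ne'] using this
    have hxn : ‖x‖ = 1 := by
      have h1 : Tendsto (fun n => ‖u (φ n)‖) atTop (𝓝 ‖x‖) := huconv.norm
      have h2 : Tendsto (fun n => ‖u (φ n)‖) atTop (𝓝 1) := by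
        have : (fun n => ‖u (φ n)‖) = fun _ => (1:ℝ) := funext fun n => (hu (φ n)).1
        rw [this]; exact tendsto_const_nhds
      exact tendsto_nhds_unique h1 h2
    have hxS : ‖S x‖ = ‖S‖ := by
      have h1 : Tendsto (fun n => ‖S (u (φ n))‖) atTop (𝓝 ‖S x‖) :=
        ((S.continuous.tendsto x).comp huconv).norm
      have h2 : Tendsto (fun n => ‖S (u (φ n))‖) atTop (𝓝 ‖S‖) := by
        have : (fun n => ‖S (u (φ n))‖) = fun _ => ‖S‖ := funext fun n => (hu (φ n)).2
        rw [this]; exact tendsto_const_nhds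
      exact tendsto_nhds_unique h1 h2
    exact ⟨x, ⟨hxn, hxS⟩, φ, hφ, huconv⟩
  have hfc : Continuous fun x : H₁ => ⟪S x, A' x⟫ := S.continuous.inner A'.continuous
  have hMne : Mset.Nonempty := hne
  obtain ⟨x₀, hx₀M, hminOn⟩ := hMc.exists_isMinOn hMne hfc.continuousOn
  set c := ⟪S x₀, A' x₀⟫ with hcdef
  have hcpos : 0 < c := hfpos x₀ hx₀M.1 hx₀M.2
  have hcmin : ∀ x ∈ Mset, c ≤ ⟪S x, A' x⟫ := fun x hx => hminOn hx
  obtain ⟨μ', hμ'lt, hgap⟩ := spectral_gap S hS hpos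
  set g := μ - μ' with hgdef
  have hgpos : 0 < g := by rw [hgdef]; linarith
  set K₀ := ‖S‖ * ‖A'‖ with hK₀def
  have hK₀ : 0 ≤ K₀ := by positivity
  set K₂ := ‖A'‖^2 with hK₂def
  have hK₂ : 0 ≤ K₂ := by positivity
  set ε := min (g/(4*c+1)) (c*g/(8*K₀^2 + g*K₂ + g)) with hεdef
  have hεpos : 0 < ε := by
    apply lt_min
    · positivity
    · have hden : 0 < 8*K₀^2 + g*K₂ + g := by positivity
      positivity
  have hc1 : ε*(4*c+1) ≤ g := by
    have := min_le_left (g/(4*c+1)) (c*g/(8*K₀^2 + g*K₂ + g))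
    rw [← hεdef] at this
    exact (le_div_iff₀ (by positivity)).mp this
  have hc2 : ε*(8*K₀^2 + g*K₂ + g) ≤ c*g := by
    have := min_le_right (g/(4*c+1)) (c*g/(8*K₀^2 + g*K₂ + g))
    rw [← hεdef] at this
    exact (le_div_iff₀ (by positivity)).mp this
  -- the crucial pointwise bound
  have main : ∀ x : H₁, ‖x‖ = 1 → ‖(S - ε • A') x‖^2 ≤ μ - ε*c := by
    intro x hx
    haveI : CompleteSpace E := (isClosed_ker (B - μ • ContinuousLinearMap.id ℝ H₁)).completeSpace_coe
    set p : H₁ := (Submodule.orthogonalProjectionOnto E x : H₁) with hpdef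
    set q : H₁ := x - p with hqdef
    have hpE : p ∈ E := (Submodule.orthogonalProjectionOnto E x).2
    have hqE : q ∈ Eᗮ := Submodule.sub_starProjection_mem_orthogonal x
    have hpq : ⟪p, q⟫ = 0 := Submodule.inner_right_of_mem_orthogonal hpE hqE
    have hxpq : x = p + q := by rw [hqdef]; abel
    set t := ‖q‖ with htdef
    have ht0 : 0 ≤ t := norm_nonneg _
    have hsum : ‖p‖^2 + t^2 = 1 := by
      have : ‖x‖^2 = ‖p‖^2 + 2*⟪p,q⟫ + ‖q‖^2 := by
        rw [hxpq]; exact norm_add_sq_real p q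
      rw [hpq] at this
      rw [hx] at this
      simp at this
      rw [htdef]
      linarith
    have hp1 : ‖p‖ ≤ 1 := by nlinarith [norm_nonneg p]
    have ht1 : t ≤ 1 := by nlinarith
    have hBp : B p = μ • p := (hE_iff p).mp hpE
    have hBin : ∀ a b : H₁, ⟪B a, b⟫ = ⟪S a, S b⟫ := fun a b => by
      rw [hBdef, comp_apply, adjoint_inner_left]
    have hBpq : ⟪B p, q⟫ = 0 := by rw [hBp, real_inner_smul_left, hpq, mul_zero]
    have hBqp : ⟪B q, p⟫ = 0 := by
      rw [hBin, real_inner_comm, ← hBin, hBpq]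
    have hBxx : ⟪B x, x⟫ ≤ μ - g*t^2 := by
      have hexp : ⟪B x, x⟫ = μ*‖p‖^2 + ⟪B q, q⟫ := by
        nth_rewrite 1 [hxpq]
        nth_rewrite 1 [hxpq]
        rw [map_add, inner_add_left, inner_add_right, inner_add_right, hBpq, hBqp,
          hBp, real_inner_smul_left, real_inner_self_eq_norm_sq]
        ring
      have hq2 : ⟪B q, q⟫ ≤ μ' * t^2 := hgap q hqE
      rw [hexp]
      nlinarith [hμpos]
    -- lower bound for the inner product term
    have hfx : c*(1 - t^2) - 2*K₀*t ≤ ⟪S x, A' x⟫ := by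
      have e1 : ⟪S x, A' x⟫ = ⟪S p, A' x⟫ + ⟪S q, A' x⟫ := by
        nth_rewrite 1 [hxpq]
        rw [map_add, inner_add_left]
      have e2 : ⟪S p, A' x⟫ = ⟪S p, A' p⟫ + ⟪S p, A' q⟫ := by
        nth_rewrite 1 [hxpq]
        rw [map_add, inner_add_right]
      have b1 : -(K₀*t) ≤ ⟪S p, A' q⟫ := by
        have habs : |⟪S p, A' q⟫| ≤ ‖S p‖ * ‖A' q‖ := abs_real_inner_le_norm _ _
        have hb1 : ‖S p‖ * ‖A' q‖ ≤ K₀ * t := by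
          have h1 : ‖S p‖ ≤ ‖S‖ := by
            have := S.le_opNorm p
            nlinarith [norm_nonneg S]
          have h2 : ‖A' q‖ ≤ ‖A'‖ * t := A'.le_opNorm q
          calc ‖S p‖ * ‖A' q‖ ≤ ‖S‖ * (‖A'‖ * t) :=
              mul_le_mul h1 h2 (norm_nonneg _) (norm_nonneg _)
            _ = K₀ * t := by rw [hK₀def]; ring
        have := (abs_le.mp habs).1
        linarith
      have b2 : -(K₀*t) ≤ ⟪S q, A' x⟫ := by
        have habs : |⟪S q, A' x⟫| ≤ ‖S q‖ * ‖A' x‖ := abs_real_inner_le_norm _ _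
        have hb2 : ‖S q‖ * ‖A' x‖ ≤ K₀ * t := by
          have h1 : ‖S q‖ ≤ ‖S‖ * t := S.le_opNorm q
          have h2 : ‖A' x‖ ≤ ‖A'‖ := by
            have := A'.le_opNorm x
            rwa [hx, mul_one] at this
          calc ‖S q‖ * ‖A' x‖ ≤ (‖S‖ * t) * ‖A'‖ :=
              mul_le_mul h1 h2 (norm_nonneg _) (by positivity)
            _ = K₀ * t := by rw [hK₀def]; ring
        have := (abs_le.mp habs).1
        linarith
      have hfp : c*‖p‖^2 ≤ ⟪S p, A' p⟫ := by
        rcases eq_or_ne p 0 with h | h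
        · simp [h]
        · have hpn : 0 < ‖p‖ := norm_pos_iff.mpr h
          have hunit : ‖(‖p‖⁻¹ • p)‖ = 1 := by
            rw [norm_smul, norm_inv, norm_norm]; field_simp
          have huM : (‖p‖⁻¹ • p) ∈ Mset := by
            refine ⟨hunit, ?_⟩
            rw [hMeq _ hunit]
            exact Submodule.smul_mem _ _ hpE
          have hlow := hcmin _ huM
          rw [map_smul, map_smul, real_inner_smul_left, real_inner_smul_right] at hlow
          have h2 := mul_le_mul_of_nonneg_left hlow (mul_pos hpn hpn).le
          calc c*‖p‖^2 = ‖p‖*‖p‖*c := by ring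
            _ ≤ ‖p‖*‖p‖*(‖p‖⁻¹*(‖p‖⁻¹*⟪S p, A' p⟫)) := h2
            _ = ⟪S p, A' p⟫ := by field_simp
      have hps : ‖p‖^2 = 1 - t^2 := by linarith
      rw [e1, e2]
      rw [hps] at hfp
      linarith
    -- expansion of the perturbed norm
    have hexp2 : ‖(S - ε • A') x‖^2 = ‖S x‖^2 - 2*(ε*⟪S x, A' x⟫) + ε^2*‖A' x‖^2 := by
      rw [sub_apply, smul_apply, norm_sub_sq_real, real_inner_smul_right, norm_smul,
        Real.norm_eq_abs, abs_of_pos hεpos, mul_pow]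
    have hSx2 : ‖S x‖^2 = ⟪B x, x⟫ := (B_inner_self S x).symm
    have hA'x : ‖A' x‖^2 ≤ K₂ := by
      have h2 : ‖A' x‖ ≤ ‖A'‖ := by
        have := A'.le_opNorm x
        rwa [hx, mul_one] at this
      rw [hK₂def]
      nlinarith [norm_nonneg (A' x)]
    rw [hexp2, hSx2]
    exact arith_aux ε c g K₀ K₂ t μ _ _ _ hεpos hcpos hgpos hK₀ hK₂ ht0 ht1 hc1 hc2
      hBxx hfx hA'x
  -- conclude
  have hμεc : 0 ≤ μ - ε*c := by
    obtain ⟨z, hz1, hz2⟩ := hne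
    have := main z hz1
    nlinarith [sq_nonneg ‖(S - ε • A') z‖]
  refine ⟨ε, hεpos, ?_⟩
  have hb : ∀ x : H₁, ‖(S - ε • A') x‖ ≤ Real.sqrt (μ - ε*c) * ‖x‖ := by
    intro x
    rcases eq_or_ne x 0 with rfl | hx0
    · simp
    · have hxn : 0 < ‖x‖ := norm_pos_iff.mpr hx0
      have hu := main (‖x‖⁻¹ • x) (by rw [norm_smul, norm_inv, norm_norm]; field_simp)
      have h1 : ‖(S - ε • A') (‖x‖⁻¹ • x)‖ = ‖x‖⁻¹ * ‖(S - ε • A') x‖ := by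
        rw [map_smul, norm_smul, norm_inv, norm_norm]
      rw [h1] at hu
      have h2 : ‖x‖⁻¹ * ‖(S - ε • A') x‖ ≤ Real.sqrt (μ - ε*c) := by
        rw [← Real.sqrt_sq (by positivity : (0:ℝ) ≤ ‖x‖⁻¹ * ‖(S - ε • A') x‖)]
        exact Real.sqrt_le_sqrt hu
      calc ‖(S - ε • A') x‖ = (‖x‖⁻¹ * ‖(S - ε • A') x‖) * ‖x‖ := by field_simp
        _ ≤ Real.sqrt (μ - ε*c) * ‖x‖ := mul_le_mul_of_nonneg_right h2 hxn.le
  have hop : ‖S - ε • A'‖ ≤ Real.sqrt (μ - ε*c) := opNorm_le_bound _ (Real.sqrt_nonneg _) hb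
  have hlt : Real.sqrt (μ - ε*c) < ‖S‖ := by
    have h1 : Real.sqrt (μ - ε*c) < Real.sqrt μ := by
      apply Real.sqrt_lt_sqrt hμεc
      nlinarith [mul_pos hεpos hcpos]
    rwa [hμdef, Real.sqrt_sq hpos.le] at h1
  linarith

end AuxiliaryLemmas

set_option maxHeartbeats 1000000 in
theorem dist_span_eq_sup_inner
    {H₁ H₂ : Type*} [NormedAddCommGroup H₁] [InnerProductSpace ℝ H₁] [CompleteSpace H₁]
    [NormedAddCommGroup H₂] [InnerProductSpace ℝ H₂] [CompleteSpace H₂]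
    (T A : H₁ →L[ℝ] H₂) (hT : IsCompactOperator T) (hA : IsCompactOperator A)
    (hM : ∀ l : ℝ, ∃ D : Set H₁, D.Nonempty ∧ IsConnected D ∧ D ⊆ {x : H₁ | ‖x‖ = 1} ∧
      {x : H₁ | ‖x‖ = 1 ∧ ‖(T + l • A) x‖ = ‖T + l • A‖} = D ∪ (-D)) :
    (⨅ l : ℝ, ‖T + l • A‖) =
      sSup {r : ℝ | ∃ (x : H₁) (y : H₂),
        ‖x‖ = 1 ∧ ‖y‖ = 1 ∧ ⟪A x, y⟫ = 0 ∧ r = ⟪T x, y⟫} := by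
  have hbdd : BddBelow (Set.range fun l : ℝ => ‖T + l • A‖) := by
    refine ⟨0, ?_⟩
    rintro r ⟨l, rfl⟩
    exact norm_nonneg _
  have hcont : Continuous fun l : ℝ => ‖T + l • A‖ :=
    (continuous_const.add (continuous_id.smul continuous_const)).norm
  have hlb : ∀ l : ℝ, |l| * ‖A‖ - ‖T‖ ≤ ‖T + l • A‖ := by
    intro l
    have h1 : ‖l • A‖ ≤ ‖T + l • A‖ + ‖T‖ := by
      have := norm_sub_le (T + l • A) T
      simpa using this
    rw [norm_smul l A, Real.norm_eq_abs] at h1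
    linarith
  -- minimizer exists
  have hmin : ∃ l₀ : ℝ, ∀ l : ℝ, ‖T + l₀ • A‖ ≤ ‖T + l • A‖ := by
    rcases eq_or_ne ‖A‖ 0 with hA0 | hA0
    · have hA0' : A = 0 := norm_eq_zero.mp hA0
      exact ⟨0, fun l => by simp [hA0']⟩
    · have hApos : 0 < ‖A‖ := lt_of_le_of_ne (norm_nonneg _) (Ne.symm hA0)
      set R := (‖T + (0:ℝ) • A‖ + ‖T‖)/‖A‖ + 1 with hR
      have hRpos : 0 < R := by positivity
      obtain ⟨l₀, hl₀mem, hl₀⟩ := (isCompact_Icc (a := -R) (b := R)).exists_isMinOn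
        ⟨0, by constructor <;> linarith⟩ hcont.continuousOn
      rw [Set.mem_Icc] at hl₀mem
      refine ⟨l₀, fun l => ?_⟩
      rcases le_or_gt |l| R with h | h
      · exact hl₀ (Set.mem_Icc.mpr (abs_le.mp h))
      · have h0 : ‖T + l₀ • A‖ ≤ ‖T + (0:ℝ) • A‖ :=
          hl₀ (Set.mem_Icc.mpr ⟨by linarith, by linarith⟩)
        have h2 := hlb l
        have h3 : R * ‖A‖ = ‖T + (0:ℝ) • A‖ + ‖T‖ + ‖A‖ := by
          rw [hR]; field_simp
        nlinarith [mul_lt_mul_of_pos_right h hApos]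
  obtain ⟨l₀, hl₀⟩ := hmin
  have hd : (⨅ l : ℝ, ‖T + l • A‖) = ‖T + l₀ • A‖ :=
    le_antisymm (ciInf_le hbdd l₀) (le_ciInf hl₀)
  set S := T + l₀ • A with hSdef
  set Rset : Set ℝ := {r : ℝ | ∃ (x : H₁) (y : H₂),
      ‖x‖ = 1 ∧ ‖y‖ = 1 ∧ ⟪A x, y⟫ = 0 ∧ r = ⟪T x, y⟫} with hRdef
  have hSx : ∀ x : H₁, S x = T x + l₀ • A x := fun x => rfl
  -- each element of Rset is at most ‖S‖
  have hub : ∀ r ∈ Rset, r ≤ ‖S‖ := by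
    rintro r ⟨x, y, hx, hy, hAxy, rfl⟩
    have h1 : (⟪S x, y⟫ : ℝ) = ⟪T x, y⟫ + l₀ * ⟪A x, y⟫ := by
      rw [hSx, inner_add_left, real_inner_smul_left]
    have h2 : (⟪S x, y⟫:ℝ) ≤ ‖S‖ := by
      calc (⟪S x, y⟫:ℝ) ≤ ‖S x‖ * ‖y‖ := real_inner_le_norm _ _
        _ ≤ (‖S‖ * ‖x‖) * ‖y‖ := mul_le_mul_of_nonneg_right (S.le_opNorm x) (norm_nonneg _)
        _ = ‖S‖ := by rw [hx, hy]; ring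
    rw [hAxy, mul_zero, add_zero] at h1
    linarith
  have hSmin : ∀ t : ℝ, ‖S‖ ≤ ‖S + t • A‖ := by
    intro t
    have h := hl₀ (l₀ + t)
    have he : T + (l₀ + t) • A = S + t • A := by
      rw [hSdef, add_smul]; abel
    rwa [he] at h
  rw [hd]
  rcases eq_or_lt_of_le (norm_nonneg S) with hS0 | hSpos
  · -- degenerate case : ‖S‖ = 0
    have hS0' : S = 0 := by
      rw [← norm_eq_zero]; exact hS0.symm
    have hRsub : Rset ⊆ {0} := by
      rintro r ⟨x, y, hx, hy, hAxy, rfl⟩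
      have h1 : (⟪S x, y⟫ : ℝ) = ⟪T x, y⟫ + l₀ * ⟪A x, y⟫ := by
        rw [hSx, inner_add_left, real_inner_smul_left]
      rw [hAxy, mul_zero, add_zero, hS0'] at h1
      simp only [ContinuousLinearMap.zero_apply, inner_zero_left] at h1
      simp [← h1]
    rcases Set.eq_empty_or_nonempty Rset with hRe | hRne
    · rw [hRe, Real.sSup_empty, ← hS0]
    · have : Rset = {0} := Set.eq_singleton_iff_nonempty_unique_mem.mpr
        ⟨hRne, fun r hr => hRsub hr⟩
      rw [this, csSup_singleton, ← hS0]
  · -- main case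
    obtain ⟨D, hDne, hDconn, hDsub, hDeq⟩ := hM l₀
    have hDM : ∀ z ∈ D, ‖z‖ = 1 ∧ ‖S z‖ = ‖S‖ := by
      intro z hz
      have : z ∈ {x : H₁ | ‖x‖ = 1 ∧ ‖(T + l₀ • A) x‖ = ‖T + l₀ • A‖} := by
        rw [hDeq]; exact Or.inl hz
      exact this
    have hMne : ∃ x : H₁, ‖x‖ = 1 ∧ ‖S x‖ = ‖S‖ := by
      obtain ⟨x₁, hx₁⟩ := hDne
      exact ⟨x₁, hDM x₁ hx₁⟩
    have hSc : IsCompactOperator S := by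
      have h1 : IsCompactOperator (⇑T + l₀ • ⇑A) := hT.add (hA.smul l₀)
      rwa [show ⇑T + l₀ • ⇑A = ⇑S from rfl] at h1
    -- find a zero of x ↦ ⟪S x, A x⟫ on the norm attaining set
    have hzero : ∃ x : H₁, ‖x‖ = 1 ∧ ‖S x‖ = ‖S‖ ∧ ⟪S x, A x⟫ = 0 := by
      by_contra hcon
      push_neg at hcon
      set f : H₁ → ℝ := fun x => ⟪S x, A x⟫ with hfdef
      have hfc : Continuous f := S.continuous.inner A.continuous
      have hfeven : ∀ x, f (-x) = f x := fun x => by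
        simp only [hfdef, map_neg, inner_neg_neg]
      have hfne : ∀ z ∈ D, f z ≠ 0 := fun z hz =>
        hcon z (hDM z hz).1 (hDM z hz).2
      obtain ⟨x₁, hx₁D⟩ := hDne
      set σ : ℝ := if 0 < f x₁ then 1 else -1 with hσdef
      have hpos : ∀ x : H₁, ‖x‖ = 1 → ‖S x‖ = ‖S‖ → 0 < ⟪S x, (σ • A) x⟫ := by
        intro x hx hSxn
        have hxM : x ∈ D ∪ -D := by
          rw [← hDeq]; exact ⟨hx, hSxn⟩
        obtain ⟨z, hzD, hfz⟩ : ∃ z ∈ D, f z = f x := by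
          rcases hxM with h | h
          · exact ⟨x, h, rfl⟩
          · exact ⟨-x, Set.mem_neg.mp h, hfeven x⟩
        have himg : IsPreconnected (f '' D) :=
          (hDconn.image f hfc.continuousOn).isPreconnected
        have hsame : (0 < f z ↔ 0 < f x₁) := by
          by_contra hne
          have h0 : (0:ℝ) ∈ f '' D := by
            rcases lt_or_gt_of_ne (hfne z hzD) with hzneg | hzpos
            · have hx₁pos : 0 < f x₁ := by
                rcases lt_or_gt_of_ne (hfne x₁ hx₁D) with h' | h'
                · exact absurd (iff_of_false (not_lt.mpr hzneg.le) (not_lt.mpr h'.le)) hne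
                · exact h'
              exact himg.Icc_subset ⟨z, hzD, rfl⟩ ⟨x₁, hx₁D, rfl⟩
                (Set.mem_Icc.mpr ⟨hzneg.le, hx₁pos.le⟩)
            · have hx₁neg : f x₁ < 0 := by
                rcases lt_or_gt_of_ne (hfne x₁ hx₁D) with h' | h'
                · exact h'
                · exact absurd (iff_of_true hzpos h') hne
              exact himg.Icc_subset ⟨x₁, hx₁D, rfl⟩ ⟨z, hzD, rfl⟩
                (Set.mem_Icc.mpr ⟨hx₁neg.le, hzpos.le⟩)
          obtain ⟨w, hwD, hw0⟩ := h0
          exact hfne w hwD hw0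
        have hval : (⟪S x, (σ • A) x⟫ : ℝ) = σ * f x := by
          rw [ContinuousLinearMap.smul_apply, real_inner_smul_right]
        rw [hval, ← hfz]
        rcases lt_or_gt_of_ne (hfne x₁ hx₁D) with h' | h'
        · have hσ : σ = -1 := by rw [hσdef, if_neg (not_lt.mpr h'.le)]
          have : f z < 0 := by
            rcases lt_or_gt_of_ne (hfne z hzD) with h'' | h''
            · exact h''
            · exact absurd (hsame.mp h'') (not_lt.mpr h'.le)
          rw [hσ]; nlinarith
        · have hσ : σ = 1 := by rw [hσdef, if_pos h']
          have : 0 < f z := hsame.mpr h'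
          rw [hσ]; nlinarith
      obtain ⟨ε, hεpos, hεlt⟩ := key_perturb S (σ • A) hSc hSpos hMne hpos
      have h1 := hSmin (-(ε*σ))
      have h2 : S + (-(ε*σ)) • A = S - ε • (σ • A) := by
        module
      rw [h2] at h1
      linarith
    obtain ⟨x, hx1, hx2, hx3⟩ := hzero
    set y : H₂ := ‖S‖⁻¹ • S x with hydef
    have hy1 : ‖y‖ = 1 := by
      rw [hydef, norm_smul, norm_inv, Real.norm_eq_abs, abs_of_pos hSpos, hx2]
      field_simp
    have hAxy : (⟪A x, y⟫ : ℝ) = 0 := by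
      rw [hydef, real_inner_smul_right, real_inner_comm, hx3, mul_zero]
    have hTxy : (⟪T x, y⟫ : ℝ) = ‖S‖ := by
      have h1 : (⟪S x, y⟫ : ℝ) = ⟪T x, y⟫ + l₀ * ⟪A x, y⟫ := by
        rw [hSx, inner_add_left, real_inner_smul_left]
      have h2 : (⟪S x, y⟫ : ℝ) = ‖S‖ := by
        rw [hydef, real_inner_smul_right, real_inner_self_eq_norm_sq, hx2]
        rw [sq]
        field_simp
      rw [hAxy, mul_zero, add_zero] at h1
      rw [← h1, h2]
    have hmem : ‖S‖ ∈ Rset := ⟨x, y, hx1, hy1, hAxy, hTxy.symm⟩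
    exact le_antisymm (le_csSup ⟨‖S‖, hub⟩ hmem) (csSup_le ⟨‖S‖, hmem⟩ hub)
end

section
/- There exist linear operators T, A₁, A₂ on the Euclidean space ℝ³ and the subspace Z = span{A₁, A₂} such that dist(T, Z) < sup{ |⟨Tx, y⟩| : ‖x‖ = 1, ‖y‖ = 1, ∃ B ∈ Z with ⟨Bx, y⟩ = 0 }. Concretely, take T(a,b,c) = (a,0,0), A₁(a,b,c) = (b, a+c, 0), A₂(a,b,c) = (a+c, b, 0); then dist(T, Z) < 1 while the supremum on the right equals at least 1. -/
open RealInnerProductSpace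

noncomputable def Tce : EuclideanSpace ℝ (Fin 3) →L[ℝ] EuclideanSpace ℝ (Fin 3) :=
  LinearMap.toContinuousLinearMap
  { toFun := fun v => (WithLp.toLp 2 ![v 0, 0, 0] : EuclideanSpace ℝ (Fin 3))
    map_add' := by intro x y; ext i; fin_cases i <;> simp
    map_smul' := by intro c x; ext i; fin_cases i <;> simp }

noncomputable def A1ce : EuclideanSpace ℝ (Fin 3) →L[ℝ] EuclideanSpace ℝ (Fin 3) :=
  LinearMap.toContinuousLinearMap
  { toFun := fun v => (WithLp.toLp 2 ![v 1, v 0 + v 2, 0] : EuclideanSpace ℝ (Fin 3))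
    map_add' := by
      intro x y; ext i; fin_cases i <;> simp <;>
        (show (x+y) 0 + (x+y) 2 = _; simp [PiLp.add_apply]; ring)
    map_smul' := by
      intro c x; ext i; fin_cases i <;> simp <;>
        (show c • x 0 + c • x 2 = _; simp; ring) }

noncomputable def A2ce : EuclideanSpace ℝ (Fin 3) →L[ℝ] EuclideanSpace ℝ (Fin 3) :=
  LinearMap.toContinuousLinearMap
  { toFun := fun v => (WithLp.toLp 2 ![v 0 + v 2, v 1, 0] : EuclideanSpace ℝ (Fin 3))
    map_add' := by
      intro x y; ext i; fin_cases i <;> simp <;>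
        (show (x+y) 0 + (x+y) 2 = _; simp [PiLp.add_apply]; ring)
    map_smul' := by
      intro c x; ext i; fin_cases i <;> simp <;>
        (show c • x 0 + c • x 2 = _; simp; ring) }

lemma key_bound (x : EuclideanSpace ℝ (Fin 3)) :
    ‖(Tce - (1/2 : ℝ) • A2ce) x‖ ≤ 3/4 * ‖x‖ := by
  set w := (Tce - (1/2 : ℝ) • A2ce) x with hwdef
  have e0 : w 0 = x 0 - (1/2) * (x 0 + x 2) := rfl
  have e1 : w 1 = 0 - (1/2) * x 1 := rfl
  have e2 : w 2 = 0 - (1/2) * 0 := rfl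
  have hw : ‖w‖^2 = (w 0)^2 + (w 1)^2 + (w 2)^2 := by
    rw [EuclideanSpace.norm_sq_eq, Fin.sum_univ_three, Real.norm_eq_abs, Real.norm_eq_abs,
      Real.norm_eq_abs, sq_abs, sq_abs, sq_abs]
  have hx : ‖x‖^2 = (x 0)^2 + (x 1)^2 + (x 2)^2 := by
    rw [EuclideanSpace.norm_sq_eq, Fin.sum_univ_three, Real.norm_eq_abs, Real.norm_eq_abs,
      Real.norm_eq_abs, sq_abs, sq_abs, sq_abs]
  have h2 : ‖w‖^2 ≤ (9/16) * ‖x‖^2 := by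
    rw [hw, hx, e0, e1, e2]; nlinarith [sq_nonneg (x 0 + x 2), sq_nonneg (x 0 - x 2)]
  nlinarith [norm_nonneg w, norm_nonneg x, h2]

theorem counterexample_to_wojcik_best_approximation :
    ∃ T A₁ A₂ : EuclideanSpace ℝ (Fin 3) →L[ℝ] EuclideanSpace ℝ (Fin 3),
      (∀ v : EuclideanSpace ℝ (Fin 3), T v 0 = v 0 ∧ T v 1 = 0 ∧ T v 2 = 0) ∧
      (∀ v : EuclideanSpace ℝ (Fin 3), A₁ v 0 = v 1 ∧ A₁ v 1 = v 0 + v 2 ∧ A₁ v 2 = 0) ∧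
      (∀ v : EuclideanSpace ℝ (Fin 3), A₂ v 0 = v 0 + v 2 ∧ A₂ v 1 = v 1 ∧ A₂ v 2 = 0) ∧
      (sInf {r : ℝ | ∃ B ∈ Submodule.span ℝ {A₁, A₂}, r = ‖T - B‖} < 1 ∧
       1 ≤ sSup {r : ℝ | ∃ (x y : EuclideanSpace ℝ (Fin 3)),
          ‖x‖ = 1 ∧ ‖y‖ = 1 ∧ (∃ B ∈ Submodule.span ℝ {A₁, A₂}, ⟪B x, y⟫ = 0) ∧
          r = |⟪T x, y⟫|}) ∧
      sInf {r : ℝ | ∃ B ∈ Submodule.span ℝ {A₁, A₂}, r = ‖T - B‖} <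
        sSup {r : ℝ | ∃ (x y : EuclideanSpace ℝ (Fin 3)),
          ‖x‖ = 1 ∧ ‖y‖ = 1 ∧ (∃ B ∈ Submodule.span ℝ {A₁, A₂}, ⟪B x, y⟫ = 0) ∧
          r = |⟪T x, y⟫|} := by
  have h1 : sInf {r : ℝ | ∃ B ∈ Submodule.span ℝ {A1ce, A2ce}, r = ‖Tce - B‖} < 1 := by
      have hBmem : ((1/2 : ℝ) • A2ce) ∈ Submodule.span ℝ ({A1ce, A2ce} :
          Set (EuclideanSpace ℝ (Fin 3) →L[ℝ] EuclideanSpace ℝ (Fin 3))) :=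
        Submodule.smul_mem _ _ (Submodule.subset_span (by simp))
      have hbdd : BddBelow {r : ℝ | ∃ B ∈ Submodule.span ℝ {A1ce, A2ce}, r = ‖Tce - B‖} := by
        refine ⟨0, ?_⟩
        rintro r ⟨B, hB, rfl⟩
        positivity
      have hmem : ‖Tce - (1/2 : ℝ) • A2ce‖ ∈
          {r : ℝ | ∃ B ∈ Submodule.span ℝ {A1ce, A2ce}, r = ‖Tce - B‖} :=
        ⟨_, hBmem, rfl⟩
      have hle := csInf_le hbdd hmem
      have hnorm : ‖Tce - (1/2 : ℝ) • A2ce‖ ≤ 3/4 :=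
        ContinuousLinearMap.opNorm_le_bound _ (by norm_num) key_bound
      calc sInf {r : ℝ | ∃ B ∈ Submodule.span ℝ {A1ce, A2ce}, r = ‖Tce - B‖}
          ≤ ‖Tce - (1/2 : ℝ) • A2ce‖ := hle
        _ ≤ 3/4 := hnorm
        _ < 1 := by norm_num
  have h2 : 1 ≤ sSup {r : ℝ | ∃ (x y : EuclideanSpace ℝ (Fin 3)),
      ‖x‖ = 1 ∧ ‖y‖ = 1 ∧ (∃ B ∈ Submodule.span ℝ {A1ce, A2ce}, ⟪B x, y⟫ = 0) ∧
      r = |⟪Tce x, y⟫|} := by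
      set x : EuclideanSpace ℝ (Fin 3) := EuclideanSpace.single 0 1 with hxdef
      have hxn : ‖x‖ = 1 := by simp [hxdef]
      have hinner0 : ⟪A1ce x, x⟫ = 0 := by
        simp [PiLp.inner_apply, RCLike.inner_apply, Fin.sum_univ_three]
        show x 0 * x 1 + x 1 * (x 0 + x 2) + x 2 * 0 = 0
        simp [hxdef, EuclideanSpace.single_apply]
      have hinnerT : ⟪Tce x, x⟫ = 1 := by
        simp [PiLp.inner_apply, RCLike.inner_apply, Fin.sum_univ_three]
        show x 0 * x 0 + x 1 * 0 + x 2 * 0 = 1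
        simp [hxdef, EuclideanSpace.single_apply]
      have hmem : (1 : ℝ) ∈ {r : ℝ | ∃ (x y : EuclideanSpace ℝ (Fin 3)),
          ‖x‖ = 1 ∧ ‖y‖ = 1 ∧ (∃ B ∈ Submodule.span ℝ {A1ce, A2ce}, ⟪B x, y⟫ = 0) ∧
          r = |⟪Tce x, y⟫|} := by
        refine ⟨x, x, hxn, hxn, ⟨A1ce, Submodule.subset_span (by simp), hinner0⟩, ?_⟩
        rw [hinnerT]; norm_num
      have hbdd : BddAbove {r : ℝ | ∃ (x y : EuclideanSpace ℝ (Fin 3)),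
          ‖x‖ = 1 ∧ ‖y‖ = 1 ∧ (∃ B ∈ Submodule.span ℝ {A1ce, A2ce}, ⟪B x, y⟫ = 0) ∧
          r = |⟪Tce x, y⟫|} := by
        refine ⟨‖Tce‖, ?_⟩
        rintro r ⟨u, v, hu, hv, -, rfl⟩
        calc |⟪Tce u, v⟫| ≤ ‖Tce u‖ * ‖v‖ := abs_real_inner_le_norm _ _
          _ ≤ (‖Tce‖ * ‖u‖) * ‖v‖ := by
              gcongr; exact Tce.le_opNorm u
          _ = ‖Tce‖ := by rw [hu, hv]; ring
      exact le_csSup hbdd hmem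
  exact ⟨Tce, A1ce, A2ce, fun v => ⟨rfl, rfl, rfl⟩, fun v => ⟨rfl, rfl, rfl⟩,
    fun v => ⟨rfl, rfl, rfl⟩, ⟨h1, h2⟩, lt_of_lt_of_le h1 h2⟩
end

section
/- Let x, y be elements of a real normed space X with x ≠ 0. If y ∈ x⁺ (‖x + λy‖ ≥ ‖x‖ for all λ ≥ 0) but y ∉ x⁻, and x, y are linearly independent with y = ax + bz where x ⊥_B z, then a ≥ 0. -/
theorem coeff_nonneg_of_mem_plus_not_minus
    {X : Type*} [NormedAddCommGroup X] [NormedSpace ℝ X]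
    (x y z : X) (a b : ℝ) (hx : x ≠ 0) (hz : z ≠ 0)
    (hplus : ∀ l : ℝ, 0 ≤ l → ‖x + l • y‖ ≥ ‖x‖)
    (hminus : ¬ (∀ l : ℝ, l ≤ 0 → ‖x + l • y‖ ≥ ‖x‖))
    (hind : LinearIndependent ℝ ![x, y])
    (hy : y = a • x + b • z)
    (horth : ∀ l : ℝ, ‖x + l • z‖ ≥ ‖x‖) :
    0 ≤ a := by
  by_contra h
  push_neg at h
  apply hminus
  intro l hl
  have hc : (1 : ℝ) ≤ 1 + l * a := by nlinarith
  have hc0 : (0 : ℝ) < 1 + l * a := by linarith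
  have key : x + l • y = (1 + l * a) • (x + ((l * b) / (1 + l * a)) • z) := by
    have h2 : (1 + l * a) • (((l * b) / (1 + l * a)) • z) = (l * b) • z := by
      rw [smul_smul]
      congr 1
      field_simp
    calc x + l • y = (1 + l * a) • x + (l * b) • z := by rw [hy]; module
      _ = (1 + l * a) • x + (1 + l * a) • (((l * b) / (1 + l * a)) • z) := by rw [h2]
      _ = (1 + l * a) • (x + ((l * b) / (1 + l * a)) • z) := (smul_add _ _ _).symm
  rw [key, norm_smul, Real.norm_eq_abs, abs_of_pos hc0]
  calc ‖x‖ = 1 * ‖x‖ := (one_mul _).symm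
    _ ≤ (1 + l * a) * ‖x + (l * b / (1 + l * a)) • z‖ :=
        mul_le_mul hc (horth _) (norm_nonneg _) (by positivity)
end
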